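/- arXiv:2406.16816 — 8 statements merged into one kernel-verified Lean document; each statement's English description precedes it below -/
import Mathlib

section
/- Let S be a finite subset of Fin N and v ∈ S. Then rank([Π]_{S\{v}}) < rank([Π]_S) if and only if ξ₂(S\{v}) < ξ₂(S). (In the paper's notation: for LS reconstruction, Δ₁(S,v) < 0 if and only if Δ₂(S,v) > 0.) -/
open Matrix
open scoped Classical

namespace SamplingAux

variable {m n p : Type*} [Fintype m] [Fintype n] [Fintype p]

set_option linter.unusedSectionVars false

lemma star_eq_transpose (M : Matrix n n ℝ) : star M = Mᵀ := by
  rw [Matrix.star_eq_conjTranspose, Matrix.conjTranspose_eq_transpose_of_trivial]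

lemma vmv_transpose (u : m → ℝ) (v : n → ℝ) : (vecMulVec u v)ᵀ = vecMulVec v u := by
  ext i j; simp [vecMulVec_apply, mul_comm]

lemma mul_vmv (M : Matrix m n ℝ) (u : n → ℝ) (v : p → ℝ) :
    M * vecMulVec u v = vecMulVec (M *ᵥ u) v := by
  ext i j
  simp [Matrix.mul_apply, vecMulVec_apply, Matrix.mulVec, dotProduct, Finset.sum_mul, mul_assoc]

lemma vmv_mul (u : m → ℝ) (v : n → ℝ) (M : Matrix n p ℝ) :
    vecMulVec u v * M = vecMulVec u (Mᵀ *ᵥ v) := by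
  ext i j
  simp only [Matrix.mul_apply, vecMulVec_apply, Matrix.mulVec, dotProduct,
    Matrix.transpose_apply, Finset.mul_sum]
  exact Finset.sum_congr rfl fun l _ => by ring

lemma vmv_mulVec (u : m → ℝ) (v : n → ℝ) (x : n → ℝ) :
    vecMulVec u v *ᵥ x = (v ⬝ᵥ x) • u := by
  ext i
  simp only [Matrix.mulVec, vecMulVec_apply, dotProduct, Pi.smul_apply, smul_eq_mul,
    Finset.sum_mul]
  exact Finset.sum_congr rfl fun l _ => by ring

lemma trace_vmv (u v : n → ℝ) : (vecMulVec u v).trace = u ⬝ᵥ v := by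
  simp [Matrix.trace, Matrix.diag, vecMulVec_apply, dotProduct]

lemma vmv_smul_right (u : m → ℝ) (c : ℝ) (v : n → ℝ) :
    vecMulVec u (c • v) = c • vecMulVec u v := by
  ext i j; simp [vecMulVec_apply]; ring

lemma vmv_add_right (u : m → ℝ) (v w : n → ℝ) :
    vecMulVec u (v + w) = vecMulVec u v + vecMulVec u w := by
  ext i j; simp [vecMulVec_apply]; ring

lemma vmv_add_left (u v : m → ℝ) (w : n → ℝ) :
    vecMulVec (u + v) w = vecMulVec u w + vecMulVec v w := by
  ext i j; simp [vecMulVec_apply]; ring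

lemma vmv_neg_right (u : m → ℝ) (v : n → ℝ) :
    vecMulVec u (-v) = -vecMulVec u v := by
  ext i j; simp [vecMulVec_apply]

lemma vmv_sub_left (u v : m → ℝ) (w : n → ℝ) :
    vecMulVec (u - v) w = vecMulVec u w - vecMulVec v w := by
  ext i j; simp [vecMulVec_apply]; ring

lemma vmv_zero_right (u : m → ℝ) : vecMulVec u (0 : n → ℝ) = 0 := by
  ext i j; simp [vecMulVec_apply]

lemma vmv_zero_left (v : n → ℝ) : vecMulVec (0 : m → ℝ) v = 0 := by
  ext i j; simp [vecMulVec_apply]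

lemma dotProduct_self_nonneg (v : n → ℝ) : 0 ≤ v ⬝ᵥ v :=
  Finset.sum_nonneg fun i _ => mul_self_nonneg _

variable {q : Type*} [Fintype q] [DecidableEq q] [DecidableEq m] [DecidableEq n]

/-- Penrose-style characterization of the pseudoinverse of a real symmetric matrix. -/
structure IsSymPinv (G X : Matrix n n ℝ) : Prop where
  symm : Xᵀ = X
  comm : G * X = X * G
  gxg : G * X * G = G
  xgx : X * G * X = X

lemma IsSymPinv.unique {G X Y : Matrix n n ℝ} (hG : Gᵀ = G)
    (hX : IsSymPinv G X) (hY : IsSymPinv G Y) : X = Y := by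
  have hPQ : X * G = (X * G) * (Y * G) := by
    conv_lhs => rw [← hY.gxg]
    noncomm_ring
  have hQP : Y * G = (Y * G) * (X * G) := by
    conv_lhs => rw [← hX.gxg]
    noncomm_ring
  have hPsym : (X * G)ᵀ = X * G := by
    rw [Matrix.transpose_mul, hG, hX.symm, hX.comm]
  have hQsym : (Y * G)ᵀ = Y * G := by
    rw [Matrix.transpose_mul, hG, hY.symm, hY.comm]
  have hPQeq : X * G = Y * G := by
    calc X * G = (X * G) * (Y * G) := hPQ
    _ = ((Y * G)ᵀ * (X * G)ᵀ)ᵀ := by rw [← Matrix.transpose_mul, Matrix.transpose_transpose]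
    _ = ((Y * G) * (X * G))ᵀ := by rw [hPsym, hQsym]
    _ = (Y * G)ᵀ := by rw [← hQP]
    _ = Y * G := hQsym
  calc X = X * G * X := hX.xgx.symm
  _ = Y * (G * X) := by rw [hPQeq]; noncomm_ring
  _ = Y * (G * Y) := by rw [hX.comm, hPQeq, hY.comm]
  _ = Y := by rw [← mul_assoc]; exact hY.xgx

/-- Moore–Penrose pseudoinverse of a real symmetric matrix, via the spectral theorem. -/
noncomputable def mpinv (A : Matrix n n ℝ) : Matrix n n ℝ :=
  if h : A.IsHermitian then
    (h.eigenvectorUnitary : Matrix n n ℝ) * diagonal (fun i => (h.eigenvalues i)⁻¹) *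
      star (h.eigenvectorUnitary : Matrix n n ℝ)
  else 0

variable {A : Matrix n n ℝ}

lemma mpinv_eq (h : A.IsHermitian) :
    mpinv A = (h.eigenvectorUnitary : Matrix n n ℝ) * diagonal (fun i => (h.eigenvalues i)⁻¹) *
      star (h.eigenvectorUnitary : Matrix n n ℝ) := dif_pos h

lemma mpinv_isSymPinv (h : A.IsHermitian) : IsSymPinv A (mpinv A) := by
  classical
  set C : Matrix n n ℝ := (h.eigenvectorUnitary : Matrix n n ℝ) with hC
  set d : n → ℝ := h.eigenvalues with hd
  have hCC : star C * C = 1 := Matrix.mem_unitaryGroup_iff'.mp h.eigenvectorUnitary.2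
  have hCC' : C * star C = 1 := Matrix.mem_unitaryGroup_iff.mp h.eigenvectorUnitary.2
  have hA : A = C * diagonal d * star C := by
    have := h.spectral_theorem
    simpa [Function.comp] using this
  have hX : mpinv A = C * diagonal (fun i => (d i)⁻¹) * star C := mpinv_eq h
  have key : ∀ e f : n → ℝ,
      (C * diagonal e * star C) * (C * diagonal f * star C)
        = C * diagonal (fun i => e i * f i) * star C := by
    intro e f
    calc (C * diagonal e * star C) * (C * diagonal f * star C)
        = C * diagonal e * (star C * C) * diagonal f * star C := by noncomm_ring
    _ = C * (diagonal e * diagonal f) * star C := by rw [hCC]; noncomm_ring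
    _ = C * diagonal (fun i => e i * f i) * star C := by rw [Matrix.diagonal_mul_diagonal]
  have tsp : ∀ e : n → ℝ, (C * diagonal e * star C)ᵀ = C * diagonal e * star C := by
    intro e
    rw [star_eq_transpose, Matrix.transpose_mul, Matrix.transpose_mul,
      Matrix.transpose_transpose, Matrix.diagonal_transpose, mul_assoc]
  have keyC : ∀ e f : n → ℝ, (∀ i, e i = f i) →
      C * diagonal e * star C = C * diagonal f * star C := by
    intro e f hef
    rw [funext hef]
  constructor
  · rw [hX]; exact tsp _
  · rw [hX]
    conv_lhs => rw [hA]
    conv_rhs => rw [hA]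
    rw [key, key]
    exact keyC _ _ fun i => mul_comm _ _
  · rw [hX]
    conv_lhs => rw [hA]
    conv_rhs => rw [hA]
    rw [key, key]
    refine keyC _ _ fun i => ?_
    rcases eq_or_ne (d i) 0 with h0 | h0 <;> field_simp [h0]
  · rw [hX]
    conv_lhs => rw [hA]
    rw [key, key]
    refine keyC _ _ fun i => ?_
    rcases eq_or_ne (d i) 0 with h0 | h0 <;> field_simp [h0]

lemma trace_mpinv (h : A.IsHermitian) : (mpinv A).trace = ∑ i, (h.eigenvalues i)⁻¹ := by
  rw [mpinv_eq h, Matrix.trace_mul_cycle,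
    Matrix.mem_unitaryGroup_iff'.mp h.eigenvectorUnitary.2, one_mul, Matrix.trace_diagonal]

lemma mpinv_posSemidef {A : Matrix n n ℝ} (h : A.PosSemidef) : (mpinv A).PosSemidef := by
  rw [mpinv_eq h.isHermitian]
  have : (star (h.isHermitian.eigenvectorUnitary : Matrix n n ℝ)) =
      (h.isHermitian.eigenvectorUnitary : Matrix n n ℝ)ᴴ := rfl
  rw [this]
  exact Matrix.PosSemidef.mul_mul_conjTranspose_same
    (Matrix.posSemidef_diagonal_iff.mpr fun i => inv_nonneg.mpr (h.eigenvalues_nonneg i)) _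

lemma isHermitian_of_symm {M : Matrix n n ℝ} (h : Mᵀ = M) : M.IsHermitian := by
  show Mᴴ = M
  rw [Matrix.conjTranspose_eq_transpose_of_trivial, h]

/-- `ker G ⊆ ker A` for the Gram matrix `G = AᵀA`. -/
lemma gram_ker (A : Matrix m n ℝ) (x : n → ℝ) (hx : (Aᵀ * A) *ᵥ x = 0) : A *ᵥ x = 0 := by
  have h1 : x ⬝ᵥ ((Aᵀ * A) *ᵥ x) = (A *ᵥ x) ⬝ᵥ (A *ᵥ x) := by
    rw [← Matrix.mulVec_mulVec, Matrix.dotProduct_mulVec, Matrix.vecMul_transpose]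
  rw [hx, dotProduct_zero] at h1
  exact dotProduct_self_eq_zero.mp h1.symm

lemma gram_ker_mul (A : Matrix m n ℝ) (M : Matrix n n ℝ) (hM : (Aᵀ * A) * M = 0) :
    A * M = 0 := by
  ext i j
  have hcol : (Aᵀ * A) *ᵥ (fun l => M l j) = 0 := by
    ext i'
    have := congrFun (congrFun hM i') j
    simpa [Matrix.mulVec, Matrix.mul_apply, dotProduct] using this
  have := congrFun (gram_ker A _ hcol) i
  simpa [Matrix.mulVec, Matrix.mul_apply, dotProduct] using this

/-- Trace of the pseudoinverse is invariant under switching `A * Aᵀ` and `Aᵀ * A`. -/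
lemma trace_mpinv_transfer (A : Matrix m n ℝ) :
    (mpinv (A * Aᵀ)).trace = (mpinv (Aᵀ * A)).trace := by
  set G : Matrix n n ℝ := Aᵀ * A with hGdef
  set H : Matrix n n ℝ := mpinv G with hHdef
  have hGsym : Gᵀ = G := by rw [hGdef, Matrix.transpose_mul, Matrix.transpose_transpose]
  have hp : IsSymPinv G H := mpinv_isSymPinv (isHermitian_of_symm hGsym)
  have hGHH : G * H * H = H := by rw [hp.comm]; exact hp.xgx
  have hHHG : H * H * G = H := by
    have := congrArg Matrix.transpose hGHH
    simpa only [Matrix.transpose_mul, hp.symm, hGsym, ← mul_assoc] using this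
  have hAHG : A * H * G = A := by
    have hGM : G * (H * G - 1) = 0 := by
      rw [Matrix.mul_sub, mul_one, ← mul_assoc, hp.gxg, sub_self]
    have hAM : A * (H * G - 1) = 0 := gram_ker_mul A _ (by rw [← hGdef]; exact hGM)
    have h2 : A * (H * G) - A * (1 : Matrix n n ℝ) = 0 := by rw [← Matrix.mul_sub]; exact hAM
    rw [Matrix.mul_one, ← Matrix.mul_assoc] at h2
    exact sub_eq_zero.mp h2
  have hAtA : ∀ (X : Matrix n m ℝ), Aᵀ * (A * X) = G * X := fun X => by
    rw [← Matrix.mul_assoc, ← hGdef]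
  have hAtA2 : ∀ (X : Matrix n n ℝ), Aᵀ * (A * X) = G * X := fun X => by
    rw [← Matrix.mul_assoc, ← hGdef]
  have hGHHr : ∀ (X : Matrix n m ℝ), G * (H * (H * X)) = H * X := fun X => by
    rw [← Matrix.mul_assoc, ← Matrix.mul_assoc, hGHH]
  have hHHGr : ∀ (X : Matrix n m ℝ), H * (H * (G * X)) = H * X := fun X => by
    rw [← Matrix.mul_assoc, ← Matrix.mul_assoc, hHHG]
  have hHGHr : ∀ (X : Matrix n m ℝ), H * (G * (H * X)) = H * X := fun X => by
    rw [← Matrix.mul_assoc, ← Matrix.mul_assoc, hp.xgx]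
  have hAHGr : ∀ (X : Matrix n m ℝ), A * (H * (G * X)) = A * X := fun X => by
    rw [← Matrix.mul_assoc, ← Matrix.mul_assoc, hAHG]
  set W : Matrix m m ℝ := A * (H * H) * Aᵀ with hWdef
  have hWr : W = A * (H * (H * Aᵀ)) := by rw [hWdef]; simp only [Matrix.mul_assoc]
  have e1 : (A * Aᵀ) * W = A * (H * Aᵀ) := by
    rw [hWr]
    calc (A * Aᵀ) * (A * (H * (H * Aᵀ))) = A * (Aᵀ * (A * (H * (H * Aᵀ)))) := by
          simp only [Matrix.mul_assoc]
    _ = A * (G * (H * (H * Aᵀ))) := by rw [hAtA]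
    _ = A * (H * Aᵀ) := by rw [hGHHr]
  have e2 : W * (A * Aᵀ) = A * (H * Aᵀ) := by
    rw [hWr]
    calc A * (H * (H * Aᵀ)) * (A * Aᵀ) = A * (H * (H * (Aᵀ * (A * Aᵀ)))) := by
          simp only [Matrix.mul_assoc]
    _ = A * (H * (H * (G * Aᵀ))) := by rw [hAtA]
    _ = A * (H * Aᵀ) := by rw [hHHGr]
  have hWp : IsSymPinv (A * Aᵀ) W := by
    constructor
    · rw [hWdef, Matrix.transpose_mul, Matrix.transpose_mul, Matrix.transpose_mul,
        Matrix.transpose_transpose, hp.symm]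
      simp only [Matrix.mul_assoc]
    · rw [e1, e2]
    · rw [e1]
      calc A * (H * Aᵀ) * (A * Aᵀ) = A * (H * (Aᵀ * (A * Aᵀ))) := by
            simp only [Matrix.mul_assoc]
      _ = A * (H * (G * Aᵀ)) := by rw [hAtA]
      _ = A * Aᵀ := by rw [hAHGr]
    · rw [e2, hWr]
      calc A * (H * Aᵀ) * (A * (H * (H * Aᵀ))) = A * (H * (Aᵀ * (A * (H * (H * Aᵀ))))) := by
            simp only [Matrix.mul_assoc]
      _ = A * (H * (G * (H * (H * Aᵀ)))) := by rw [hAtA]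
      _ = A * (H * (H * Aᵀ)) := by rw [hHGHr]
  have hBsym : (A * Aᵀ)ᵀ = A * Aᵀ := by
    rw [Matrix.transpose_mul, Matrix.transpose_transpose]
  have hmp : mpinv (A * Aᵀ) = W :=
    IsSymPinv.unique hBsym (mpinv_isSymPinv (isHermitian_of_symm hBsym)) hWp
  rw [hmp, hWdef, Matrix.trace_mul_comm]
  calc (Aᵀ * (A * (H * H))).trace = (G * (H * H)).trace := by rw [hAtA2]
  _ = H.trace := by rw [← Matrix.mul_assoc, hGHH]

lemma rank_le_of_range_le {A B : Matrix n n ℝ}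
    (h : LinearMap.range A.mulVecLin ≤ LinearMap.range B.mulVecLin) : A.rank ≤ B.rank := by
  unfold Matrix.rank
  exact Submodule.finrank_mono h

lemma rank_lt_of_range_lt {A B : Matrix n n ℝ}
    (h : LinearMap.range A.mulVecLin < LinearMap.range B.mulVecLin) : A.rank < B.rank := by
  unfold Matrix.rank
  exact Submodule.finrank_lt_finrank_of_lt h

/-- Core lemma: rank-one update of a PSD matrix decreases rank iff it decreases the trace
of the pseudoinverse... stated in the removal direction. -/
lemma core (G' : Matrix n n ℝ) (hpsd : G'.PosSemidef) (u : n → ℝ) :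
    G'.rank < (G' + vecMulVec u u).rank ↔
      (mpinv G').trace < (mpinv (G' + vecMulVec u u)).trace := by
  have hG'sym : G'ᵀ = G' :=
    (Matrix.conjTranspose_eq_transpose_of_trivial G').symm.trans hpsd.isHermitian
  set G : Matrix n n ℝ := G' + vecMulVec u u with hGdef
  have hGsym : Gᵀ = G := by
    rw [hGdef, Matrix.transpose_add, hG'sym, vmv_transpose]
  set H : Matrix n n ℝ := mpinv G' with hHdef
  have hp : IsSymPinv G' H := mpinv_isSymPinv (isHermitian_of_symm hG'sym)
  have hH : Hᵀ = H := hp.symm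
  have hHpsd : H.PosSemidef := mpinv_posSemidef hpsd
  set P : Matrix n n ℝ := G' * H with hPdef
  have hPsym : Pᵀ = P := by
    rw [hPdef, Matrix.transpose_mul, hH, hG'sym, ← hp.comm]
  have hPH : P * H = H := by rw [hPdef, hp.comm]; exact hp.xgx
  have hG'P : G' * P = G' := by
    rw [hPdef, hp.comm, ← Matrix.mul_assoc]; exact hp.gxg
  have hHP : H * P = H := by rw [hPdef, ← Matrix.mul_assoc]; exact hp.xgx
  have hPG' : P * G' = G' := by rw [hPdef]; exact hp.gxg
  set k : n → ℝ := H *ᵥ u with hkdef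
  set t : ℝ := u ⬝ᵥ k with htdef
  have ht : 0 ≤ t := by
    have := hHpsd.dotProduct_mulVec_nonneg u
    simpa [htdef, hkdef] using this
  have h1t : (0:ℝ) < 1 + t := by linarith
  have hG'k : G' *ᵥ k = P *ᵥ u := by rw [hkdef, Matrix.mulVec_mulVec, hPdef]
  have hPk : P *ᵥ k = k := by
    rw [hkdef, Matrix.mulVec_mulVec, hPH]
  by_cases hPu : P *ᵥ u = u
  · -- u is in the column space of G' : rank stays the same, ξ₂ does not decrease
    set s : ℝ := (1 + t)⁻¹ with hsdef
    have hs : 0 < s := by rw [hsdef]; exact inv_pos.mpr h1t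
    set X : Matrix n n ℝ := H - s • vecMulVec k k with hXdef
    have f1 : G' *ᵥ k = u := by rw [hG'k, hPu]
    have p1 : vecMulVec u u * H = vecMulVec u k := by rw [vmv_mul, hH, ← hkdef]
    have p2 : G' * vecMulVec k k = vecMulVec u k := by rw [mul_vmv, f1]
    have p3 : vecMulVec u u * vecMulVec k k = t • vecMulVec u k := by
      rw [vmv_mul, vmv_transpose, vmv_mulVec, dotProduct_comm, ← htdef, vmv_smul_right]
    have hco : (1:ℝ) - s - s * t = 0 := by
      rw [hsdef]; field_simp; ring
    have hGX : G * X = P := by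
      rw [hGdef, hXdef]
      rw [Matrix.add_mul, Matrix.mul_sub, Matrix.mul_sub, Matrix.mul_smul, Matrix.mul_smul,
        p1, p2, p3, smul_smul]
      have expand : G' * H - s • vecMulVec u k + (vecMulVec u k - (s * t) • vecMulVec u k)
          = G' * H + ((1 - s - s * t) • vecMulVec u k) := by
        rw [sub_smul, sub_smul, one_smul]; abel
      rw [expand, hco, zero_smul, add_zero, hPdef]
    have hXsym : Xᵀ = X := by
      rw [hXdef, Matrix.transpose_sub, Matrix.transpose_smul, vmv_transpose, hH]
    have hXG : X * G = P := by
      have h1 : (X * G)ᵀ = P := by rw [Matrix.transpose_mul, hXsym, hGsym, hGX]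
      calc X * G = ((X * G)ᵀ)ᵀ := (Matrix.transpose_transpose _).symm
      _ = Pᵀ := by rw [h1]
      _ = P := hPsym
    have hXp : IsSymPinv G X := by
      constructor
      · exact hXsym
      · rw [hGX, hXG]
      · rw [hGX, hGdef, Matrix.mul_add, hPG', mul_vmv, hPu]
      · calc X * G * X = X * (G * X) := Matrix.mul_assoc _ _ _
        _ = X * P := by rw [hGX]
        _ = H * P - s • (vecMulVec k k * P) := by
            rw [hXdef, Matrix.sub_mul, Matrix.smul_mul]
        _ = H - s • vecMulVec k k := by rw [hHP, vmv_mul, hPsym, hPk]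
        _ = X := hXdef.symm
    have hmpG : mpinv G = X :=
      IsSymPinv.unique hGsym (mpinv_isSymPinv (isHermitian_of_symm hGsym)) hXp
    have htr : (mpinv G).trace = H.trace - s * (k ⬝ᵥ k) := by
      rw [hmpG, hXdef, Matrix.trace_sub, Matrix.trace_smul, trace_vmv, smul_eq_mul]
    have htrle : (mpinv G).trace ≤ (mpinv G').trace := by
      rw [htr, ← hHdef]
      have : 0 ≤ s * (k ⬝ᵥ k) := mul_nonneg hs.le (dotProduct_self_nonneg k)
      linarith
    have hrankle : G.rank ≤ G'.rank := by
      apply rank_le_of_range_le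
      rintro y ⟨x, rfl⟩
      refine ⟨x + (u ⬝ᵥ x) • k, ?_⟩
      rw [Matrix.mulVecLin_apply, Matrix.mulVecLin_apply, Matrix.mulVec_add,
        Matrix.mulVec_smul, f1, hGdef, Matrix.add_mulVec, vmv_mulVec]
    exact iff_of_false (by omega) (by linarith)
  · -- u is not in the column space of G' : rank drops, ξ₂ decreases
    set a : n → ℝ := P *ᵥ u with hadef
    set b : n → ℝ := u - a with hbdef
    have hb0 : b ≠ 0 := sub_ne_zero.mpr (Ne.symm hPu)
    set β : ℝ := b ⬝ᵥ b with hβdef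
    have hβ : 0 < β := by
      rcases lt_or_eq_of_le (dotProduct_self_nonneg b) with h | h
      · exact h
      · exact absurd (dotProduct_self_eq_zero.mp h.symm) hb0
    have hβ0 : β ≠ 0 := hβ.ne'
    have hG'b : G' *ᵥ b = 0 := by
      rw [hbdef, Matrix.mulVec_sub, hadef, Matrix.mulVec_mulVec, hG'P, sub_self]
    have hHb : H *ᵥ b = 0 := by
      rw [hbdef, Matrix.mulVec_sub, hadef, Matrix.mulVec_mulVec, hHP, ← hkdef]
      rw [hkdef, sub_self]
    have hPb : P *ᵥ b = 0 := by
      rw [hPdef, ← Matrix.mulVec_mulVec, hHb, Matrix.mulVec_zero]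
    have hab : a ⬝ᵥ b = 0 := by
      rw [dotProduct_comm, hadef, Matrix.dotProduct_mulVec, ← Matrix.mulVec_transpose,
        hPsym, hPb, zero_dotProduct]
    have hub : u ⬝ᵥ b = β := by
      have hu : u = b + a := by rw [hbdef]; abel
      rw [hβdef]
      conv_lhs => rw [hu]
      rw [add_dotProduct, hab, add_zero]
    have hkb : k ⬝ᵥ b = 0 := by
      rw [hkdef, dotProduct_comm, Matrix.dotProduct_mulVec, ← Matrix.mulVec_transpose,
        hH, hHb, zero_dotProduct]
    have hG'k2 : G' *ᵥ k = a := by rw [hG'k, hadef]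
    set c : ℝ := β⁻¹ * β⁻¹ * (1 + t) with hcdef
    set X : Matrix n n ℝ := H - β⁻¹ • (vecMulVec k b + vecMulVec b k) + c • vecMulVec b b
      with hXdef
    have hXsym : Xᵀ = X := by
      rw [hXdef, Matrix.transpose_add, Matrix.transpose_sub, Matrix.transpose_smul,
        Matrix.transpose_smul, Matrix.transpose_add, vmv_transpose, vmv_transpose,
        vmv_transpose, hH, add_comm (vecMulVec b k)]
    have hXu : X *ᵥ u = β⁻¹ • b := by
      rw [hXdef, Matrix.add_mulVec, Matrix.sub_mulVec, Matrix.smul_mulVec,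
        Matrix.smul_mulVec, Matrix.add_mulVec, vmv_mulVec, vmv_mulVec, vmv_mulVec,
        dotProduct_comm b u, hub, dotProduct_comm k u, ← htdef, ← hkdef]
      have h1 : β⁻¹ * β = 1 := inv_mul_cancel₀ hβ0
      have h2 : c * β = β⁻¹ * (1 + t) := by rw [hcdef]; field_simp
      rw [smul_add, smul_smul, smul_smul, smul_smul, h1, h2, one_smul]
      have h3 : β⁻¹ * (1 + t) = β⁻¹ * t + β⁻¹ := by ring
      rw [h3, add_smul]
      abel
    have hGb : G *ᵥ b = β • u := by
      rw [hGdef, Matrix.add_mulVec, hG'b, vmv_mulVec, hub, zero_add]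
    set Q : Matrix n n ℝ := P + β⁻¹ • vecMulVec b b with hQdef
    have hQsym : Qᵀ = Q := by
      rw [hQdef, Matrix.transpose_add, Matrix.transpose_smul, vmv_transpose, hPsym]
    have hGX : G * X = Q := by
      have hG'X : G' * X = P - β⁻¹ • vecMulVec a b := by
        rw [hXdef, Matrix.mul_add, Matrix.mul_sub, Matrix.mul_smul, Matrix.mul_smul,
          Matrix.mul_add, mul_vmv, mul_vmv, mul_vmv, hG'k2, hG'b, vmv_zero_left,
          vmv_zero_left, add_zero, smul_zero, add_zero, hPdef]
      have huuX : vecMulVec u u * X = β⁻¹ • vecMulVec u b := by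
        rw [vmv_mul, hXsym, hXu, vmv_smul_right]
      rw [hGdef, Matrix.add_mul, hG'X, huuX, hQdef]
      have hbb : vecMulVec b b = vecMulVec u b - vecMulVec a b := by
        rw [← vmv_sub_left, ← hbdef]
      rw [hbb, smul_sub]
      abel
    have hXG : X * G = Q := by
      have h1 : (X * G)ᵀ = Q := by rw [Matrix.transpose_mul, hXsym, hGsym, hGX]
      calc X * G = ((X * G)ᵀ)ᵀ := (Matrix.transpose_transpose _).symm
      _ = Qᵀ := by rw [h1]
      _ = Q := hQsym
    have hXp : IsSymPinv G X := by
      have hQG : Q * G = G := by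
        have hPGmul : P * G = G' + vecMulVec a u := by
          rw [hGdef, Matrix.mul_add, hPG', mul_vmv, ← hadef]
        have hbbG : vecMulVec b b * G = β • vecMulVec b u := by
          rw [vmv_mul, hGsym, hGb, vmv_smul_right]
        rw [hQdef, Matrix.add_mul, Matrix.smul_mul, hPGmul, hbbG, smul_smul, inv_mul_cancel₀ hβ0, one_smul,
          hGdef]
        have hab2 : a + b = u := by rw [hbdef]; abel
        have : vecMulVec a u + vecMulVec b u = vecMulVec u u := by
          rw [← vmv_add_left, hab2]
        rw [add_assoc, this]
      have hXb : X *ᵥ b = -k + (β⁻¹ * (1 + t)) • b := by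
        rw [hXdef, Matrix.add_mulVec, Matrix.sub_mulVec, Matrix.smul_mulVec,
          Matrix.smul_mulVec, Matrix.add_mulVec, vmv_mulVec, vmv_mulVec, vmv_mulVec,
          hHb, ← hβdef, hkb, zero_smul, add_zero]
        have h2 : c * β = β⁻¹ * (1 + t) := by rw [hcdef]; field_simp
        rw [smul_smul, smul_smul, inv_mul_cancel₀ hβ0, one_smul, h2]
        abel
      have hQX : Q * X = X := by
        have hPX : P * X = H - β⁻¹ • vecMulVec k b := by
          rw [hXdef, Matrix.mul_add, Matrix.mul_sub, Matrix.mul_smul, Matrix.mul_smul,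
            Matrix.mul_add, mul_vmv, mul_vmv, mul_vmv, hPk, hPb, hPH, vmv_zero_left,
            vmv_zero_left, add_zero, smul_zero, add_zero]
        have hbbX : vecMulVec b b * X = -vecMulVec b k + (β⁻¹ * (1 + t)) • vecMulVec b b := by
          rw [vmv_mul, hXsym, hXb, vmv_add_right, vmv_neg_right, vmv_smul_right]
        rw [hQdef, Matrix.add_mul, Matrix.smul_mul, hPX, hbbX, hXdef]
        rw [smul_add, smul_neg, smul_smul, smul_add]
        have hc2 : β⁻¹ * (β⁻¹ * (1 + t)) = c := by rw [hcdef]; ring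
        rw [hc2]
        abel
      constructor
      · exact hXsym
      · rw [hGX, hXG]
      · rw [hGX, hQG]
      · rw [hXG]; exact hQX
    have hmpG : mpinv G = X :=
      IsSymPinv.unique hGsym (mpinv_isSymPinv (isHermitian_of_symm hGsym)) hXp
    have htr : (mpinv G).trace = H.trace + β⁻¹ * (1 + t) := by
      rw [hmpG, hXdef, Matrix.trace_add, Matrix.trace_sub, Matrix.trace_smul,
        Matrix.trace_smul, Matrix.trace_add, trace_vmv, trace_vmv, trace_vmv,
        hkb, dotProduct_comm b k, hkb, ← hβdef, smul_eq_mul, smul_eq_mul]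
      rw [hcdef]
      field_simp
      ring
    have htrgt : (mpinv G').trace < (mpinv G).trace := by
      rw [htr, ← hHdef]
      have : 0 < β⁻¹ * (1 + t) := mul_pos (inv_pos.mpr hβ) h1t
      linarith
    have hranklt : G'.rank < G.rank := by
      apply rank_lt_of_range_lt
      have humem : u ∈ LinearMap.range G.mulVecLin := by
        refine ⟨β⁻¹ • b, ?_⟩
        rw [Matrix.mulVecLin_apply, Matrix.mulVec_smul, hGb, smul_smul,
          inv_mul_cancel₀ hβ0, one_smul]
      have hsub : LinearMap.range G'.mulVecLin ≤ LinearMap.range G.mulVecLin := by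
        rintro y ⟨x, rfl⟩
        obtain ⟨w, hw⟩ := humem
        refine ⟨x - (u ⬝ᵥ x) • w, ?_⟩
        rw [Matrix.mulVecLin_apply] at hw
        rw [Matrix.mulVecLin_apply, Matrix.mulVecLin_apply, Matrix.mulVec_sub,
          Matrix.mulVec_smul, hw, hGdef, Matrix.add_mulVec, vmv_mulVec]
        abel
      have hamem : a ∈ LinearMap.range G.mulVecLin :=
        hsub ⟨k, by rw [Matrix.mulVecLin_apply, hG'k2]⟩
      have hbmem : b ∈ LinearMap.range G.mulVecLin := by
        have := Submodule.sub_mem _ humem hamem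
        rwa [← hbdef] at this
      have hbnot : b ∉ LinearMap.range G'.mulVecLin := by
        rintro ⟨y, hy⟩
        rw [Matrix.mulVecLin_apply] at hy
        have : β = 0 := by
          calc β = (G' *ᵥ y) ⬝ᵥ b := by rw [hy]
          _ = b ⬝ᵥ (G' *ᵥ y) := dotProduct_comm _ _
          _ = (G'ᵀ *ᵥ b) ⬝ᵥ y := by rw [Matrix.dotProduct_mulVec, ← Matrix.mulVec_transpose]
          _ = 0 := by rw [hG'sym, hG'b, zero_dotProduct]
        exact hβ0 this
      exact lt_of_le_of_ne hsub (fun h => hbnot (h ▸ hbmem))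
    exact iff_of_true hranklt htrgt

end SamplingAux

open SamplingAux

/-- The principal submatrix of `A` with rows and columns indexed by the finite set `S`. -/
noncomputable def principalSub {N : ℕ} (A : Matrix (Fin N) (Fin N) ℝ) (S : Finset (Fin N)) :
    Matrix ↥S ↥S ℝ :=
  A.submatrix (fun i => (i : Fin N)) (fun i => (i : Fin N))

/-- The full-band noise-sensitivity `ξ₂(S)`: the sum of the reciprocals of the eigenvalues of
the principal submatrix `[A]_S` (with the convention `0⁻¹ = 0`, as in `ℝ`). -/
noncomputable def xi2 {N : ℕ} (A : Matrix (Fin N) (Fin N) ℝ) (S : Finset (Fin N)) : ℝ :=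
  if h : (principalSub A S).IsHermitian then ∑ i, (h.eigenvalues i)⁻¹ else 0

/-- Paper's Lemma (`LS_delta_1_improvement_means_delta_2_worse`): for LS reconstruction,
removing `v` from `S` decreases the rank of the principal submatrix of the bandlimiting
projection iff it decreases the noise-sensitivity `ξ₂`
(i.e. `Δ₁(S,v) < 0 ↔ Δ₂(S,v) > 0`). -/
theorem stmt_1 (N k : ℕ) (hk : 0 < k) (hkN : k ≤ N)
    (U : Matrix (Fin N) (Fin k) ℝ) (hU : Uᵀ * U = 1)
    (Pbl : Matrix (Fin N) (Fin N) ℝ) (hP : Pbl = U * Uᵀ)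
    (S : Finset (Fin N)) (v : Fin N) (hv : v ∈ S) :
    (principalSub Pbl (S.erase v)).rank < (principalSub Pbl S).rank ↔
      xi2 Pbl (S.erase v) < xi2 Pbl S := by
  classical
  have hPsub : ∀ (T : Finset (Fin N)),
      principalSub Pbl T = (U.submatrix (fun i : ↥T => (i : Fin N)) id) *
        (U.submatrix (fun i : ↥T => (i : Fin N)) id)ᵀ := by
    intro T
    rw [principalSub, hP,
      Matrix.submatrix_mul U Uᵀ (fun i : ↥T => (i : Fin N)) id (fun i : ↥T => (i : Fin N))
        Function.bijective_id,
      Matrix.transpose_submatrix]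
  set B : Matrix ↥S (Fin k) ℝ := U.submatrix (fun i : ↥S => (i : Fin N)) id with hB
  set B' : Matrix ↥(S.erase v) (Fin k) ℝ :=
    U.submatrix (fun i : ↥(S.erase v) => (i : Fin N)) id with hB'
  have hherm1 : (principalSub Pbl S).IsHermitian := by
    rw [hPsub S]
    exact isHermitian_of_symm (by rw [Matrix.transpose_mul, Matrix.transpose_transpose])
  have hherm2 : (principalSub Pbl (S.erase v)).IsHermitian := by
    rw [hPsub (S.erase v)]
    exact isHermitian_of_symm (by rw [Matrix.transpose_mul, Matrix.transpose_transpose])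
  have hxiS : xi2 Pbl S = (mpinv (Bᵀ * B)).trace := by
    rw [xi2, dif_pos hherm1, ← trace_mpinv hherm1]
    have h1 : principalSub Pbl S = B * Bᵀ := hPsub S
    rw [h1, trace_mpinv_transfer]
  have hxiS' : xi2 Pbl (S.erase v) = (mpinv (B'ᵀ * B')).trace := by
    rw [xi2, dif_pos hherm2, ← trace_mpinv hherm2]
    have h1 : principalSub Pbl (S.erase v) = B' * B'ᵀ := hPsub (S.erase v)
    rw [h1, trace_mpinv_transfer]
  have hrankS : (principalSub Pbl S).rank = (Bᵀ * B).rank := by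
    rw [hPsub S, Matrix.rank_self_mul_transpose, ← Matrix.rank_transpose_mul_self]
  have hrankS' : (principalSub Pbl (S.erase v)).rank = (B'ᵀ * B').rank := by
    rw [hPsub (S.erase v), Matrix.rank_self_mul_transpose, ← Matrix.rank_transpose_mul_self]
  have hpsd' : (B'ᵀ * B').PosSemidef := by
    have := Matrix.posSemidef_conjTranspose_mul_self B'
    rwa [Matrix.conjTranspose_eq_transpose_of_trivial] at this
  have hdec : Bᵀ * B = B'ᵀ * B' + Matrix.vecMulVec (U v) (U v) := by
    ext p q
    simp only [Matrix.mul_apply, Matrix.transpose_apply, Matrix.submatrix_apply, id_eq,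
      Matrix.add_apply, Matrix.vecMulVec_apply, hB, hB']
    rw [Finset.sum_coe_sort S (fun i => U i p * U i q),
      Finset.sum_coe_sort (S.erase v) (fun i => U i p * U i q),
      Finset.sum_erase_add S _ hv]
  rw [hrankS, hrankS', hxiS, hxiS', hdec]
  exact core _ hpsd' _
end

section
/- Let S be a finite subset of Fin N, v ∈ S, and SNR > 0; set σ² := k/(N·SNR), MSE(T) := ξ₁(T) + σ²·ξ₂(T) for T ⊆ Fin N, and τ(S,v) := (k/N)·(ξ₂(S) − ξ₂(S\{v})). Then MSE(S\{v}) < MSE(S) if and only if SNR < τ(S,v). -/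
open Matrix
open scoped Classical

namespace SamplingAux

open Filter Topology

variable {n m p q : Type*}

lemma posDef_add_smul_one [Fintype n] [DecidableEq n] {A : Matrix n n ℝ}
    (hA : A.PosSemidef) {ε : ℝ} (hε : 0 < ε) : (A + ε • (1 : Matrix n n ℝ)).PosDef := by
  have h1 : (ε • (1 : Matrix n n ℝ)).PosDef := by
    rw [smul_one_eq_diagonal]
    exact Matrix.posDef_diagonal_iff.mpr fun _ => hε
  exact Matrix.PosDef.posSemidef_add hA h1

lemma trace_inv_add_smul_one [Fintype n] [DecidableEq n] {A : Matrix n n ℝ}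
    (hA : A.IsHermitian) {ε : ℝ} (hne : ∀ i, hA.eigenvalues i + ε ≠ 0) :
    (A + ε • (1 : Matrix n n ℝ))⁻¹.trace = ∑ i, (hA.eigenvalues i + ε)⁻¹ := by
  set V : Matrix n n ℝ := (hA.eigenvectorUnitary : Matrix n n ℝ) with hV
  have hVV : V * star V = 1 := mem_unitaryGroup_iff.mp hA.eigenvectorUnitary.2
  have hVV' : star V * V = 1 := mem_unitaryGroup_iff'.mp hA.eigenvectorUnitary.2
  have hdiag : A + ε • (1 : Matrix n n ℝ)
      = V * diagonal (fun i => hA.eigenvalues i + ε) * star V := by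
    have hspec := hA.spectral_theorem
    rw [RCLike.ofReal_real_eq_id] at hspec
    calc A + ε • (1 : Matrix n n ℝ)
        = V * diagonal (id ∘ hA.eigenvalues) * star V + V * (ε • (1 : Matrix n n ℝ)) * star V := by
          simp only [Unitary.conjStarAlgAut_apply, Unitary.coe_star, ← hV] at hspec
          rw [← hspec]
          congr 1
          rw [Matrix.mul_smul, mul_one, Matrix.smul_mul, hVV]
      _ = V * (diagonal (id ∘ hA.eigenvalues) + ε • (1 : Matrix n n ℝ)) * star V := by
          rw [Matrix.mul_add, Matrix.add_mul]
      _ = V * diagonal (fun i => hA.eigenvalues i + ε) * star V := by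
          rw [smul_one_eq_diagonal, diagonal_add]
          rfl
  have hinv : (A + ε • (1 : Matrix n n ℝ))⁻¹
      = V * diagonal (fun i => (hA.eigenvalues i + ε)⁻¹) * star V := by
    apply inv_eq_right_inv
    rw [hdiag]
    calc V * diagonal (fun i => hA.eigenvalues i + ε) * star V
          * (V * diagonal (fun i => (hA.eigenvalues i + ε)⁻¹) * star V)
        = V * diagonal (fun i => hA.eigenvalues i + ε)
            * (star V * V) * diagonal (fun i => (hA.eigenvalues i + ε)⁻¹) * star V := by
          simp only [Matrix.mul_assoc]
      _ = V * (diagonal (fun i => hA.eigenvalues i + ε)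
            * diagonal (fun i => (hA.eigenvalues i + ε)⁻¹)) * star V := by
          rw [hVV', Matrix.mul_one]
          simp only [Matrix.mul_assoc]
      _ = 1 := by
          rw [diagonal_mul_diagonal]
          have : (fun i => (hA.eigenvalues i + ε) * (hA.eigenvalues i + ε)⁻¹)
              = fun _ => (1:ℝ) := funext fun i => mul_inv_cancel₀ (hne i)
          rw [this, diagonal_one, Matrix.mul_one, hVV]
  rw [hinv, Matrix.trace_mul_cycle, hVV', Matrix.one_mul]
  simp [Matrix.trace, Matrix.diag]

lemma trace_push_through [Fintype m] [DecidableEq m] [Fintype p] [DecidableEq p]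
    (M : Matrix m p ℝ) {ε : ℝ} (hε : 0 < ε) :
    (M * Mᵀ + ε • (1 : Matrix m m ℝ))⁻¹.trace
      = ((Fintype.card m : ℝ) - Fintype.card p) * ε⁻¹
        + (Mᵀ * M + ε • (1 : Matrix p p ℝ))⁻¹.trace := by
  have hG : (Mᵀ * M).PosSemidef := by
    have := Matrix.posSemidef_conjTranspose_mul_self (R := ℝ) M
    rwa [Matrix.conjTranspose_eq_transpose_of_trivial] at this
  have hGpd : (Mᵀ * M + ε • (1 : Matrix p p ℝ)).PosDef := posDef_add_smul_one hG hε
  have hGdet : IsUnit (Mᵀ * M + ε • (1 : Matrix p p ℝ)).det :=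
    hGpd.det_pos.ne'.isUnit
  have hMG : (M * Mᵀ + ε • (1 : Matrix m m ℝ)) * M = M * (Mᵀ * M + ε • (1 : Matrix p p ℝ)) := by
    rw [Matrix.add_mul, Matrix.mul_add, Matrix.smul_mul, Matrix.mul_smul, Matrix.one_mul,
      Matrix.mul_one, Matrix.mul_assoc]
  have hkey : (M * Mᵀ + ε • (1 : Matrix m m ℝ))⁻¹
      = ε⁻¹ • ((1 : Matrix m m ℝ) - M * (Mᵀ * M + ε • (1 : Matrix p p ℝ))⁻¹ * Mᵀ) := by
    apply inv_eq_right_inv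
    rw [Matrix.mul_smul, Matrix.mul_sub, Matrix.mul_one]
    have h2 : (M * Mᵀ + ε • (1 : Matrix m m ℝ))
        * (M * (Mᵀ * M + ε • (1 : Matrix p p ℝ))⁻¹ * Mᵀ) = M * Mᵀ := by
      calc (M * Mᵀ + ε • (1 : Matrix m m ℝ)) * (M * (Mᵀ * M + ε • (1 : Matrix p p ℝ))⁻¹ * Mᵀ)
          = ((M * Mᵀ + ε • (1 : Matrix m m ℝ)) * M)
            * ((Mᵀ * M + ε • (1 : Matrix p p ℝ))⁻¹ * Mᵀ) := by simp only [Matrix.mul_assoc]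
        _ = M * ((Mᵀ * M + ε • (1 : Matrix p p ℝ))
            * (Mᵀ * M + ε • (1 : Matrix p p ℝ))⁻¹) * Mᵀ := by
            rw [hMG]; simp only [Matrix.mul_assoc]
        _ = M * Mᵀ := by rw [Matrix.mul_nonsing_inv _ hGdet, Matrix.mul_one]
    rw [h2, add_sub_cancel_left, smul_smul, inv_mul_cancel₀ hε.ne', one_smul]
  rw [hkey, Matrix.trace_smul, Matrix.trace_sub, Matrix.trace_one]
  have h3 : (M * (Mᵀ * M + ε • (1 : Matrix p p ℝ))⁻¹ * Mᵀ).trace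
      = (Fintype.card p : ℝ) - ε * (Mᵀ * M + ε • (1 : Matrix p p ℝ))⁻¹.trace := by
    rw [Matrix.trace_mul_cycle]
    have h4 : Mᵀ * M = (Mᵀ * M + ε • (1 : Matrix p p ℝ)) - ε • (1 : Matrix p p ℝ) := by
      rw [add_sub_cancel_right]
    calc ((Mᵀ * M) * (Mᵀ * M + ε • (1 : Matrix p p ℝ))⁻¹).trace
        = (((Mᵀ * M + ε • (1 : Matrix p p ℝ)) - ε • (1 : Matrix p p ℝ))
            * (Mᵀ * M + ε • (1 : Matrix p p ℝ))⁻¹).trace := by rw [← h4]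
      _ = (Fintype.card p : ℝ) - ε * (Mᵀ * M + ε • (1 : Matrix p p ℝ))⁻¹.trace := by
          rw [Matrix.sub_mul, Matrix.trace_sub, Matrix.mul_nonsing_inv _ hGdet,
            Matrix.trace_one, Matrix.smul_mul, Matrix.one_mul, Matrix.trace_smul]
          simp [smul_eq_mul]
  rw [h3, smul_eq_mul]
  field_simp
  ring

lemma limit_lemma [Fintype n] [DecidableEq n] {A : Matrix n n ℝ} (hA : A.PosSemidef) :
    Tendsto (fun N : ℕ => (A + ((N:ℝ)+1)⁻¹ • (1 : Matrix n n ℝ))⁻¹.trace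
        - ((Fintype.card n : ℝ) - A.rank) * ((N:ℝ)+1)) atTop
      (𝓝 (∑ i, (hA.isHermitian.eigenvalues i)⁻¹)) := by
  have hlam := hA.eigenvalues_nonneg
  have he : ∀ N : ℕ, (0:ℝ) < ((N:ℝ)+1)⁻¹ := fun N => by positivity
  have htr : ∀ N : ℕ, (A + ((N:ℝ)+1)⁻¹ • (1 : Matrix n n ℝ))⁻¹.trace
      = ∑ i, (hA.isHermitian.eigenvalues i + ((N:ℝ)+1)⁻¹)⁻¹ := fun N =>
    trace_inv_add_smul_one hA.isHermitian
      (fun i => by have h1 := hlam i; have h2 := he N; positivity)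
  have hcardn : A.rank + Fintype.card {i // hA.isHermitian.eigenvalues i = 0}
      = Fintype.card n := by
    rw [hA.isHermitian.rank_eq_card_non_zero_eigs]
    have h1 : Fintype.card {i // hA.isHermitian.eigenvalues i ≠ 0}
        = Fintype.card {i // ¬ (hA.isHermitian.eigenvalues i = 0)} :=
      Fintype.card_congr (Equiv.subtypeEquivRight fun _ => Iff.rfl)
    rw [h1, Fintype.card_subtype_compl]
    have := Fintype.card_subtype_le (fun i => hA.isHermitian.eigenvalues i = 0)
    omega
  have hcard : ((Fintype.card n : ℝ) - A.rank)
      = (Fintype.card {i // hA.isHermitian.eigenvalues i = 0} : ℝ) := by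
    have := congrArg (Nat.cast : ℕ → ℝ) hcardn
    push_cast at this
    linarith
  have hsum : ∀ N : ℕ, (Fintype.card {i // hA.isHermitian.eigenvalues i = 0} : ℝ) * ((N:ℝ)+1)
      = ∑ i, (if hA.isHermitian.eigenvalues i = 0 then ((N:ℝ)+1) else 0) := by
    intro N
    have h1 : ∀ i, (if hA.isHermitian.eigenvalues i = 0 then ((N:ℝ)+1) else 0)
        = ((N:ℝ)+1) * (if hA.isHermitian.eigenvalues i = 0 then (1:ℝ) else 0) := by
      intro i; split <;> ring
    simp_rw [h1, ← Finset.mul_sum, Finset.sum_boole, Fintype.card_subtype]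
    ring
  have heq : ∀ N : ℕ, (A + ((N:ℝ)+1)⁻¹ • (1 : Matrix n n ℝ))⁻¹.trace
        - ((Fintype.card n : ℝ) - A.rank) * ((N:ℝ)+1)
      = ∑ i, ((hA.isHermitian.eigenvalues i + ((N:ℝ)+1)⁻¹)⁻¹
          - if hA.isHermitian.eigenvalues i = 0 then ((N:ℝ)+1) else 0) := by
    intro N
    rw [htr N, hcard, hsum N, ← Finset.sum_sub_distrib]
  refine Tendsto.congr (fun N => (heq N).symm) ?_
  apply tendsto_finset_sum
  intro i _
  by_cases hi : hA.isHermitian.eigenvalues i = 0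
  · have hconst : (fun N : ℕ => (hA.isHermitian.eigenvalues i + ((N:ℝ)+1)⁻¹)⁻¹
        - if hA.isHermitian.eigenvalues i = 0 then ((N:ℝ)+1) else 0) = fun _ => (0:ℝ) := by
      funext N
      simp [hi, inv_inv]
    rw [hconst, hi]
    simpa using tendsto_const_nhds
  · have h0 : Tendsto (fun N : ℕ => ((N:ℝ)+1)⁻¹) atTop (𝓝 0) := by
      simpa [one_div] using tendsto_one_div_add_atTop_nhds_zero_nat (𝕜 := ℝ)
    have h1 : Tendsto (fun N : ℕ => (hA.isHermitian.eigenvalues i + ((N:ℝ)+1)⁻¹)⁻¹) atTop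
        (𝓝 ((hA.isHermitian.eigenvalues i)⁻¹)) := by
      have := (tendsto_const_nhds (x := hA.isHermitian.eigenvalues i) (f := atTop (α := ℕ))).add h0
      rw [add_zero] at this
      exact this.inv₀ hi
    simpa [hi] using h1
  
lemma sum_inv_eigenvalues_congr [Fintype n] [DecidableEq n] {A B : Matrix n n ℝ} (h : A = B)
    (hA : A.IsHermitian) (hB : B.IsHermitian) :
    ∑ i, (hA.eigenvalues i)⁻¹ = ∑ i, (hB.eigenvalues i)⁻¹ := by
  subst h; rfl

lemma xi_transfer [Fintype m] [DecidableEq m] [Fintype p] [DecidableEq p] (M : Matrix m p ℝ)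
    (hB : (M * Mᵀ).PosSemidef) (hG : (Mᵀ * M).PosSemidef) :
    ∑ i, (hB.isHermitian.eigenvalues i)⁻¹ = ∑ i, (hG.isHermitian.eigenvalues i)⁻¹ := by
  have hrank : (M * Mᵀ).rank = (Mᵀ * M).rank := by
    rw [Matrix.rank_self_mul_transpose, Matrix.rank_transpose_mul_self]
  have heq : ∀ N : ℕ, (M * Mᵀ + ((N:ℝ)+1)⁻¹ • (1 : Matrix m m ℝ))⁻¹.trace
        - ((Fintype.card m : ℝ) - (M * Mᵀ).rank) * ((N:ℝ)+1)
      = (Mᵀ * M + ((N:ℝ)+1)⁻¹ • (1 : Matrix p p ℝ))⁻¹.trace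
        - ((Fintype.card p : ℝ) - (Mᵀ * M).rank) * ((N:ℝ)+1) := by
    intro N
    have hε : (0:ℝ) < ((N:ℝ)+1)⁻¹ := by positivity
    rw [trace_push_through M hε, hrank, inv_inv]
    ring
  exact tendsto_nhds_unique ((limit_lemma hB).congr heq) (limit_lemma hG)

lemma mul_vecMulVec [Fintype n] (A : Matrix m n ℝ) (y : n → ℝ) (z : p → ℝ) :
    A * vecMulVec y z = vecMulVec (A *ᵥ y) z := by
  ext i j
  simp [Matrix.mul_apply, vecMulVec_apply, Matrix.mulVec, dotProduct,
    Finset.sum_mul, mul_assoc]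

lemma vecMulVec_mul [Fintype n] (y : m → ℝ) (z : n → ℝ) (A : Matrix n p ℝ) :
    vecMulVec y z * A = vecMulVec y (z ᵥ* A) := by
  ext i j
  simp [Matrix.mul_apply, vecMulVec_apply, Matrix.vecMul, dotProduct,
    Finset.mul_sum, mul_assoc]

lemma vecMul_vecMulVec [Fintype n] (z : n → ℝ) (w : n → ℝ) (u : p → ℝ) :
    z ᵥ* vecMulVec w u = (z ⬝ᵥ w) • u := by
  ext j
  simp [Matrix.vecMul, vecMulVec_apply, dotProduct, Finset.sum_mul, mul_assoc]

lemma vecMulVec_smul (y : m → ℝ) (c : ℝ) (u : p → ℝ) :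
    vecMulVec y (c • u) = c • vecMulVec y u := by
  ext i j
  simp [vecMulVec_apply, smul_eq_mul]
  ring

lemma posSemidef_vecMulVec [Fintype n] (x : n → ℝ) : (vecMulVec x x).PosSemidef := by
  simpa using posSemidef_vecMulVec_self_star x

lemma trace_inv_add_vecMulVec_le [Fintype n] [DecidableEq n] {A : Matrix n n ℝ}
    (hA : A.PosDef) (x : n → ℝ) :
    (A + vecMulVec x x)⁻¹.trace ≤ A⁻¹.trace := by
  have hdet : IsUnit A.det := hA.det_pos.ne'.isUnit
  set y := A⁻¹ *ᵥ x with hy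
  set c := 1 + x ⬝ᵥ y with hc
  have hcpos : 0 < c := by
    have h1 := hA.inv.posSemidef.dotProduct_mulVec_nonneg x
    rw [star_trivial] at h1
    simp only [hc, hy]
    linarith
  have hAy : A *ᵥ y = x := by
    rw [hy, Matrix.mulVec_mulVec, Matrix.mul_nonsing_inv _ hdet, Matrix.one_mulVec]
  have hx' : x ᵥ* A⁻¹ = y := by
    have hsym : A⁻¹ᵀ = A⁻¹ := by
      have := hA.inv.isHermitian
      rwa [Matrix.IsHermitian, Matrix.conjTranspose_eq_transpose_of_trivial] at this
    conv_lhs => rw [← hsym]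
    rw [Matrix.vecMul_transpose]
  have key : (A + vecMulVec x x) * (A⁻¹ - c⁻¹ • vecMulVec y y) = 1 := by
    rw [Matrix.mul_sub, Matrix.add_mul, Matrix.mul_nonsing_inv _ hdet,
      Matrix.mul_smul, Matrix.add_mul, mul_vecMulVec, hAy, vecMulVec_mul, hx',
      vecMulVec_mul, vecMul_vecMulVec, vecMulVec_smul]
    have h2 : vecMulVec x y + (x ⬝ᵥ y) • vecMulVec x y = c • vecMulVec x y := by
      rw [hc, add_smul, one_smul]
    rw [h2, smul_smul, inv_mul_cancel₀ hcpos.ne', one_smul]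
    abel
  have hinv : (A + vecMulVec x x)⁻¹ = A⁻¹ - c⁻¹ • vecMulVec y y := inv_eq_right_inv key
  rw [hinv, Matrix.trace_sub, Matrix.trace_smul, smul_eq_mul]
  have htr : 0 ≤ (vecMulVec y y).trace := by
    have : (vecMulVec y y).trace = ∑ i, y i * y i := by
      simp [Matrix.trace, Matrix.diag, vecMulVec_apply]
    rw [this]
    exact Finset.sum_nonneg fun i _ => mul_self_nonneg _
  have : 0 ≤ c⁻¹ * (vecMulVec y y).trace :=
    mul_nonneg (inv_nonneg.mpr hcpos.le) htr
  linarith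

lemma xi_mono [Fintype n] [DecidableEq n] {A : Matrix n n ℝ} (hA : A.PosSemidef)
    (x : n → ℝ) (hA' : (A + vecMulVec x x).PosSemidef)
    (hrank : (A + vecMulVec x x).rank = A.rank) :
    ∑ i, (hA'.isHermitian.eigenvalues i)⁻¹ ≤ ∑ i, (hA.isHermitian.eigenvalues i)⁻¹ := by
  refine le_of_tendsto_of_tendsto' (limit_lemma hA') (limit_lemma hA) ?_
  intro N
  rw [hrank]
  have hε : (0:ℝ) < ((N:ℝ)+1)⁻¹ := by positivity
  have hcomm : A + vecMulVec x x + ((N:ℝ)+1)⁻¹ • (1 : Matrix n n ℝ)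
      = (A + ((N:ℝ)+1)⁻¹ • (1 : Matrix n n ℝ)) + vecMulVec x x := by
    abel
  have := trace_inv_add_vecMulVec_le (posDef_add_smul_one hA hε) x
  rw [← hcomm] at this
  linarith

end SamplingAux

/-- Paper's Corollary 2 (`main_ls`): for LS reconstruction under full-band noise with
`σ² = k/(N·SNR)`, `MSE(S) = ξ₁(S) + σ²·ξ₂(S)` where `ξ₁(S) = k − rank([Π]_S)`, and
`τ(S,v) = (k/N)·(ξ₂(S) − ξ₂(S\{v}))`; then `S \ {v}` is better than `S` iff `SNR < τ(S,v)`. -/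
theorem stmt_2 (N k : ℕ) (hk : 0 < k) (hkN : k ≤ N)
    (U : Matrix (Fin N) (Fin k) ℝ) (hU : Uᵀ * U = 1)
    (Pbl : Matrix (Fin N) (Fin N) ℝ) (hP : Pbl = U * Uᵀ)
    (S : Finset (Fin N)) (v : Fin N) (hv : v ∈ S)
    (SNR : ℝ) (hSNR : 0 < SNR) :
    let MSE : Finset (Fin N) → ℝ := fun T =>
      ((k : ℝ) - ((principalSub Pbl T).rank : ℝ)) +
        ((k : ℝ) / ((N : ℝ) * SNR)) * xi2 Pbl T
    MSE (S.erase v) < MSE S ↔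
      SNR < ((k : ℝ) / (N : ℝ)) * (xi2 Pbl S - xi2 Pbl (S.erase v)) := by
  intro MSE
  classical
  open SamplingAux in
  -- the sampled submatrices of U
  set M : Matrix ↥S (Fin k) ℝ := U.submatrix (fun i => (i : Fin N)) id with hMdef
  set M' : Matrix ↥(S.erase v) (Fin k) ℝ := U.submatrix (fun i => (i : Fin N)) id with hM'def
  set x : Fin k → ℝ := fun a => U v a with hxdef
  have hBS : principalSub Pbl S = M * Mᵀ := by
    ext i j
    simp [principalSub, hP, Matrix.mul_apply, hMdef, Matrix.submatrix_apply]
  have hBS' : principalSub Pbl (S.erase v) = M' * M'ᵀ := by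
    ext i j
    simp [principalSub, hP, Matrix.mul_apply, hM'def, Matrix.submatrix_apply]
  have hGpsd : (Mᵀ * M).PosSemidef := by
    have := Matrix.posSemidef_conjTranspose_mul_self (R := ℝ) M
    rwa [Matrix.conjTranspose_eq_transpose_of_trivial] at this
  have hG'psd : (M'ᵀ * M').PosSemidef := by
    have := Matrix.posSemidef_conjTranspose_mul_self (R := ℝ) M'
    rwa [Matrix.conjTranspose_eq_transpose_of_trivial] at this
  have hBpsd : (M * Mᵀ).PosSemidef := by
    have := Matrix.posSemidef_self_mul_conjTranspose (R := ℝ) M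
    rwa [Matrix.conjTranspose_eq_transpose_of_trivial] at this
  have hB'psd : (M' * M'ᵀ).PosSemidef := by
    have := Matrix.posSemidef_self_mul_conjTranspose (R := ℝ) M'
    rwa [Matrix.conjTranspose_eq_transpose_of_trivial] at this
  have hHerm : (principalSub Pbl S).IsHermitian := hBS ▸ hBpsd.isHermitian
  have hHerm' : (principalSub Pbl (S.erase v)).IsHermitian := hBS' ▸ hB'psd.isHermitian
  -- the Gram matrix split
  have hsplit : Mᵀ * M = M'ᵀ * M' + vecMulVec x x := by
    ext a b
    simp only [Matrix.mul_apply, Matrix.transpose_apply, Matrix.add_apply, vecMulVec_apply,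
      hMdef, hM'def, hxdef, Matrix.submatrix_apply, id_eq]
    rw [Finset.sum_coe_sort S (fun i => U i a * U i b),
      Finset.sum_coe_sort (S.erase v) (fun i => U i a * U i b),
      ← Finset.sum_erase_add S _ hv]
  -- xi2 values
  set a : ℝ := ∑ i, (hGpsd.isHermitian.eigenvalues i)⁻¹ with hadef
  set a' : ℝ := ∑ i, (hG'psd.isHermitian.eigenvalues i)⁻¹ with ha'def
  have hxiS : xi2 Pbl S = a := by
    rw [xi2, dif_pos hHerm, hadef]
    exact (sum_inv_eigenvalues_congr hBS hHerm hBpsd.isHermitian).trans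
      (xi_transfer M hBpsd hGpsd)
  have hxiS' : xi2 Pbl (S.erase v) = a' := by
    rw [xi2, dif_pos hHerm', ha'def]
    exact (sum_inv_eigenvalues_congr hBS' hHerm' hB'psd.isHermitian).trans
      (xi_transfer M' hB'psd hG'psd)
  -- ranks
  set r : ℕ := (Mᵀ * M).rank with hrdef
  set r' : ℕ := (M'ᵀ * M').rank with hr'def
  have hrankS : (principalSub Pbl S).rank = r := by
    rw [hBS, Matrix.rank_self_mul_transpose, hrdef, Matrix.rank_transpose_mul_self]
  have hrankS' : (principalSub Pbl (S.erase v)).rank = r' := by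
    rw [hBS', Matrix.rank_self_mul_transpose, hr'def, Matrix.rank_transpose_mul_self]
  have hrowsub : Set.range M' ⊆ Set.range M := by
    rintro _ ⟨i, rfl⟩
    exact ⟨⟨(i : Fin N), Finset.mem_of_mem_erase i.2⟩, rfl⟩
  have hrr' : r' ≤ r := by
    rw [hrdef, hr'def, Matrix.rank_transpose_mul_self, Matrix.rank_transpose_mul_self,
      Matrix.rank_eq_finrank_span_row, Matrix.rank_eq_finrank_span_row]
    exact Submodule.finrank_mono (Submodule.span_mono hrowsub)
  have hr1 : r ≤ r' + 1 := by
    rw [hrdef, hr'def, Matrix.rank_transpose_mul_self, Matrix.rank_transpose_mul_self,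
      Matrix.rank_eq_finrank_span_row, Matrix.rank_eq_finrank_span_row]
    have hsub : Set.range M ⊆ insert x (Set.range M') := by
      rintro _ ⟨i, rfl⟩
      by_cases hiv : (i : Fin N) = v
      · left
        funext b
        simp [hMdef, hxdef, Matrix.submatrix_apply, hiv]
      · right
        exact ⟨⟨(i : Fin N), Finset.mem_erase.mpr ⟨hiv, i.2⟩⟩, rfl⟩
    have h1 : Module.finrank ℝ (Submodule.span ℝ (Set.range M))
        ≤ Module.finrank ℝ (Submodule.span ℝ (insert x (Set.range M'))) :=
      Submodule.finrank_mono (Submodule.span_mono hsub)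
    have h2 : Module.finrank ℝ (Submodule.span ℝ (insert x (Set.range M')))
        ≤ Module.finrank ℝ (ℝ ∙ x) + Module.finrank ℝ (Submodule.span ℝ (Set.range M')) := by
      rw [Submodule.span_insert]
      exact Submodule.finrank_add_le_finrank_add_finrank _ _
    have h3 : Module.finrank ℝ (ℝ ∙ x) ≤ 1 := by
      by_cases hx0 : x = 0
      · rw [hx0, Submodule.span_zero_singleton]
        simp
      · rw [finrank_span_singleton hx0]
    change Module.finrank ℝ (Submodule.span ℝ (Set.range M))
      ≤ Module.finrank ℝ (Submodule.span ℝ (Set.range M')) + 1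
    omega
  -- monotonicity when ranks are equal
  have hmono : r = r' → a ≤ a' := by
    intro hreq
    have hrk : (M'ᵀ * M' + vecMulVec x x).rank = (M'ᵀ * M').rank := by
      rw [← hsplit, ← hrdef, ← hr'def, hreq]
    have hpsd' : (M'ᵀ * M' + vecMulVec x x).PosSemidef := hsplit ▸ hGpsd
    have := xi_mono hG'psd x hpsd' hrk
    calc a = ∑ i, (hpsd'.isHermitian.eigenvalues i)⁻¹ :=
          sum_inv_eigenvalues_congr hsplit hGpsd.isHermitian hpsd'.isHermitian
      _ ≤ a' := this
  -- final arithmetic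
  have hN : (0:ℝ) < N := by exact_mod_cast lt_of_lt_of_le hk hkN
  have hkR : (0:ℝ) < k := by exact_mod_cast hk
  have hσ : (0:ℝ) < (k:ℝ) / ((N:ℝ) * SNR) := by positivity
  simp only [MSE, hxiS, hxiS', hrankS, hrankS']
  by_cases hcase : r = r'
  · have ha : a ≤ a' := hmono hcase
    rw [hcase]
    constructor
    · intro h
      exfalso
      have h1 : (k:ℝ) / ((N:ℝ) * SNR) * a' < (k:ℝ) / ((N:ℝ) * SNR) * a := by linarith
      have h2 : a' < a := lt_of_mul_lt_mul_left (by linarith) hσ.le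
      linarith
    · intro h
      exfalso
      have h1 : (k:ℝ) / (N:ℝ) * (a - a') ≤ 0 :=
        mul_nonpos_of_nonneg_of_nonpos (by positivity) (by linarith)
      linarith
  · have hreq : r = r' + 1 := by omega
    rw [hreq]
    push_cast
    have hmul : SNR * ((k:ℝ) / ((N:ℝ) * SNR)) = (k:ℝ) / (N:ℝ) := by
      field_simp
    constructor
    · intro h
      have h1 : 1 < (k:ℝ) / ((N:ℝ) * SNR) * (a - a') := by
        have := mul_sub ((k:ℝ) / ((N:ℝ) * SNR)) a a'
        linarith
      have h2 : SNR * 1 < SNR * ((k:ℝ) / ((N:ℝ) * SNR) * (a - a')) :=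
        (mul_lt_mul_iff_right₀ hSNR).mpr h1
      rw [mul_one, ← mul_assoc, hmul] at h2
      exact h2
    · intro h
      have h2 : SNR * 1 < SNR * ((k:ℝ) / ((N:ℝ) * SNR) * (a - a')) := by
        rw [mul_one, ← mul_assoc, hmul]
        linarith
      have h1 : 1 < (k:ℝ) / ((N:ℝ) * SNR) * (a - a') :=
        lt_of_mul_lt_mul_left (by linarith [h2]) hSNR.le
      have := mul_sub ((k:ℝ) / ((N:ℝ) * SNR)) a a'
      linarith
end

section
/- Let v : Fin N → Fin N be a bijection (an enumeration v₁, …, v_N of all vertices with no repeats), and for 0 ≤ i ≤ N let S_i := {v₁, …, v_i} (so S₀ = ∅ and S_N = Fin N). Then there are exactly k indices i ∈ {1, …, N} for which rank([Π]_{S_i}) = rank([Π]_{S_{i−1}}) + 1; equivalently, exactly k indices i for which ξ₂(S_i) > ξ₂(S_{i−1}) (i.e., for which τ(S_i, v_i) := (k/N)·(ξ₂(S_i) − ξ₂(S_{i−1})) > 0). -/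
open Matrix
open scoped Classical

set_option linter.unusedSectionVars false
set_option linter.unnecessarySimpa false
set_option maxHeartbeats 1000000

namespace SSLS
set_option linter.unnecessarySimpa false
open scoped Classical



variable {n : Type*} [Fintype n] [DecidableEq n]

/-- Moore-Penrose property. -/
def IsMP (M P : Matrix n n ℝ) : Prop :=
  M * P * M = M ∧ P * M * P = P ∧ (M * P)ᴴ = M * P ∧ (P * M)ᴴ = P * M

theorem IsMP.unique {M P Q : Matrix n n ℝ} (hP : IsMP M P) (hQ : IsMP M Q) : P = Q := by
  obtain ⟨hP1, hP2, hP3, hP4⟩ := hP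
  obtain ⟨hQ1, hQ2, hQ3, hQ4⟩ := hQ
  have hMP : M * P = M * Q := by
    calc M * P = (M * P)ᴴ := hP3.symm
    _ = Pᴴ * Mᴴ := by rw [conjTranspose_mul]
    _ = Pᴴ * (M * Q * M)ᴴ := by rw [hQ1]
    _ = Pᴴ * (Mᴴ * (M * Q)ᴴ) := by rw [conjTranspose_mul (M * Q) M]
    _ = (Pᴴ * Mᴴ) * (M * Q) := by rw [hQ3, mul_assoc]
    _ = (M * P)ᴴ * (M * Q) := by rw [conjTranspose_mul]
    _ = (M * P) * (M * Q) := by rw [hP3]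
    _ = (M * P * M) * Q := by noncomm_ring
    _ = M * Q := by rw [hP1]
  have hPM : P * M = Q * M := by
    calc P * M = (P * M)ᴴ := hP4.symm
    _ = Mᴴ * Pᴴ := by rw [conjTranspose_mul]
    _ = (M * Q * M)ᴴ * Pᴴ := by rw [hQ1]
    _ = ((Q * M)ᴴ * Mᴴ) * Pᴴ := by simp only [conjTranspose_mul, mul_assoc]
    _ = (Q * M) * (Mᴴ * Pᴴ) := by rw [hQ4, mul_assoc]
    _ = (Q * M) * (P * M)ᴴ := by rw [conjTranspose_mul]
    _ = (Q * M) * (P * M) := by rw [hP4]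
    _ = Q * (M * P * M) := by noncomm_ring
    _ = Q * M := by rw [hP1]
  calc P = P * M * P := hP2.symm
  _ = Q * M * P := by rw [hPM]
  _ = Q * (M * P) := by noncomm_ring
  _ = Q * (M * Q) := by rw [hMP]
  _ = Q * M * Q := by noncomm_ring
  _ = Q := hQ2



set_option linter.unusedSectionVars false

variable {n : Type*} [Fintype n] [DecidableEq n]

variable {A : Matrix n n ℝ} (hA : A.IsHermitian)

/-- Conjugation of a diagonal matrix by the eigenvector unitary of `A`. -/
noncomputable def cfun (hA : A.IsHermitian) (d : n → ℝ) : Matrix n n ℝ :=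
  (hA.eigenvectorUnitary : Matrix n n ℝ) * diagonal d *
    star (hA.eigenvectorUnitary : Matrix n n ℝ)

lemma cfun_mul (d e : n → ℝ) : cfun hA d * cfun hA e = cfun hA (fun i => d i * e i) := by
  have h1 : star (hA.eigenvectorUnitary : Matrix n n ℝ) *
      (hA.eigenvectorUnitary : Matrix n n ℝ) = 1 := by
    simpa using mem_unitaryGroup_iff'.mp (hA.eigenvectorUnitary).2
  simp only [cfun, mul_assoc]
  rw [← mul_assoc (star (hA.eigenvectorUnitary : Matrix n n ℝ)), h1, one_mul,
    ← mul_assoc (diagonal d), diagonal_mul_diagonal]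

lemma cfun_conjTranspose (d : n → ℝ) : (cfun hA d)ᴴ = cfun hA d := by
  simp only [cfun, conjTranspose_mul, star_eq_conjTranspose, conjTranspose_conjTranspose,
    diagonal_conjTranspose, mul_assoc]
  congr 1

lemma cfun_isHermitian (d : n → ℝ) : (cfun hA d).IsHermitian := cfun_conjTranspose hA d

lemma trace_cfun (d : n → ℝ) : (cfun hA d).trace = ∑ i, d i := by
  have h1 : star (hA.eigenvectorUnitary : Matrix n n ℝ) *
      (hA.eigenvectorUnitary : Matrix n n ℝ) = 1 := by
    simpa using mem_unitaryGroup_iff'.mp (hA.eigenvectorUnitary).2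
  rw [cfun, trace_mul_comm, ← mul_assoc, h1, one_mul, trace_diagonal]

lemma cfun_eigenvalues : cfun hA (hA.eigenvalues) = A := by
  conv_rhs => rw [hA.spectral_theorem]
  rw [cfun]
  congr 1

lemma cfun_posSemidef {d : n → ℝ} (hd : ∀ i, 0 ≤ d i) : (cfun hA d).PosSemidef := by
  rw [cfun]
  have : (diagonal d).PosSemidef := .diagonal (by intro i; exact hd i)
  simpa [star_eq_conjTranspose] using
    this.mul_mul_conjTranspose_same (hA.eigenvectorUnitary : Matrix n n ℝ)

end SSLS

namespace SSLS
set_option linter.unusedSectionVars false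
variable {n : Type*} [Fintype n] [DecidableEq n]
variable {A : Matrix n n ℝ} (hA : A.IsHermitian)

lemma cfun_congr {d e : n → ℝ} (h : ∀ i, d i = e i) : cfun hA d = cfun hA e := by
  have : d = e := funext h
  rw [this]

/-- Spectral Moore-Penrose pseudoinverse of a Hermitian real matrix. -/
noncomputable def pinv (hA : A.IsHermitian) : Matrix n n ℝ :=
  cfun hA (fun i => (hA.eigenvalues i)⁻¹)

/-- The orthogonal projection onto the range of `A`. -/
noncomputable def proj (hA : A.IsHermitian) : Matrix n n ℝ :=
  cfun hA (fun i => hA.eigenvalues i * (hA.eigenvalues i)⁻¹)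

lemma pinv_conjTranspose : (pinv hA)ᴴ = pinv hA := cfun_conjTranspose hA _

lemma pinv_isHermitian : (pinv hA).IsHermitian := cfun_isHermitian hA _

lemma proj_conjTranspose : (proj hA)ᴴ = proj hA := cfun_conjTranspose hA _

lemma mul_pinv : A * pinv hA = proj hA := by
  have h : cfun hA hA.eigenvalues * pinv hA = A * pinv hA := by rw [cfun_eigenvalues]
  rw [← h, pinv, cfun_mul]; rfl

lemma pinv_mul : pinv hA * A = proj hA := by
  have h : pinv hA * cfun hA hA.eigenvalues = pinv hA * A := by rw [cfun_eigenvalues]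
  rw [← h, pinv, cfun_mul]
  exact cfun_congr hA fun i => mul_comm _ _

lemma proj_mul_self : proj hA * A = A := by
  have h : proj hA * cfun hA hA.eigenvalues = proj hA * A := by rw [cfun_eigenvalues]
  have h2 : cfun hA (fun i => hA.eigenvalues i * (hA.eigenvalues i)⁻¹ * hA.eigenvalues i)
      = cfun hA hA.eigenvalues := by
    refine cfun_congr hA fun i => ?_
    by_cases h : hA.eigenvalues i = 0 <;> simp [h]
  rw [← h, proj, cfun_mul, h2, cfun_eigenvalues]

lemma self_mul_proj : A * proj hA = A := by
  have h : cfun hA hA.eigenvalues * proj hA = A * proj hA := by rw [cfun_eigenvalues]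
  have h2 : cfun hA (fun i => hA.eigenvalues i * (hA.eigenvalues i * (hA.eigenvalues i)⁻¹))
      = cfun hA hA.eigenvalues := by
    refine cfun_congr hA fun i => ?_
    by_cases h : hA.eigenvalues i = 0 <;> simp [h] <;> ring
  rw [← h, proj, cfun_mul, h2, cfun_eigenvalues]

lemma proj_mul_pinv : proj hA * pinv hA = pinv hA := by
  rw [proj, pinv, cfun_mul]
  refine cfun_congr hA fun i => ?_
  by_cases h : hA.eigenvalues i = 0 <;> simp [h] <;> field_simp

lemma pinv_mul_proj : pinv hA * proj hA = pinv hA := by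
  rw [proj, pinv, cfun_mul]
  refine cfun_congr hA fun i => ?_
  by_cases h : hA.eigenvalues i = 0 <;> simp [h] <;> field_simp <;> ring

lemma proj_idem : proj hA * proj hA = proj hA := by
  rw [proj, cfun_mul]
  refine cfun_congr hA fun i => ?_
  by_cases h : hA.eigenvalues i = 0 <;> simp [h] <;> field_simp

lemma pinv_mul_pinv_mul_self : pinv hA * pinv hA * A = pinv hA := by
  have h : pinv hA * pinv hA * cfun hA hA.eigenvalues = pinv hA * pinv hA * A := by
    rw [cfun_eigenvalues]
  rw [← h, pinv, cfun_mul, cfun_mul]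
  refine cfun_congr hA fun i => ?_
  by_cases h : hA.eigenvalues i = 0 <;> simp [h]

lemma trace_pinv : (pinv hA).trace = ∑ i, (hA.eigenvalues i)⁻¹ := trace_cfun hA _

lemma trace_proj : (proj hA).trace = (A.rank : ℝ) := by
  rw [proj, trace_cfun, hA.rank_eq_card_non_zero_eigs]
  rw [Fintype.card_subtype]
  rw [← Finset.sum_boole]
  refine Finset.sum_congr rfl fun i _ => ?_
  by_cases h : hA.eigenvalues i = 0 <;> simp [h] <;> field_simp

lemma isMP_pinv : IsMP A (pinv hA) := by
  refine ⟨?_, ?_, ?_, ?_⟩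
  · rw [mul_pinv, proj_mul_self]
  · rw [mul_assoc, mul_pinv, pinv_mul_proj]
  · rw [mul_pinv, proj_conjTranspose]
  · rw [pinv_mul, proj_conjTranspose]
  
lemma pinv_posSemidef (h : A.PosSemidef) : (pinv hA).PosSemidef :=
  cfun_posSemidef hA fun i => inv_nonneg.mpr (h.eigenvalues_nonneg i)

lemma mul_pinv_mul_self : A * pinv hA * A = A := (isMP_pinv hA).1

end SSLS

namespace SSLS
set_option linter.unusedSectionVars false

variable {m n p : Type*} [Fintype m] [Fintype n] [Fintype p]

lemma mul_vecMulVec (A : Matrix m n ℝ) (x : n → ℝ) (y : p → ℝ) :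
    A * vecMulVec x y = vecMulVec (A *ᵥ x) y := by
  ext i j
  simp [mul_apply, vecMulVec_apply, mulVec, dotProduct, Finset.sum_mul, mul_assoc]

lemma vecMulVec_mul (x : m → ℝ) (y : n → ℝ) (A : Matrix n p ℝ) :
    vecMulVec x y * A = vecMulVec x (Aᵀ *ᵥ y) := by
  ext i j
  simp only [mul_apply, vecMulVec_apply, mulVec, transpose_apply, dotProduct, Finset.mul_sum]
  exact Finset.sum_congr rfl fun l _ => by ring

lemma vecMulVec_mulVec (x : m → ℝ) (y : n → ℝ) (z : n → ℝ) :
    vecMulVec x y *ᵥ z = (y ⬝ᵥ z) • x := by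
  ext i
  simp only [vecMulVec_apply, mulVec, dotProduct, Pi.smul_apply, smul_eq_mul, Finset.sum_mul]
  exact Finset.sum_congr rfl fun l _ => by ring

lemma vecMulVec_mul_vecMulVec (x : m → ℝ) (y z : n → ℝ) (t : p → ℝ) :
    vecMulVec x y * vecMulVec z t = (y ⬝ᵥ z) • vecMulVec x t := by
  ext i j
  simp [mul_apply, vecMulVec_apply, dotProduct, Finset.sum_mul, Finset.mul_sum]
  congr 1; funext l; ring

lemma trace_vecMulVec (x y : n → ℝ) : (vecMulVec x y).trace = x ⬝ᵥ y := by
  simp [trace, vecMulVec_apply, dotProduct, diag]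

lemma conjTranspose_vecMulVec (x : m → ℝ) (y : n → ℝ) :
    (vecMulVec x y)ᴴ = vecMulVec y x := by
  ext i j; simp [vecMulVec_apply, conjTranspose_apply, mul_comm]

lemma vecMulVec_sub_left (x y : m → ℝ) (z : n → ℝ) :
    vecMulVec (x - y) z = vecMulVec x z - vecMulVec y z := by
  ext i j; simp [vecMulVec_apply, sub_mul]

lemma vecMulVec_add_left (x y : m → ℝ) (z : n → ℝ) :
    vecMulVec (x + y) z = vecMulVec x z + vecMulVec y z := by
  ext i j; simp [vecMulVec_apply, add_mul]

lemma vecMulVec_add_right (x : m → ℝ) (y z : n → ℝ) :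
    vecMulVec x (y + z) = vecMulVec x y + vecMulVec x z := by
  ext i j; simp [vecMulVec_apply, mul_add]

lemma vecMulVec_smul_right (x : m → ℝ) (c : ℝ) (y : n → ℝ) :
    vecMulVec x (c • y) = c • vecMulVec x y := by
  ext i j; simp [vecMulVec_apply]; ring

lemma vecMulVec_neg_right (x : m → ℝ) (y : n → ℝ) :
    vecMulVec x (-y) = -vecMulVec x y := by
  ext i j; simp [vecMulVec_apply]

lemma vecMulVec_zero_left (z : n → ℝ) :
    vecMulVec (0 : m → ℝ) z = 0 := by
  ext i j; simp [vecMulVec_apply]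

lemma vecMulVec_zero_right (x : m → ℝ) :
    vecMulVec x (0 : n → ℝ) = 0 := by
  ext i j; simp [vecMulVec_apply]

end SSLS

namespace SSLS
variable {n : Type*} [Fintype n] [DecidableEq n]

theorem rank_trace_step {G G' : Matrix n n ℝ} (hGp : G.PosSemidef) (hG : G.IsHermitian)
    (hG' : G'.IsHermitian) (u : n → ℝ) (hEqn : G' = G + vecMulVec u u) :
    (G'.rank = G.rank ∧ (pinv hG').trace ≤ (pinv hG).trace) ∨
    (G'.rank = G.rank + 1 ∧ (pinv hG).trace < (pinv hG').trace) := by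
  have hGsym : Gᵀ = G := by
    rw [← conjTranspose_eq_transpose_of_trivial]; exact hG
  set H := pinv hG with hH
  set E := proj hG with hE
  have hHsym : Hᴴ = H := pinv_conjTranspose hG
  have hHsymT : Hᵀ = H := by rw [← conjTranspose_eq_transpose_of_trivial]; exact hHsym
  have hEsym : Eᴴ = E := proj_conjTranspose hG
  have hGH : G * H = E := mul_pinv hG
  have hHG : H * G = E := pinv_mul hG
  have hEG : E * G = G := proj_mul_self hG
  have hGE : G * E = G := self_mul_proj hG
  have hEH : E * H = H := proj_mul_pinv hG
  have hHE : H * E = H := pinv_mul_proj hG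
  have hEE : E * E = E := proj_idem hG
  set kv := H *ᵥ u with hkv
  set mv := E *ᵥ u with hmv
  set w := u - mv with hw
  have humw : u = mv + w := by rw [hw]; ring
  -- vector identities
  have hGm : G *ᵥ mv = G *ᵥ u := by rw [hmv, mulVec_mulVec, hGE]
  have hGw : G *ᵥ w = 0 := by rw [hw, mulVec_sub, hGm, sub_self]
  have hHm : H *ᵥ mv = kv := by rw [hmv, mulVec_mulVec, hHE, hkv]
  have hHw : H *ᵥ w = 0 := by rw [hw, mulVec_sub, hHm, hkv, sub_self]
  have hEk : E *ᵥ kv = kv := by rw [hkv, mulVec_mulVec, hEH]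
  have hEm : E *ᵥ mv = mv := by rw [hmv, mulVec_mulVec, hEE]
  have hEw : E *ᵥ w = 0 := by
    rw [← hGH, ← mulVec_mulVec, hHw, mulVec_zero]
  have hGk : G *ᵥ kv = mv := by rw [hkv, mulVec_mulVec, hGH, hmv]
  have hkw : kv ⬝ᵥ w = 0 := by
    rw [hkv, dotProduct_comm, dotProduct_mulVec, ← mulVec_transpose, hHsymT, hHw,
      zero_dotProduct]
  have hwk : w ⬝ᵥ kv = 0 := by rw [dotProduct_comm]; exact hkw
  have hmw : mv ⬝ᵥ w = 0 := by
    have hEsymT : Eᵀ = E := by rw [← conjTranspose_eq_transpose_of_trivial]; exact hEsym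
    rw [hmv, dotProduct_comm, dotProduct_mulVec, ← mulVec_transpose, hEsymT, hEw,
      zero_dotProduct]
  have huw : u ⬝ᵥ w = w ⬝ᵥ w := by
    conv_lhs => rw [humw]
    rw [add_dotProduct, hmw, zero_add]
  have hwu : w ⬝ᵥ u = w ⬝ᵥ w := by rw [dotProduct_comm]; exact huw
  have huk_nonneg : 0 ≤ u ⬝ᵥ kv := by
    have := (pinv_posSemidef hG hGp).dotProduct_mulVec_nonneg u
    simpa using this
  have hβpos : 0 < 1 + u ⬝ᵥ kv := by positivity
  have hβne : 1 + u ⬝ᵥ kv ≠ 0 := ne_of_gt hβpos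
  have hkk : 0 ≤ kv ⬝ᵥ kv := by
    rw [show kv ⬝ᵥ kv = ∑ i, kv i * kv i from rfl]
    exact Finset.sum_nonneg fun i _ => mul_self_nonneg _
  by_cases hwzero : w = 0
  · -- rank stays, trace does not increase
    have hmu : mv = u := by
      have h0 : u - mv = 0 := by rw [← hw, hwzero]
      have := sub_eq_zero.mp h0
      exact this.symm
    set P := H - (1 + u ⬝ᵥ kv)⁻¹ • vecMulVec kv kv with hP
    have hPsym : Pᴴ = P := by
      rw [hP, conjTranspose_sub, hHsym, conjTranspose_smul, conjTranspose_vecMulVec]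
      simp
    have h1 : G * vecMulVec kv kv = vecMulVec u kv := by rw [mul_vecMulVec, hGk, hmu]
    have h2 : vecMulVec u u * H = vecMulVec u kv := by rw [vecMulVec_mul, hHsymT]
    have h3 : vecMulVec u u * vecMulVec kv kv = (u ⬝ᵥ kv) • vecMulVec u kv :=
      vecMulVec_mul_vecMulVec u u kv kv
    have hG'P : G' * P = E := by
      rw [hEqn, hP]
      simp only [add_mul, mul_sub, Matrix.mul_smul, hGH, h1, h2, h3]
      ext i j
      simp only [Matrix.add_apply, Matrix.sub_apply, Matrix.smul_apply, vecMulVec_apply, smul_eq_mul]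
      field_simp <;> ring
    have hPG' : P * G' = E := by
      have hcc : (G' * P)ᴴ = Pᴴ * G'ᴴ := conjTranspose_mul _ _
      rw [hG'P, hPsym, hG'.eq] at hcc
      rw [← hcc, hEsym]
    have hMP1 : G' * P * G' = G' := by
      rw [hG'P, hEqn, mul_add, hEG, mul_vecMulVec, ← hmv, hmu]
    have hMP2 : P * G' * P = P := by
      rw [hPG', hP, mul_sub, Matrix.mul_smul, hEH, mul_vecMulVec, hEk]
    have hpinvP : pinv hG' = P :=
      (isMP_pinv hG').unique ⟨hMP1, hMP2, by rw [hG'P, hEsym], by rw [hPG', hEsym]⟩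
    have hproj' : proj hG' = E := by rw [← mul_pinv hG', hpinvP, hG'P]
    have hrank : G'.rank = G.rank := by
      have h4 : ((G'.rank : ℝ)) = (G.rank : ℝ) := by
        rw [← trace_proj hG', ← trace_proj hG, hproj']
      exact_mod_cast h4
    have htr : (pinv hG').trace ≤ (pinv hG).trace := by
      rw [hpinvP, hP, trace_sub, trace_smul, trace_vecMulVec, smul_eq_mul]
      have h5 : 0 ≤ (1 + u ⬝ᵥ kv)⁻¹ * (kv ⬝ᵥ kv) := by positivity
      rw [← hH]
      linarith
    exact Or.inl ⟨hrank, htr⟩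
  · -- rank increases, trace strictly increases
    have hσpos : 0 < w ⬝ᵥ w := by
      rcases lt_or_eq_of_le (show (0:ℝ) ≤ w ⬝ᵥ w from by
        rw [show w ⬝ᵥ w = ∑ i, w i * w i from rfl]
        exact Finset.sum_nonneg fun i _ => mul_self_nonneg _) with h | h
      · exact h
      · exact absurd (dotProduct_self_eq_zero.mp h.symm) hwzero
    have hσne : w ⬝ᵥ w ≠ 0 := ne_of_gt hσpos
    set P := H - (w ⬝ᵥ w)⁻¹ • (vecMulVec kv w + vecMulVec w kv)
        + ((1 + u ⬝ᵥ kv) / (w ⬝ᵥ w) ^ 2) • vecMulVec w w with hP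
    set F := E + (w ⬝ᵥ w)⁻¹ • vecMulVec w w with hF
    have hPsym : Pᴴ = P := by
      rw [hP]
      simp only [conjTranspose_add, conjTranspose_sub, conjTranspose_smul, hHsym,
        conjTranspose_vecMulVec, star_trivial]
      rw [add_comm (vecMulVec w kv)]
    have hFsym : Fᴴ = F := by
      rw [hF]
      simp only [conjTranspose_add, conjTranspose_smul, hEsym, conjTranspose_vecMulVec,
        star_trivial]
    have hww : vecMulVec w w = vecMulVec u w - vecMulVec mv w := by
      have h6 := vecMulVec_sub_left u mv w
      rw [← hw] at h6
      exact h6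
    have huu : vecMulVec u u = vecMulVec mv u + vecMulVec w u := by
      have h7 := vecMulVec_add_left mv w u
      rw [← humw] at h7
      exact h7
    -- products with G / vmv u u
    have hA1 : G * vecMulVec kv w = vecMulVec mv w := by rw [mul_vecMulVec, hGk]
    have hA2 : G * vecMulVec w kv = 0 := by rw [mul_vecMulVec, hGw, vecMulVec_zero_left]
    have hA3 : G * vecMulVec w w = 0 := by rw [mul_vecMulVec, hGw, vecMulVec_zero_left]
    have hA4 : vecMulVec u u * H = vecMulVec u kv := by rw [vecMulVec_mul, hHsymT]
    have hA5 : vecMulVec u u * vecMulVec kv w = (u ⬝ᵥ kv) • vecMulVec u w :=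
      vecMulVec_mul_vecMulVec u u kv w
    have hA6 : vecMulVec u u * vecMulVec w kv = (w ⬝ᵥ w) • vecMulVec u kv := by
      rw [vecMulVec_mul_vecMulVec, huw]
    have hA7 : vecMulVec u u * vecMulVec w w = (w ⬝ᵥ w) • vecMulVec u w := by
      rw [vecMulVec_mul_vecMulVec, huw]
    have hG'P : G' * P = F := by
      rw [hEqn, hP, hF]
      simp only [add_mul, mul_add, mul_sub, Matrix.mul_smul, hGH, hA1, hA2, hA3, hA4,
        hA5, hA6, hA7]
      rw [hww]
      ext i j
      simp only [Matrix.add_apply, Matrix.sub_apply, Matrix.smul_apply, vecMulVec_apply, smul_eq_mul,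
        Matrix.zero_apply, smul_zero, add_zero, mul_zero]
      field_simp <;> ring
    have hPG' : P * G' = F := by
      have hcc : (G' * P)ᴴ = Pᴴ * G'ᴴ := conjTranspose_mul _ _
      rw [hG'P, hPsym, hG'.eq] at hcc
      rw [← hcc, hFsym]
    have hB1 : E * vecMulVec u u = vecMulVec mv u := by rw [mul_vecMulVec, ← hmv]
    have hB2 : vecMulVec w w * G = 0 := by
      rw [vecMulVec_mul, hGsym, hGw, vecMulVec_zero_right]
    have hB3 : vecMulVec w w * vecMulVec u u = (w ⬝ᵥ w) • vecMulVec w u := by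
      rw [vecMulVec_mul_vecMulVec, hwu]
    have hMP1 : G' * P * G' = G' := by
      rw [hG'P, hF, hEqn]
      simp only [add_mul, mul_add, Matrix.smul_mul, hEG, hB1, hB2, hB3]
      rw [huu]
      ext i j
      simp only [Matrix.add_apply, Matrix.smul_apply, vecMulVec_apply, smul_eq_mul, Matrix.zero_apply,
        smul_zero, add_zero, mul_zero]
      field_simp <;> ring
    -- E * P and vmv w w * P
    have hC1 : E * vecMulVec kv w = vecMulVec kv w := by rw [mul_vecMulVec, hEk]
    have hC2 : E * vecMulVec w kv = 0 := by rw [mul_vecMulVec, hEw, vecMulVec_zero_left]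
    have hC3 : E * vecMulVec w w = 0 := by rw [mul_vecMulVec, hEw, vecMulVec_zero_left]
    have hD1 : vecMulVec w w * H = 0 := by
      rw [vecMulVec_mul, hHsymT, hHw, vecMulVec_zero_right]
    have hD2 : vecMulVec w w * vecMulVec kv w = 0 := by
      rw [vecMulVec_mul_vecMulVec, hwk, zero_smul]
    have hD3 : vecMulVec w w * vecMulVec w kv = (w ⬝ᵥ w) • vecMulVec w kv :=
      vecMulVec_mul_vecMulVec w w w kv
    have hD4 : vecMulVec w w * vecMulVec w w = (w ⬝ᵥ w) • vecMulVec w w :=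
      vecMulVec_mul_vecMulVec w w w w
    have hMP2 : P * G' * P = P := by
      rw [hPG', hF, hP]
      simp only [add_mul, mul_add, mul_sub, Matrix.mul_smul, Matrix.smul_mul, hEH, hC1,
        hC2, hC3, hD1, hD2, hD3, hD4]
      ext i j
      simp only [Matrix.add_apply, Matrix.sub_apply, Matrix.smul_apply, vecMulVec_apply, smul_eq_mul,
        Matrix.zero_apply, smul_zero, add_zero, mul_zero, zero_sub, sub_zero, neg_zero,
        zero_add, zero_mul]
      field_simp <;> ring
    have hpinvP : pinv hG' = P :=
      (isMP_pinv hG').unique ⟨hMP1, hMP2, by rw [hG'P, hFsym], by rw [hPG', hFsym]⟩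
    have hproj' : proj hG' = F := by rw [← mul_pinv hG', hpinvP, hG'P]
    have hrank : G'.rank = G.rank + 1 := by
      have h4 : ((G'.rank : ℝ)) = (G.rank : ℝ) + 1 := by
        rw [← trace_proj hG', ← trace_proj hG, hproj', hF, trace_add, trace_smul,
          trace_vecMulVec, smul_eq_mul, inv_mul_cancel₀ hσne]
      exact_mod_cast h4
    have htr : (pinv hG).trace < (pinv hG').trace := by
      rw [hpinvP, hP, trace_add, trace_sub, trace_smul, trace_smul, trace_add,
        trace_vecMulVec, trace_vecMulVec, trace_vecMulVec, smul_eq_mul, smul_eq_mul,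
        hkw, hwk, ← hH]
      have h8 : 0 < (1 + u ⬝ᵥ kv) / (w ⬝ᵥ w) ^ 2 * (w ⬝ᵥ w) := by positivity
      linarith
    exact Or.inr ⟨hrank, htr⟩

end SSLS

namespace SSLS
variable {m l : Type*} [Fintype m] [Fintype l] [DecidableEq m] [DecidableEq l]

lemma xi2_key (B : Matrix m l ℝ) (hM : (B * Bᴴ).IsHermitian) (hG : (Bᴴ * B).IsHermitian) :
    ∑ i, (hM.eigenvalues i)⁻¹ = (pinv hG).trace := by
  set P := pinv hG with hPdef
  have hPsym : Pᴴ = P := pinv_conjTranspose hG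
  have b1 : (Bᴴ * B) * P * (Bᴴ * B) = Bᴴ * B := (isMP_pinv hG).1
  have b2 : P * (Bᴴ * B) * P = P := (isMP_pinv hG).2.1
  have b3 : (Bᴴ * B) * P * P = P := by
    rw [hPdef, mul_pinv hG]
    exact proj_mul_pinv hG
  have b4 : P * P * (Bᴴ * B) = P := pinv_mul_pinv_mul_self hG
  -- right-associated plain forms
  have r1 : Bᴴ * (B * (P * (Bᴴ * B))) = Bᴴ * B := by
    have h := b1; simp only [Matrix.mul_assoc] at h; exact h
  have r4 : P * (P * (Bᴴ * B)) = P := by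
    have h := b4; simp only [Matrix.mul_assoc] at h; exact h
  -- continuation forms
  have g1 : ∀ X : Matrix l m ℝ, Bᴴ * (B * (P * (P * X))) = P * X := by
    intro X
    have h := congrArg (fun M => M * X) b3
    simp only [Matrix.mul_assoc] at h; exact h
  have g2 : ∀ X : Matrix l m ℝ, P * (P * (Bᴴ * (B * X))) = P * X := by
    intro X
    have h := congrArg (fun M => M * X) b4
    simp only [Matrix.mul_assoc] at h; exact h
  have g3 : ∀ X : Matrix l m ℝ, P * (Bᴴ * (B * (P * X))) = P * X := by
    intro X
    have h := congrArg (fun M => M * X) b2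
    simp only [Matrix.mul_assoc] at h; exact h
  have g5 : ∀ X : Matrix l l ℝ, Bᴴ * (B * (P * (Bᴴ * (B * X)))) = Bᴴ * (B * X) := by
    intro X
    have h := congrArg (fun M => M * X) b1
    simp only [Matrix.mul_assoc] at h; exact h
  -- B * P * Bᴴ * B = B
  have hBPG : B * (P * (Bᴴ * B)) = B := by
    have hCzero : (B - B * (P * (Bᴴ * B)))ᴴ * (B - B * (P * (Bᴴ * B))) = 0 := by
      simp only [conjTranspose_sub, Matrix.sub_mul, Matrix.mul_sub, conjTranspose_mul,
        conjTranspose_conjTranspose, hPsym, Matrix.mul_assoc, r1, g5]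
      abel
    have h := conjTranspose_mul_self_eq_zero.mp hCzero
    exact (sub_eq_zero.mp h).symm
  have g4 : ∀ X : Matrix l m ℝ, B * (P * (Bᴴ * (B * X))) = B * X := by
    intro X
    have h := congrArg (fun M => M * X) hBPG
    simp only [Matrix.mul_assoc] at h; exact h
  -- candidate pseudoinverse of M = B * Bᴴ
  have hMQ : (B * Bᴴ) * (B * (P * (P * Bᴴ))) = B * (P * Bᴴ) := by
    simp only [Matrix.mul_assoc, g1]
  have hQM : (B * (P * (P * Bᴴ))) * (B * Bᴴ) = B * (P * Bᴴ) := by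
    simp only [Matrix.mul_assoc, g2]
  have hTsym : (B * (P * Bᴴ))ᴴ = B * (P * Bᴴ) := by
    simp only [conjTranspose_mul, conjTranspose_conjTranspose, hPsym, Matrix.mul_assoc]
  have hMQM : (B * Bᴴ) * (B * (P * (P * Bᴴ))) * (B * Bᴴ) = B * Bᴴ := by
    rw [hMQ]
    simp only [Matrix.mul_assoc, g4]
  have hQMQ : (B * (P * (P * Bᴴ))) * (B * Bᴴ) * (B * (P * (P * Bᴴ))) = B * (P * (P * Bᴴ)) := by
    rw [hQM]
    simp only [Matrix.mul_assoc, g3]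
  have hpinvM : pinv hM = B * (P * (P * Bᴴ)) :=
    (isMP_pinv hM).unique ⟨hMQM, hQMQ, by rw [hMQ, hTsym], by rw [hQM, hTsym]⟩
  have htr : (B * (P * (P * Bᴴ))).trace = P.trace := by
    rw [trace_mul_comm]
    have h : ((P * (P * Bᴴ)) * B).trace = (P * (P * (Bᴴ * B))).trace := by
      simp only [Matrix.mul_assoc]
    rw [h, r4]
  rw [← trace_pinv hM, hpinvM, htr]

lemma rank_key (B : Matrix m l ℝ) : (B * Bᴴ).rank = (Bᴴ * B).rank := by
  rw [rank_self_mul_conjTranspose, rank_conjTranspose_mul_self]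

end SSLS


namespace SSLS

lemma eigenvalues_congr {n : Type*} [Fintype n] [DecidableEq n] {A A' : Matrix n n ℝ}
    (h : A = A') (hA : A.IsHermitian) (hA' : A'.IsHermitian) :
    hA.eigenvalues = hA'.eigenvalues := by
  subst h; rfl

lemma count_steps (f : ℕ → ℕ) :
    ∀ n : ℕ, (∀ i, 1 ≤ i → i ≤ n → f i = f (i - 1) ∨ f i = f (i - 1) + 1) →
    ((Finset.Icc 1 n).filter (fun i => f i = f (i - 1) + 1)).card + f 0 = f n := by
  intro n
  induction n with
  | zero => simp
  | succ n ih =>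
    intro h
    have hIcc : Finset.Icc 1 (n + 1) = insert (n + 1) (Finset.Icc 1 n) := by
      ext j
      simp only [Finset.mem_Icc, Finset.mem_insert]
      omega
    have hnot : (n + 1) ∉ Finset.Icc 1 n := by simp
    have ihh := ih (fun i h1 h2 => h i h1 (by omega))
    rw [hIcc, Finset.filter_insert]
    rcases h (n + 1) (by omega) (le_refl _) with hcase | hcase
    · have hfalse : ¬ (f (n + 1) = f (n + 1 - 1) + 1) := by
        simp only [Nat.add_sub_cancel] at hcase ⊢
        omega
      rw [if_neg hfalse]
      simp only [Nat.add_sub_cancel] at hcase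
      omega
    · have htrue : f (n + 1) = f (n + 1 - 1) + 1 := by
        simpa using hcase
      rw [if_pos htrue, Finset.card_insert_of_notMem (by simp)]
      simp only [Nat.add_sub_cancel] at hcase
      omega

end SSLS


open SSLS

/-- Paper's Proposition 2 (`main_existence_LS`): for any enumeration `v` of the vertices
(with `Sᵢ = {v₁, …, v_N}`), there are exactly `k` indices `i ∈ {1, …, N}` where the rank of
the principal submatrix `[Π]_{Sᵢ}` increases by `1`; equivalently, exactly `k` indices where
`ξ₂(Sᵢ) > ξ₂(S_{i−1})`, i.e. where `τ(Sᵢ, vᵢ) = (k/N)·(ξ₂(Sᵢ) − ξ₂(S_{i−1})) > 0`. -/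
theorem stmt_3 (N k : ℕ) (hk : 0 < k) (hkN : k ≤ N)
    (U : Matrix (Fin N) (Fin k) ℝ) (hU : Uᵀ * U = 1)
    (Pbl : Matrix (Fin N) (Fin N) ℝ) (hP : Pbl = U * Uᵀ)
    (v : Fin N → Fin N) (hv : Function.Bijective v) :
    let Sset : ℕ → Finset (Fin N) := fun i =>
      (Finset.univ.filter (fun j : Fin N => (j : ℕ) < i)).image v
    ((Finset.Icc 1 N).filter (fun i =>
        (principalSub Pbl (Sset i)).rank = (principalSub Pbl (Sset (i - 1))).rank + 1)).card
      = k ∧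
    ((Finset.Icc 1 N).filter (fun i =>
        xi2 Pbl (Sset (i - 1)) < xi2 Pbl (Sset i))).card = k ∧
    ((Finset.Icc 1 N).filter (fun i =>
        0 < ((k : ℝ) / (N : ℝ)) * (xi2 Pbl (Sset i) - xi2 Pbl (Sset (i - 1))))).card = k := by
  intro Sset
  have hN : 0 < N := lt_of_lt_of_le hk hkN
  set G : Finset (Fin N) → Matrix (Fin k) (Fin k) ℝ := fun S =>
    (U.submatrix (fun i : {x // x ∈ S} => (i : Fin N)) id)ᴴ *
      U.submatrix (fun i : {x // x ∈ S} => (i : Fin N)) id with hGdef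
  have hMeq : ∀ S : Finset (Fin N), principalSub Pbl S =
      U.submatrix (fun i : {x // x ∈ S} => (i : Fin N)) id *
        (U.submatrix (fun i : {x // x ∈ S} => (i : Fin N)) id)ᴴ := by
    intro S
    ext i j
    simp [principalSub, hP, Matrix.mul_apply, conjTranspose_apply, submatrix_apply]
  have hMherm : ∀ S : Finset (Fin N), (principalSub Pbl S).IsHermitian := by
    intro S
    rw [hMeq]
    exact isHermitian_mul_conjTranspose_self _
  have hGherm : ∀ S : Finset (Fin N), (G S).IsHermitian := fun S =>
    isHermitian_conjTranspose_mul_self _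
  have hGpsd : ∀ S : Finset (Fin N), (G S).PosSemidef := fun S =>
    posSemidef_conjTranspose_mul_self _
  have hrank : ∀ S : Finset (Fin N), (principalSub Pbl S).rank = (G S).rank := by
    intro S
    rw [hMeq, hGdef]
    exact rank_key _
  have hxi2 : ∀ S : Finset (Fin N), xi2 Pbl S = (pinv (hGherm S)).trace := by
    intro S
    rw [xi2, dif_pos (hMherm S)]
    have hM' : (U.submatrix (fun i : {x // x ∈ S} => (i : Fin N)) id *
        (U.submatrix (fun i : {x // x ∈ S} => (i : Fin N)) id)ᴴ).IsHermitian :=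
      isHermitian_mul_conjTranspose_self _
    have he := eigenvalues_congr (hMeq S) (hMherm S) hM'
    rw [he]
    exact xi2_key _ hM' (hGherm S)
  have hGapp : ∀ (S : Finset (Fin N)) (a b : Fin k),
      G S a b = ∑ j ∈ S, U j a * U j b := by
    intro S a b
    rw [hGdef]
    simp only [Matrix.mul_apply, conjTranspose_apply, submatrix_apply, id_eq, star_trivial]
    exact Finset.sum_coe_sort S (fun j => U j a * U j b)
  have hGstep : ∀ (S : Finset (Fin N)) (x : Fin N), x ∉ S →
      G (insert x S) = G S + vecMulVec (fun a => U x a) (fun a => U x a) := by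
    intro S x hx
    ext a b
    rw [Matrix.add_apply, hGapp, hGapp, Finset.sum_insert hx, vecMulVec_apply]
    ring
  -- Sset facts
  have hSset0 : Sset 0 = ∅ := by
    ext x
    simp [Sset]
  have hSsetN : Sset N = Finset.univ := by
    have h : Finset.univ.filter (fun j : Fin N => (j : ℕ) < N) = Finset.univ := by
      ext j
      simp [j.isLt]
    simp only [Sset, h]
    exact Finset.image_univ_of_surjective hv.2
  have hkey : ∀ i ∈ Finset.Icc 1 N, ∃ x : Fin N, x ∉ Sset (i - 1) ∧
      Sset i = insert x (Sset (i - 1)) := by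
    intro i hi
    rw [Finset.mem_Icc] at hi
    refine ⟨v ⟨i - 1, by omega⟩, ?_, ?_⟩
    · intro hmem
      simp only [Sset, Finset.mem_image] at hmem
      obtain ⟨j, hj, hje⟩ := hmem
      have hjeq := hv.1 hje
      rw [Finset.mem_filter] at hj
      rw [hjeq] at hj
      simp at hj
    · have h : Finset.univ.filter (fun j : Fin N => (j : ℕ) < i) =
          insert (⟨i - 1, by omega⟩ : Fin N)
            (Finset.univ.filter (fun j : Fin N => (j : ℕ) < i - 1)) := by
        ext j
        simp only [Finset.mem_filter, Finset.mem_insert, Finset.mem_univ, true_and,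
          Fin.ext_iff]
        omega
      simp only [Sset, h, Finset.image_insert]
  -- dichotomy per index
  have hdich : ∀ i ∈ Finset.Icc 1 N,
      ((G (Sset i)).rank = (G (Sset (i - 1))).rank ∧
        (pinv (hGherm (Sset i))).trace ≤ (pinv (hGherm (Sset (i - 1)))).trace) ∨
      ((G (Sset i)).rank = (G (Sset (i - 1))).rank + 1 ∧
        (pinv (hGherm (Sset (i - 1)))).trace < (pinv (hGherm (Sset i))).trace) := by
    intro i hi
    obtain ⟨x, hx, hins⟩ := hkey i hi
    have hstep := hGstep (Sset (i - 1)) x hx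
    rw [← hins] at hstep
    exact rank_trace_step (hGpsd (Sset (i - 1))) (hGherm (Sset (i - 1))) (hGherm (Sset i))
      _ hstep
  set f : ℕ → ℕ := fun i => (G (Sset i)).rank with hf
  have hstep01 : ∀ i, 1 ≤ i → i ≤ N → f i = f (i - 1) ∨ f i = f (i - 1) + 1 := by
    intro i h1 h2
    rcases hdich i (Finset.mem_Icc.mpr ⟨h1, h2⟩) with ⟨hr, _⟩ | ⟨hr, _⟩
    · exact Or.inl hr
    · exact Or.inr hr
  have hf0 : f 0 = 0 := by
    have h0 : G (Sset 0) = 0 := by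
      ext a b
      rw [hGapp, hSset0]
      simp
    show (G (Sset 0)).rank = 0
    rw [h0]
    exact Matrix.rank_zero
  have hfN : f N = k := by
    have h1 : G (Sset N) = 1 := by
      ext a b
      rw [hGapp, hSsetN]
      have h2 := congrFun (congrFun hU a) b
      rw [Matrix.mul_apply] at h2
      simp only [transpose_apply] at h2
      rw [← h2]
    show (G (Sset N)).rank = k
    rw [h1, Matrix.rank_one, Fintype.card_fin]
  have hcount := count_steps f N hstep01
  have hcard : ((Finset.Icc 1 N).filter (fun i => f i = f (i - 1) + 1)).card = k := by
    omega
  have hqpos : (0 : ℝ) < (k : ℝ) / (N : ℝ) :=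
    div_pos (Nat.cast_pos.mpr hk) (Nat.cast_pos.mpr hN)
  have hiff2 : ∀ i ∈ Finset.Icc 1 N,
      ((pinv (hGherm (Sset (i - 1)))).trace < (pinv (hGherm (Sset i))).trace ↔
        f i = f (i - 1) + 1) := by
    intro i hi
    rcases hdich i hi with ⟨h1, h2⟩ | ⟨h1, h2⟩
    · constructor
      · intro hlt
        exact absurd hlt (not_lt.mpr h2)
      · intro hfi
        rw [show f i = (G (Sset i)).rank from rfl,
          show f (i - 1) = (G (Sset (i - 1))).rank from rfl] at hfi
        omega
    · exact iff_of_true h2 h1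
  have e1 : (Finset.Icc 1 N).filter (fun i =>
      (principalSub Pbl (Sset i)).rank = (principalSub Pbl (Sset (i - 1))).rank + 1) =
      (Finset.Icc 1 N).filter (fun i => f i = f (i - 1) + 1) := by
    apply Finset.filter_congr
    intro i hi
    rw [hrank, hrank]
  have e2 : (Finset.Icc 1 N).filter (fun i =>
      xi2 Pbl (Sset (i - 1)) < xi2 Pbl (Sset i)) =
      (Finset.Icc 1 N).filter (fun i => f i = f (i - 1) + 1) := by
    apply Finset.filter_congr
    intro i hi
    rw [hxi2, hxi2]
    exact hiff2 i hi
  have e3 : (Finset.Icc 1 N).filter (fun i =>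
      0 < ((k : ℝ) / (N : ℝ)) * (xi2 Pbl (Sset i) - xi2 Pbl (Sset (i - 1)))) =
      (Finset.Icc 1 N).filter (fun i => f i = f (i - 1) + 1) := by
    apply Finset.filter_congr
    intro i hi
    rw [hxi2, hxi2, ← hiff2 i hi]
    constructor
    · intro hpos
      nlinarith
    · intro hlt
      have hd : (0 : ℝ) < (pinv (hGherm (Sset i))).trace -
          (pinv (hGherm (Sset (i - 1)))).trace := sub_pos.mpr hlt
      exact mul_pos hqpos hd
  exact ⟨by rw [e1]; exact hcard, by rw [e2]; exact hcard, by rw [e3]; exact hcard⟩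
end

section
/- (a) Suppose S ⊆ T ⊆ Fin N where |T| = k and rank([Π]_T) = k (T is a smallest uniqueness set, as produced by a sequential noiseless-optimal sampling scheme; equivalently, [Π]_S is invertible). Then for every v ∈ S: ξ₂(S) − ξ₂(S\{v}) ≥ 1, and consequently τ(S,v) := (k/N)·(ξ₂(S) − ξ₂(S\{v})) ≥ k/N. (b) Suppose instead T ⊆ S ⊆ Fin N with rank([Π]_T) = k. Then for every v ∈ S\T: ξ₂(S) − ξ₂(S\{v}) ≤ 0, i.e., τ(S,v) ≤ 0. -/
open Matrix
open scoped Classical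

lemma trace_eq_sum_inv_eig {n : Type*} [Fintype n] [DecidableEq n]
    {A X : Matrix n n ℝ} (hA : A.IsHermitian)
    (h1 : A * X * A = A) (h2 : X * A * X = X) (h3 : A * X = X * A) :
    X.trace = ∑ i, (hA.eigenvalues i)⁻¹ := by
  set V : Matrix n n ℝ := (hA.eigenvectorUnitary : Matrix n n ℝ) with hVdef
  have hVW : V * star V = 1 := (Matrix.mem_unitaryGroup_iff).mp hA.eigenvectorUnitary.2
  have hWV : star V * V = 1 := (Matrix.mem_unitaryGroup_iff').mp hA.eigenvectorUnitary.2
  set d := hA.eigenvalues with hd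
  have hD : star V * A * V = Matrix.diagonal d := by
    have hs := hA.spectral_theorem
    rw [Unitary.conjStarAlgAut_apply] at hs
    have h' : star V * A * V = (star V * V) * Matrix.diagonal (RCLike.ofReal ∘ d) * (star V * V) := by
      conv_lhs => rw [hs]
      simp only [Matrix.mul_assoc]
      rfl
    rw [h', hWV, Matrix.one_mul, Matrix.mul_one]
    rfl
  set M := star V * X * V with hM
  have hconj : ∀ (B C : Matrix n n ℝ),
      (star V * B * V) * (star V * C * V) = star V * (B * C) * V := by
    intro B C
    calc (star V * B * V) * (star V * C * V)
        = star V * B * (V * star V) * C * V := by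
          simp only [Matrix.mul_assoc]
      _ = star V * (B * C) * V := by rw [hVW]; simp only [Matrix.mul_one, Matrix.mul_assoc]
  have hMD : M * Matrix.diagonal d = Matrix.diagonal d * M := by
    rw [← hD, hM, hconj, hconj, h3]
  have hDMD : Matrix.diagonal d * M * Matrix.diagonal d = Matrix.diagonal d := by
    rw [← hD, hM, hconj, hconj, h1]
  have hMDM : M * Matrix.diagonal d * M = M := by
    rw [← hD, hM, hconj, hconj, h2]
  have htr : M.trace = X.trace := by
    rw [hM, Matrix.trace_mul_cycle, hVW, Matrix.one_mul]
  have hMii : ∀ i, M i i = (d i)⁻¹ := by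
    intro i
    by_cases h : d i = 0
    · have hzero : ∀ j, M i j * d j = 0 := by
        intro j
        have := congrFun (congrFun hMD i) j
        rw [Matrix.mul_diagonal, Matrix.diagonal_mul] at this
        rw [this, h, zero_mul]
      have : M i i = ∑ j, M i j * d j * M j i := by
        conv_lhs => rw [← hMDM]
        rw [Matrix.mul_apply]
        exact Finset.sum_congr rfl fun j _ => by rw [Matrix.mul_diagonal]
      rw [this, h, _root_.inv_zero]
      exact Finset.sum_eq_zero fun j _ => by rw [hzero j, zero_mul]
    · have := congrFun (congrFun hDMD i) i
      rw [Matrix.mul_diagonal, Matrix.diagonal_mul, Matrix.diagonal_apply_eq] at this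
      field_simp at this ⊢
      linarith [this]
  rw [← htr, Matrix.trace]
  exact Finset.sum_congr rfl fun i _ => by rw [Matrix.diag_apply, hMii i]
lemma mulVec_inj_of_rank {m n : Type*} [Fintype m] [Fintype n]
    (M : Matrix m n ℝ) (h : M.rank = Fintype.card n) :
    ∀ x : n → ℝ, M *ᵥ x = 0 → x = 0 := by
  have h1 := LinearMap.finrank_range_add_finrank_ker M.mulVecLin
  rw [show Module.finrank ℝ (LinearMap.range M.mulVecLin) = M.rank from rfl] at h1
  rw [Module.finrank_fintype_fun_eq_card] at h1
  have h2 : Module.finrank ℝ (LinearMap.ker M.mulVecLin) = 0 := by omega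
  have h3 : LinearMap.ker M.mulVecLin = ⊥ := Submodule.finrank_eq_zero.mp h2
  exact Matrix.ker_mulVecLin_eq_bot_iff.mp h3

lemma trace_fromBlocks' {l m : Type*} [Fintype l] [Fintype m]
    (A : Matrix l l ℝ) (B : Matrix l m ℝ) (C : Matrix m l ℝ) (D : Matrix m m ℝ) :
    (Matrix.fromBlocks A B C D).trace = A.trace + D.trace := by
  simp [Matrix.trace, Fintype.sum_sum_type, Matrix.fromBlocks]

lemma trace_submatrix_equiv' {m n : Type*} [Fintype m] [Fintype n]
    (A : Matrix m m ℝ) (e : n ≃ m) : (A.submatrix e e).trace = A.trace := by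
  rw [Matrix.trace, Matrix.trace]
  exact Equiv.sum_comp e (fun i => A.diag i)

lemma real_transpose_eq {m : Type*} {M : Matrix m m ℝ} (h : M.IsHermitian) : Mᵀ = M := by
  rw [← Matrix.conjTranspose_eq_transpose_of_trivial]; exact h

lemma const_mul_row {m : Type*} [Fintype m] (c : ℝ) (w : m → ℝ) :
    (Matrix.of (fun _ _ => c) : Matrix Unit Unit ℝ) * Matrix.replicateRow Unit w
      = c • Matrix.replicateRow Unit w := by
  ext i j
  simp [Matrix.mul_apply, Matrix.replicateRow_apply]

lemma dotProduct_self_nonneg' {m : Type*} [Fintype m] (v : m → ℝ) : 0 ≤ v ⬝ᵥ v :=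
  Finset.sum_nonneg fun i _ => mul_self_nonneg _

/-- Sherman–Morrison trace monotonicity. -/
lemma trace_inv_rank_one_update_le {κ : Type*} [Fintype κ] [DecidableEq κ]
    (G : Matrix κ κ ℝ) (hG : G.PosDef) (u : κ → ℝ) :
    ((G + Matrix.replicateCol Unit u * Matrix.replicateRow Unit u)⁻¹).trace ≤ (G⁻¹).trace := by
  have hdet : IsUnit G.det := hG.det_pos.ne'.isUnit
  have hGinv : G⁻¹.PosDef := hG.inv
  have hGinvT : G⁻¹ᵀ = G⁻¹ := real_transpose_eq hGinv.isHermitian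
  set w : κ → ℝ := G⁻¹ *ᵥ u with hw
  have hGw : G *ᵥ w = u := by
    rw [hw, Matrix.mulVec_mulVec, Matrix.mul_nonsing_inv _ hdet, Matrix.one_mulVec]
  have huw : 0 ≤ u ⬝ᵥ w := by
    have := hGinv.posSemidef.dotProduct_mulVec_nonneg u
    simpa using this
  set c : ℝ := 1 + u ⬝ᵥ w with hc
  have hcpos : 0 < c := by linarith
  have hend : c⁻¹ + c⁻¹ * (u ⬝ᵥ w) = 1 := by
    have h := inv_mul_cancel₀ hcpos.ne'
    nlinarith [h]
  have hvecrow : u ᵥ* G⁻¹ = w := by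
    rw [← hGinvT, Matrix.vecMul_transpose]
  set M : Matrix κ κ ℝ := G⁻¹ - c⁻¹ • (Matrix.replicateCol Unit w * Matrix.replicateRow Unit w) with hM
  have e1 : G * (c⁻¹ • (Matrix.replicateCol Unit w * Matrix.replicateRow Unit w))
      = c⁻¹ • (Matrix.replicateCol Unit u * Matrix.replicateRow Unit w) := by
    rw [Matrix.mul_smul, ← Matrix.mul_assoc, ← Matrix.replicateCol_mulVec, hGw]
  have e2 : Matrix.replicateCol Unit u * Matrix.replicateRow Unit u * G⁻¹
      = Matrix.replicateCol Unit u * Matrix.replicateRow Unit w := by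
    rw [Matrix.mul_assoc, ← Matrix.replicateRow_vecMul, hvecrow]
  have e3 : Matrix.replicateCol Unit u * Matrix.replicateRow Unit u *
        (c⁻¹ • (Matrix.replicateCol Unit w * Matrix.replicateRow Unit w))
      = (c⁻¹ * (u ⬝ᵥ w)) • (Matrix.replicateCol Unit u * Matrix.replicateRow Unit w) := by
    rw [Matrix.mul_smul, Matrix.mul_assoc, ← Matrix.mul_assoc (Matrix.replicateRow Unit u),
      Matrix.replicateRow_mul_replicateCol, const_mul_row, Matrix.mul_smul, smul_smul]
  have key : (G + Matrix.replicateCol Unit u * Matrix.replicateRow Unit u) * M = 1 := by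
    rw [hM, Matrix.mul_sub, Matrix.add_mul, Matrix.add_mul,
      Matrix.mul_nonsing_inv _ hdet, e1, e2, e3]
    have hcomb : c⁻¹ • (Matrix.replicateCol Unit u * Matrix.replicateRow Unit w)
        + (c⁻¹ * (u ⬝ᵥ w)) • (Matrix.replicateCol Unit u * Matrix.replicateRow Unit w)
        = Matrix.replicateCol Unit u * Matrix.replicateRow Unit w := by
      rw [← add_smul, hend, one_smul]
    rw [hcomb]
    simp
  have hinv : (G + Matrix.replicateCol Unit u * Matrix.replicateRow Unit u)⁻¹ = M :=
    Matrix.inv_eq_right_inv key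
  rw [hinv, hM, Matrix.trace_sub, Matrix.trace_smul, Matrix.trace_replicateCol_mul_replicateRow]
  have h0 : 0 ≤ c⁻¹ * (w ⬝ᵥ w) :=
    mul_nonneg (le_of_lt (inv_pos.mpr hcpos)) (dotProduct_self_nonneg' w)
  simp only [smul_eq_mul]
  linarith

lemma real_transpose_eq2 {m : Type*} {M : Matrix m m ℝ} (h : M.IsHermitian) : Mᵀ = M := by
  rw [← Matrix.conjTranspose_eq_transpose_of_trivial]; exact h

lemma const_mul_row2 {m : Type*} [Fintype m] (c : ℝ) (w : m → ℝ) :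
    (Matrix.of (fun _ _ => c) : Matrix Unit Unit ℝ) * Matrix.replicateRow Unit w
      = c • Matrix.replicateRow Unit w := by
  ext i j
  simp [Matrix.mul_apply, Matrix.replicateRow_apply]

lemma dotProduct_self_nonneg2 {m : Type*} [Fintype m] (v : m → ℝ) : 0 ≤ v ⬝ᵥ v :=
  Finset.sum_nonneg fun i _ => mul_self_nonneg _

lemma trace_fromBlocks2 {l m : Type*} [Fintype l] [Fintype m]
    (A : Matrix l l ℝ) (B : Matrix l m ℝ) (C : Matrix m l ℝ) (D : Matrix m m ℝ) :
    (Matrix.fromBlocks A B C D).trace = A.trace + D.trace := by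
  simp [Matrix.trace, Fintype.sum_sum_type, Matrix.fromBlocks]

/-- Key trace inequality for bordered positive definite matrices. -/
lemma blocky {m : Type*} [Fintype m] [DecidableEq m] (A' : Matrix m m ℝ) (hA' : A'.PosDef)
    (b : m → ℝ) (d : ℝ) (hd1 : d ≤ 1)
    (hpd : (Matrix.fromBlocks A' (Matrix.replicateCol Unit b) (Matrix.replicateRow Unit b)
      (Matrix.of fun _ _ => d)).PosDef) :
    (A'⁻¹).trace + 1 ≤ ((Matrix.fromBlocks A' (Matrix.replicateCol Unit b) (Matrix.replicateRow Unit b)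
      (Matrix.of fun _ _ => d))⁻¹).trace := by
  have hdet : IsUnit A'.det := hA'.det_pos.ne'.isUnit
  have hinvpd : A'⁻¹.PosDef := hA'.inv
  have hinvT : A'⁻¹ᵀ = A'⁻¹ := real_transpose_eq2 hinvpd.isHermitian
  set w : m → ℝ := A'⁻¹ *ᵥ b with hw
  have hA'w : A' *ᵥ w = b := by
    rw [hw, Matrix.mulVec_mulVec, Matrix.mul_nonsing_inv _ hdet, Matrix.one_mulVec]
  have hvecrow : b ᵥ* A'⁻¹ = w := by
    rw [← hinvT, Matrix.vecMul_transpose]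
  have hbw : 0 ≤ b ⬝ᵥ w := by
    have := hinvpd.posSemidef.dotProduct_mulVec_nonneg b
    simpa using this
  set s : ℝ := d - b ⬝ᵥ w with hs
  -- positivity of the Schur complement
  have hspos : 0 < s := by
    set x : (m ⊕ Unit) → ℝ := Sum.elim (fun i => -(w i)) (fun _ => 1) with hx
    have hxne : x ≠ 0 := by
      intro h
      have := congrFun h (Sum.inr ())
      simp [hx] at this
    have hquad := hpd.dotProduct_mulVec_pos hxne
    have hcomp : Matrix.fromBlocks A' (Matrix.replicateCol Unit b) (Matrix.replicateRow Unit b)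
        (Matrix.of fun _ _ => d) *ᵥ x
        = Sum.elim (0 : m → ℝ) (fun _ => s) := by
      rw [hx, Matrix.fromBlocks_mulVec]
      simp only [Sum.elim_comp_inl, Sum.elim_comp_inr]
      have h1 : A' *ᵥ (fun i : m => -(w i)) + Matrix.replicateCol Unit b *ᵥ (fun _ : Unit => (1 : ℝ)) = 0 := by
        have e : (fun i : m => -(w i)) = -w := rfl
        rw [e, Matrix.mulVec_neg, hA'w]
        funext i
        simp [Matrix.mulVec, dotProduct, Matrix.replicateCol_apply]
      have h2 : Matrix.replicateRow Unit b *ᵥ (fun i : m => -(w i))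
          + (Matrix.of fun _ _ => d) *ᵥ (fun _ : Unit => (1 : ℝ)) = fun _ => s := by
        funext j
        simp only [Matrix.mulVec, dotProduct, Matrix.replicateRow_apply, Matrix.of_apply,
          Pi.add_apply, mul_neg, mul_one, Finset.sum_neg_distrib, Finset.sum_const,
          Finset.card_univ, Fintype.card_unit, one_smul, hs]
        ring
      rw [h1, h2]
    rw [hcomp] at hquad
    have : star x = x := by
      funext i; simp [hx]
    rw [this, hx, sumElim_dotProduct_sumElim] at hquad
    simpa [dotProduct] using hquad
  have hs1 : s ≤ 1 := by linarith
  have hsinv1 : 1 ≤ s⁻¹ := by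
    rw [le_inv_comm₀] <;> simp_all
  set σ : ℝ := s⁻¹ with hσ
  have hσs : σ * d - σ * (b ⬝ᵥ w) = 1 := by
    rw [← mul_sub, hσ, ← hs, inv_mul_cancel₀ hspos.ne']
  set M : Matrix (m ⊕ Unit) (m ⊕ Unit) ℝ :=
    Matrix.fromBlocks (A'⁻¹ + σ • (Matrix.replicateCol Unit w * Matrix.replicateRow Unit w))
      (-(σ • Matrix.replicateCol Unit w)) (-(σ • Matrix.replicateRow Unit w)) (σ • (1 : Matrix Unit Unit ℝ)) with hM
  have blk11 : A' * (A'⁻¹ + σ • (Matrix.replicateCol Unit w * Matrix.replicateRow Unit w))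
      + Matrix.replicateCol Unit b * (-(σ • Matrix.replicateRow Unit w)) = 1 := by
    rw [Matrix.mul_add, Matrix.mul_nonsing_inv _ hdet, Matrix.mul_smul,
      ← Matrix.mul_assoc, ← Matrix.replicateCol_mulVec, hA'w, Matrix.mul_neg, Matrix.mul_smul]
    exact add_neg_cancel_right _ _
  have blk12 : A' * (-(σ • Matrix.replicateCol Unit w))
      + Matrix.replicateCol Unit b * (σ • (1 : Matrix Unit Unit ℝ)) = 0 := by
    rw [Matrix.mul_neg, Matrix.mul_smul, ← Matrix.replicateCol_mulVec, hA'w,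
      Matrix.mul_smul, Matrix.mul_one]
    exact neg_add_cancel _
  have blk21 : Matrix.replicateRow Unit b * (A'⁻¹ + σ • (Matrix.replicateCol Unit w * Matrix.replicateRow Unit w))
      + (Matrix.of fun _ _ => d : Matrix Unit Unit ℝ) * (-(σ • Matrix.replicateRow Unit w)) = 0 := by
    rw [Matrix.mul_add, ← Matrix.replicateRow_vecMul, hvecrow, Matrix.mul_smul,
      ← Matrix.mul_assoc, Matrix.replicateRow_mul_replicateCol, const_mul_row2, Matrix.mul_neg,
      Matrix.mul_smul, const_mul_row2, smul_smul, smul_smul]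
    have hc : Matrix.replicateRow Unit w + (σ * (b ⬝ᵥ w)) • Matrix.replicateRow Unit w
        + -((σ * d) • Matrix.replicateRow Unit w)
        = ((1 : ℝ) + σ * (b ⬝ᵥ w) - σ * d) • Matrix.replicateRow Unit w := by
      module
    rw [hc]
    have hcoef : (1 : ℝ) + σ * (b ⬝ᵥ w) - σ * d = 0 := by linarith
    rw [hcoef, zero_smul]
  have blk22 : Matrix.replicateRow Unit b * (-(σ • Matrix.replicateCol Unit w))
      + (Matrix.of fun _ _ => d : Matrix Unit Unit ℝ) * (σ • (1 : Matrix Unit Unit ℝ)) = 1 := by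
    rw [Matrix.mul_neg, Matrix.mul_smul, Matrix.replicateRow_mul_replicateCol, Matrix.mul_smul,
      Matrix.mul_one]
    ext i j
    have hij : i = j := Subsingleton.elim i j
    simp only [Matrix.add_apply, Matrix.neg_apply, Matrix.smul_apply, Matrix.of_apply,
      smul_eq_mul, hij, Matrix.one_apply_eq]
    linarith
  have key : Matrix.fromBlocks A' (Matrix.replicateCol Unit b) (Matrix.replicateRow Unit b)
      (Matrix.of fun _ _ => d) * M = 1 := by
    rw [hM, Matrix.fromBlocks_multiply, blk11, blk12, blk21, blk22,
      Matrix.fromBlocks_one]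
  have hinv : (Matrix.fromBlocks A' (Matrix.replicateCol Unit b) (Matrix.replicateRow Unit b)
      (Matrix.of fun _ _ => d))⁻¹ = M := Matrix.inv_eq_right_inv key
  rw [hinv, hM, trace_fromBlocks2, Matrix.trace_add, Matrix.trace_smul,
    Matrix.trace_replicateCol_mul_replicateRow, Matrix.trace_smul, Matrix.trace_one]
  have hww : 0 ≤ w ⬝ᵥ w := dotProduct_self_nonneg2 w
  have h1 : 0 ≤ σ * (w ⬝ᵥ w) := mul_nonneg (by linarith) hww
  simp only [smul_eq_mul, Fintype.card_unit, Nat.cast_one, mul_one]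
  linarith
section Aux
variable {N k : ℕ} (U : Matrix (Fin N) (Fin k) ℝ)

/-- rows of `U` restricted to `R`. -/
noncomputable def Bsub (R : Finset (Fin N)) : Matrix ↥R (Fin k) ℝ :=
  U.submatrix (fun i => (i : Fin N)) id

/-- Gram matrix of the rows of `U` in `R`. -/
noncomputable def Gram (R : Finset (Fin N)) : Matrix (Fin k) (Fin k) ℝ :=
  Matrix.of fun a b => ∑ i ∈ R, U i a * U i b

lemma principalSub_eq {Pbl : Matrix (Fin N) (Fin N) ℝ} (hP : Pbl = U * Uᵀ)
    (R : Finset (Fin N)) :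
    principalSub Pbl R = Bsub U R * (Bsub U R)ᵀ := by
  ext i j
  simp [principalSub, Bsub, hP, Matrix.mul_apply]

lemma gram_eq (R : Finset (Fin N)) : (Bsub U R)ᵀ * Bsub U R = Gram U R := by
  ext a b
  simp only [Matrix.mul_apply, Matrix.transpose_apply, Bsub, Gram, Matrix.submatrix_apply,
    Matrix.of_apply, id_eq]
  exact Finset.sum_coe_sort R (fun i => U i a * U i b)

lemma gram_hermitian (R : Finset (Fin N)) : (Gram U R).IsHermitian := by
  rw [← gram_eq]
  simpa using Matrix.isHermitian_conjTranspose_mul_self (Bsub U R)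

lemma principalSub_hermitian {Pbl : Matrix (Fin N) (Fin N) ℝ} (hP : Pbl = U * Uᵀ)
    (R : Finset (Fin N)) : (principalSub Pbl R).IsHermitian := by
  rw [principalSub_eq U hP]
  simpa using Matrix.isHermitian_mul_conjTranspose_self (Bsub U R)

lemma quad_form_eq (R : Finset (Fin N)) (x : Fin k → ℝ) :
    x ⬝ᵥ (Gram U R *ᵥ x) = ∑ i ∈ R, (∑ a, U i a * x a) ^ 2 := by
  have h1 : ∀ i, (∑ a, U i a * x a) ^ 2 = ∑ a, ∑ b, x a * (U i a * U i b * x b) := by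
    intro i
    rw [sq, Finset.sum_mul_sum]
    exact Finset.sum_congr rfl fun a _ => Finset.sum_congr rfl fun b _ => by ring
  have expand : x ⬝ᵥ (Gram U R *ᵥ x) = ∑ a, ∑ b, ∑ i ∈ R, x a * (U i a * U i b * x b) := by
    simp only [dotProduct, Matrix.mulVec, dotProduct, Gram, Matrix.of_apply,
      Finset.sum_mul, Finset.mul_sum]
  rw [expand]
  calc ∑ a, ∑ b, ∑ i ∈ R, x a * (U i a * U i b * x b)
      = ∑ a, ∑ i ∈ R, ∑ b, x a * (U i a * U i b * x b) :=
        Finset.sum_congr rfl fun a _ => Finset.sum_comm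
    _ = ∑ i ∈ R, ∑ a, ∑ b, x a * (U i a * U i b * x b) := Finset.sum_comm
    _ = ∑ i ∈ R, (∑ a, U i a * x a) ^ 2 :=
        Finset.sum_congr rfl fun i _ => (h1 i).symm
end Aux
lemma posdef_submatrix_equiv {n m : Type*} [Fintype n] [Fintype m]
    (A : Matrix m m ℝ) (hA : A.PosDef) (e : n ≃ m) : (A.submatrix e e).PosDef := by
  refine Matrix.PosDef.of_dotProduct_mulVec_pos ?_ ?_
  · exact hA.isHermitian.submatrix e
  · intro x hx
    have hms : A.submatrix (⇑e) (⇑e) *ᵥ x = (A *ᵥ (x ∘ e.symm)) ∘ e :=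
      Matrix.submatrix_mulVec_equiv A x (⇑e) e
    rw [hms]
    have hdd : star x ⬝ᵥ ((A *ᵥ (x ∘ e.symm)) ∘ e) = star (x ∘ e.symm) ⬝ᵥ (A *ᵥ (x ∘ e.symm)) := by
      simp only [dotProduct, Function.comp]
      refine Fintype.sum_equiv e _ _ fun i => ?_
      simp
    rw [hdd]
    refine hA.dotProduct_mulVec_pos (fun h => hx ?_)
    funext i
    simpa using congrFun h (e i)

lemma xi2_eq_trace_inv {N : ℕ} {Pbl : Matrix (Fin N) (Fin N) ℝ} {R : Finset (Fin N)}
    (hpd : (principalSub Pbl R).PosDef) :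
    xi2 Pbl R = (principalSub Pbl R)⁻¹.trace := by
  have herm : (principalSub Pbl R).IsHermitian := hpd.isHermitian
  have hdet : IsUnit (principalSub Pbl R).det := hpd.det_pos.ne'.isUnit
  rw [xi2, dif_pos herm]
  refine (trace_eq_sum_inv_eig herm ?_ ?_ ?_).symm
  · rw [Matrix.mul_nonsing_inv _ hdet, Matrix.one_mul]
  · rw [Matrix.nonsing_inv_mul _ hdet, Matrix.one_mul]
  · rw [Matrix.mul_nonsing_inv _ hdet, Matrix.nonsing_inv_mul _ hdet]

lemma xi2_eq_trace_gram {N k : ℕ} (U : Matrix (Fin N) (Fin k) ℝ)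
    {Pbl : Matrix (Fin N) (Fin N) ℝ} (hP : Pbl = U * Uᵀ) {R : Finset (Fin N)}
    (hG : (Gram U R).PosDef) :
    xi2 Pbl R = (Gram U R)⁻¹.trace := by
  have herm : (principalSub Pbl R).IsHermitian := principalSub_hermitian U hP R
  set B := Bsub U R with hBdef
  set G := Gram U R with hGdef
  have hBB : principalSub Pbl R = B * Bᵀ := principalSub_eq U hP R
  have hBG : Bᵀ * B = G := gram_eq U R
  have hdet : IsUnit G.det := hG.det_pos.ne'.isUnit
  set X : Matrix ↥R ↥R ℝ := B * (G⁻¹ * (G⁻¹ * Bᵀ)) with hX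
  have hAX : principalSub Pbl R * X = B * (G⁻¹ * Bᵀ) := by
    rw [hBB, hX]
    simp only [← Matrix.mul_assoc]
    simp only [Matrix.mul_assoc]
    rw [← Matrix.mul_assoc Bᵀ B, hBG, ← Matrix.mul_assoc G G⁻¹,
      Matrix.mul_nonsing_inv _ hdet, Matrix.one_mul]
  have hXA : X * principalSub Pbl R = B * (G⁻¹ * Bᵀ) := by
    rw [hBB, hX]
    simp only [Matrix.mul_assoc]
    rw [← Matrix.mul_assoc Bᵀ B Bᵀ, hBG, ← Matrix.mul_assoc G⁻¹ G Bᵀ,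
      Matrix.nonsing_inv_mul _ hdet, Matrix.one_mul]
  have h1 : principalSub Pbl R * X * principalSub Pbl R = principalSub Pbl R := by
    rw [hAX, hBB]
    simp only [Matrix.mul_assoc]
    rw [← Matrix.mul_assoc Bᵀ B Bᵀ, hBG, ← Matrix.mul_assoc G⁻¹ G Bᵀ,
      Matrix.nonsing_inv_mul _ hdet, Matrix.one_mul]
  have h2 : X * principalSub Pbl R * X = X := by
    rw [hXA, hX]
    simp only [Matrix.mul_assoc]
    rw [← Matrix.mul_assoc Bᵀ B, hBG, ← Matrix.mul_assoc G G⁻¹,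
      Matrix.mul_nonsing_inv _ hdet, Matrix.one_mul]
  have h3 : principalSub Pbl R * X = X * principalSub Pbl R := by rw [hAX, hXA]
  have htr : X.trace = (G⁻¹).trace := by
    rw [hX, Matrix.trace_mul_comm]
    simp only [Matrix.mul_assoc]
    rw [hBG, show G⁻¹ * (G⁻¹ * G) = G⁻¹ by rw [Matrix.nonsing_inv_mul _ hdet, Matrix.mul_one]]
  rw [xi2, dif_pos herm, ← htr]
  exact (trace_eq_sum_inv_eig herm h1 h2 h3).symm

lemma bsub_rank {N k : ℕ} (U : Matrix (Fin N) (Fin k) ℝ) {Pbl : Matrix (Fin N) (Fin N) ℝ}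
    (hP : Pbl = U * Uᵀ) {T : Finset (Fin N)} (hrank : (principalSub Pbl T).rank = k) :
    (Bsub U T).rank = k := by
  have h1 : (principalSub Pbl T).rank ≤ (Bsub U T).rank := by
    rw [principalSub_eq U hP]
    exact Matrix.rank_mul_le_left _ _
  have h2 : (Bsub U T).rank ≤ k := by
    simpa using Matrix.rank_le_card_width (Bsub U T)
  omega

lemma gram_posdef {N k : ℕ} (U : Matrix (Fin N) (Fin k) ℝ) {Pbl : Matrix (Fin N) (Fin N) ℝ}
    (hP : Pbl = U * Uᵀ) {T R : Finset (Fin N)}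
    (hrank : (principalSub Pbl T).rank = k) (hTR : T ⊆ R) :
    (Gram U R).PosDef := by
  refine Matrix.PosDef.of_dotProduct_mulVec_pos (gram_hermitian U R) fun x hx => ?_
  have hstar : star x = x := by funext i; simp
  rw [hstar, quad_form_eq]
  have hinj : ∀ y : Fin k → ℝ, Bsub U T *ᵥ y = 0 → y = 0 :=
    mulVec_inj_of_rank _ (by rw [bsub_rank U hP hrank]; simp)
  have hTpos : 0 < ∑ i ∈ T, (∑ a, U i a * x a) ^ 2 := by
    rcases lt_or_eq_of_le (Finset.sum_nonneg
      (fun i (_ : i ∈ T) => sq_nonneg (∑ a, U i a * x a))) with h | h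
    · exact h
    · exfalso
      apply hx
      apply hinj
      funext i
      have hall := (Finset.sum_eq_zero_iff_of_nonneg
        (fun j (_ : j ∈ T) => sq_nonneg (∑ a, U j a * x a))).mp h.symm
      have hsq : (∑ a, U (i : Fin N) a * x a) ^ 2 = 0 := hall _ i.2
      have hz : ∑ a, U (i : Fin N) a * x a = 0 := by
        exact pow_eq_zero_iff (two_ne_zero) |>.mp hsq
      simpa [Bsub, Matrix.mulVec, dotProduct] using hz
  calc (0:ℝ) < ∑ i ∈ T, (∑ a, U i a * x a) ^ 2 := hTpos
    _ ≤ ∑ i ∈ R, (∑ a, U i a * x a) ^ 2 :=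
        Finset.sum_le_sum_of_subset_of_nonneg hTR (fun i _ _ => sq_nonneg _)

lemma prin_posdef {N k : ℕ} (U : Matrix (Fin N) (Fin k) ℝ) {Pbl : Matrix (Fin N) (Fin N) ℝ}
    (hP : Pbl = U * Uᵀ) {T R : Finset (Fin N)} (hTcard : T.card = k)
    (hrank : (principalSub Pbl T).rank = k) (hRT : R ⊆ T) :
    (principalSub Pbl R).PosDef := by
  refine Matrix.PosDef.of_dotProduct_mulVec_pos (principalSub_hermitian U hP R) fun x hx => ?_
  have hstar : star x = x := by funext i; simp
  have hq : x ⬝ᵥ (principalSub Pbl R *ᵥ x)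
      = ((Bsub U R)ᵀ *ᵥ x) ⬝ᵥ ((Bsub U R)ᵀ *ᵥ x) := by
    rw [principalSub_eq U hP, ← Matrix.mulVec_mulVec, Matrix.dotProduct_mulVec,
      ← Matrix.mulVec_transpose]
  rw [hstar, hq]
  have hinjT : ∀ y : ↥T → ℝ, (Bsub U T)ᵀ *ᵥ y = 0 → y = 0 := by
    apply mulVec_inj_of_rank
    rw [Matrix.rank_transpose, bsub_rank U hP hrank, Fintype.card_coe, hTcard]
  have hz : (Bsub U R)ᵀ *ᵥ x ≠ 0 := by
    intro h0
    set y : ↥T → ℝ := fun j => if h : (j : Fin N) ∈ R then x ⟨j, h⟩ else 0 with hy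
    have hext : (Bsub U T)ᵀ *ᵥ y = (Bsub U R)ᵀ *ᵥ x := by
      funext a
      show ∑ j : ↥T, (Bsub U T)ᵀ a j * y j = ∑ i : ↥R, (Bsub U R)ᵀ a i * x i
      have e1 : ∑ j : ↥T, (Bsub U T)ᵀ a j * y j
          = ∑ j ∈ T, (if h : j ∈ R then U j a * x ⟨j, h⟩ else 0) := by
        rw [← Finset.sum_coe_sort T (fun j => if h : j ∈ R then U j a * x ⟨j, h⟩ else 0)]
        refine Finset.sum_congr rfl fun j _ => ?_
        by_cases h : (j : Fin N) ∈ R <;> simp [Bsub, hy, h]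
      have e2 : ∑ i : ↥R, (Bsub U R)ᵀ a i * x i
          = ∑ j ∈ R, (if h : j ∈ R then U j a * x ⟨j, h⟩ else 0) := by
        rw [← Finset.sum_coe_sort R (fun j => if h : j ∈ R then U j a * x ⟨j, h⟩ else 0)]
        refine Finset.sum_congr rfl fun i _ => ?_
        simp [Bsub, i.2]
      rw [e1, e2]
      exact (Finset.sum_subset hRT (fun j _ hjR => dif_neg hjR)).symm
    have hy0 : y = 0 := hinjT y (by rw [hext, h0])
    apply hx
    funext i
    have hcy := congrFun hy0 ⟨i, hRT i.2⟩
    simpa [hy, i.2] using hcy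
  exact lt_of_le_of_ne (dotProduct_self_nonneg' _)
    (fun h => hz (dotProduct_self_eq_zero.mp h.symm))

/-- Paper's Theorem 3 (`noiseless_optimality_means_noise_sensitivity`):
(a) if `S ⊆ T` with `|T| = k` and `rank([Π]_T) = k`, then for every `v ∈ S`,
`ξ₂(S) − ξ₂(S\{v}) ≥ 1` and hence `τ(S,v) = (k/N)·(ξ₂(S) − ξ₂(S\{v})) ≥ k/N`;
(b) if `T ⊆ S` with `rank([Π]_T) = k`, then for every `v ∈ S \ T`,
`ξ₂(S) − ξ₂(S\{v}) ≤ 0`, i.e. `τ(S,v) ≤ 0`. -/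
theorem stmt_4 (N k : ℕ) (hk : 0 < k) (hkN : k ≤ N)
    (U : Matrix (Fin N) (Fin k) ℝ) (hU : Uᵀ * U = 1)
    (Pbl : Matrix (Fin N) (Fin N) ℝ) (hP : Pbl = U * Uᵀ)
    (S T : Finset (Fin N)) :
    ((S ⊆ T ∧ T.card = k ∧ (principalSub Pbl T).rank = k) →
      ∀ v ∈ S, (1 : ℝ) ≤ xi2 Pbl S - xi2 Pbl (S.erase v) ∧
        (k : ℝ) / (N : ℝ) ≤ ((k : ℝ) / (N : ℝ)) * (xi2 Pbl S - xi2 Pbl (S.erase v))) ∧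
    ((T ⊆ S ∧ (principalSub Pbl T).rank = k) →
      ∀ v ∈ S \ T, xi2 Pbl S - xi2 Pbl (S.erase v) ≤ 0 ∧
        ((k : ℝ) / (N : ℝ)) * (xi2 Pbl S - xi2 Pbl (S.erase v)) ≤ 0) := by
  have hsym : ∀ i j, Pbl i j = Pbl j i := by
    intro i j
    rw [hP]
    simp only [Matrix.mul_apply, Matrix.transpose_apply]
    exact Finset.sum_congr rfl fun a _ => mul_comm _ _
  constructor
  · rintro ⟨hST, hTcard, hrank⟩ v hv
    have hApd : (principalSub Pbl S).PosDef := prin_posdef U hP hTcard hrank hST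
    have hA'pd : (principalSub Pbl (S.erase v)).PosDef :=
      prin_posdef U hP hTcard hrank ((Finset.erase_subset v S).trans hST)
    -- the diagonal entry is at most 1
    have hPP : Pbl * Pbl = Pbl := by
      rw [hP, Matrix.mul_assoc, ← Matrix.mul_assoc Uᵀ U Uᵀ, hU, Matrix.one_mul]
    have hdiag : ∑ j, Pbl v j * Pbl j v = Pbl v v := by
      rw [← Matrix.mul_apply, hPP]
    have hdsq : Pbl v v * Pbl v v ≤ Pbl v v := by
      calc Pbl v v * Pbl v v
          ≤ ∑ j, Pbl v j * Pbl j v := by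
            refine Finset.single_le_sum (f := fun j => Pbl v j * Pbl j v) ?_ (Finset.mem_univ v)
            intro j _
            show 0 ≤ Pbl v j * Pbl j v
            rw [show Pbl j v = Pbl v j from hsym j v]
            exact mul_self_nonneg _
        _ = Pbl v v := hdiag
    have hdpos : 0 < Pbl v v := by
      have hx : (Pi.single (⟨v, hv⟩ : ↥S) 1 : ↥S → ℝ) ≠ 0 := by
        intro h
        have := congrFun h ⟨v, hv⟩
        simp at this
      have hq := hApd.dotProduct_mulVec_pos hx
      have hcalc : star (Pi.single (⟨v, hv⟩ : ↥S) 1 : ↥S → ℝ)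
          ⬝ᵥ (principalSub Pbl S *ᵥ Pi.single (⟨v, hv⟩ : ↥S) 1) = Pbl v v := by
        simp [dotProduct, Matrix.mulVec, Pi.single_apply, principalSub,
          Finset.sum_ite_eq', mul_ite]
      rw [hcalc] at hq
      exact hq
    have hd1 : Pbl v v ≤ 1 := by nlinarith
    -- the reindexing equivalence
    have hS'sub : ∀ i : ↥(S.erase v), (i : Fin N) ∈ S := fun i => Finset.mem_of_mem_erase i.2
    set f : ↥(S.erase v) ⊕ Unit → ↥S :=
      Sum.elim (fun i => ⟨i, hS'sub i⟩) (fun _ => ⟨v, hv⟩) with hf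
    have hbij : Function.Bijective f := by
      constructor
      · rintro (i | i) (j | j) hij <;>
          simp only [hf, Sum.elim_inl, Sum.elim_inr] at hij
        · exact congrArg Sum.inl (Subtype.ext (Subtype.mk_eq_mk.mp hij))
        · exact absurd (Subtype.mk_eq_mk.mp hij) (Finset.ne_of_mem_erase i.2)
        · exact absurd (Subtype.mk_eq_mk.mp hij).symm (Finset.ne_of_mem_erase j.2)
        · rfl
      · intro a
        by_cases h : (a : Fin N) = v
        · exact ⟨Sum.inr (), Subtype.ext h.symm⟩
        · exact ⟨Sum.inl ⟨a, Finset.mem_erase.mpr ⟨h, a.2⟩⟩, Subtype.ext rfl⟩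
    set e : ↥(S.erase v) ⊕ Unit ≃ ↥S := Equiv.ofBijective f hbij with he
    set b : ↥(S.erase v) → ℝ := fun i => Pbl i v with hb
    have hsub_eq : (principalSub Pbl S).submatrix e e
        = Matrix.fromBlocks (principalSub Pbl (S.erase v)) (Matrix.replicateCol Unit b)
          (Matrix.replicateRow Unit b) (Matrix.of fun _ _ => Pbl v v) := by
      ext i j
      rcases i with i | i <;> rcases j with j | j
      · rfl
      · rfl
      · exact hsym v j
      · rfl
    have hbigpd : (Matrix.fromBlocks (principalSub Pbl (S.erase v)) (Matrix.replicateCol Unit b)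
        (Matrix.replicateRow Unit b) (Matrix.of fun _ _ => Pbl v v)).PosDef :=
      hsub_eq ▸ posdef_submatrix_equiv _ hApd e
    have hblocky := blocky (principalSub Pbl (S.erase v)) hA'pd b (Pbl v v) hd1 hbigpd
    have htr1 : xi2 Pbl S = (principalSub Pbl S)⁻¹.trace := xi2_eq_trace_inv hApd
    have htr2 : xi2 Pbl (S.erase v) = (principalSub Pbl (S.erase v))⁻¹.trace :=
      xi2_eq_trace_inv hA'pd
    have htr3 : ((Matrix.fromBlocks (principalSub Pbl (S.erase v)) (Matrix.replicateCol Unit b)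
        (Matrix.replicateRow Unit b) (Matrix.of fun _ _ => Pbl v v))⁻¹).trace
        = ((principalSub Pbl S)⁻¹).trace := by
      rw [← hsub_eq, Matrix.inv_submatrix_equiv, trace_submatrix_equiv']
    have hmain : (1 : ℝ) ≤ xi2 Pbl S - xi2 Pbl (S.erase v) := by
      rw [htr1, htr2]
      linarith [hblocky, htr3.le, htr3.ge]
    refine ⟨hmain, ?_⟩
    have h0 : (0:ℝ) ≤ (k:ℝ)/(N:ℝ) := by positivity
    nlinarith
  · rintro ⟨hTS, hrank⟩ v hv
    rw [Finset.mem_sdiff] at hv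
    obtain ⟨hvS, hvT⟩ := hv
    have hTS' : T ⊆ S.erase v := Finset.subset_erase.mpr ⟨hTS, hvT⟩
    have hGS : (Gram U S).PosDef := gram_posdef U hP hrank hTS
    have hGS' : (Gram U (S.erase v)).PosDef := gram_posdef U hP hrank hTS'
    have hx1 : xi2 Pbl S = (Gram U S)⁻¹.trace := xi2_eq_trace_gram U hP hGS
    have hx2 : xi2 Pbl (S.erase v) = (Gram U (S.erase v))⁻¹.trace :=
      xi2_eq_trace_gram U hP hGS'
    have hsplit : Gram U S = Gram U (S.erase v)
        + Matrix.replicateCol Unit (fun a => U v a) * Matrix.replicateRow Unit (fun a => U v a) := by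
      ext a c
      simp only [Gram, Matrix.add_apply, Matrix.of_apply, Matrix.mul_apply,
        Matrix.replicateCol_apply, Matrix.replicateRow_apply, Finset.univ_unique, Finset.sum_singleton]
      rw [← Finset.sum_erase_add S _ hvS]
    have hle := trace_inv_rank_one_update_le (Gram U (S.erase v)) hGS' (fun a => U v a)
    rw [← hsplit] at hle
    have hmain : xi2 Pbl S - xi2 Pbl (S.erase v) ≤ 0 := by
      rw [hx1, hx2]
      linarith
    refine ⟨hmain, ?_⟩
    have h0 : (0:ℝ) ≤ (k:ℝ)/(N:ℝ) := by positivity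
    nlinarith
end

section
/- Let U : Matrix (Fin N) (Fin k) ℝ satisfy Uᵀ * U = 1, let Q : Matrix (Fin k) (Fin k) ℝ be symmetric and idempotent (Qᵀ = Q and Q * Q = Q), and let σ : ℝ. Then ‖U − U*Q‖_F² + σ²·‖U*Q‖_F² = k + (σ² − 1)·rank Q, where ‖A‖_F² := trace(Aᵀ * A) is the squared Frobenius norm. -/
open Matrix

lemma trace_eq_rank_of_proj {k : ℕ} (Q : Matrix (Fin k) (Fin k) ℝ) (hQidem : Q * Q = Q) :
    Matrix.trace Q = (Q.rank : ℝ) := by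
  have hproj : LinearMap.IsProj (LinearMap.range Q.mulVecLin) Q.mulVecLin := by
    constructor
    · intro x; exact LinearMap.mem_range_self _ x
    · rintro x ⟨y, rfl⟩
      have : (Q * Q).mulVecLin y = Q.mulVecLin y := by rw [hQidem]
      simpa [Matrix.mulVecLin_mul] using this
  have := hproj.trace
  rw [Matrix.rank]
  rw [← this]
  rw [LinearMap.trace_eq_matrix_trace ℝ (Pi.basisFun ℝ (Fin k))]
  congr 1
  rw [LinearMap.toMatrix_eq_toMatrix', ← Matrix.toLin'_apply']
  simp

/-- Paper's Lemma 5 (`LS_bandlimited_noise_MSE`), abstract form: if `U` has orthonormal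
columns (`Uᵀ U = 1`) and `Q` is a symmetric idempotent `k×k` matrix, then
`‖U − UQ‖_F² + σ²·‖UQ‖_F² = k + (σ² − 1)·rank Q`, where `‖A‖_F² = trace(Aᵀ A)`. -/
theorem stmt_5 (N k : ℕ) (U : Matrix (Fin N) (Fin k) ℝ) (hU : Uᵀ * U = 1)
    (Q : Matrix (Fin k) (Fin k) ℝ) (hQsymm : Qᵀ = Q) (hQidem : Q * Q = Q) (σ : ℝ) :
    Matrix.trace ((U - U * Q)ᵀ * (U - U * Q)) +
      σ ^ 2 * Matrix.trace ((U * Q)ᵀ * (U * Q)) =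
      (k : ℝ) + (σ ^ 2 - 1) * (Q.rank : ℝ) := by
  have h1 : (U * Q)ᵀ * (U * Q) = Q := by
    rw [Matrix.transpose_mul, Matrix.mul_assoc, ← Matrix.mul_assoc Uᵀ, hU, Matrix.one_mul,
      hQsymm, hQidem]
  have h2 : (U - U * Q)ᵀ * (U - U * Q) = 1 - Q := by
    rw [Matrix.transpose_sub, Matrix.sub_mul, Matrix.mul_sub, Matrix.mul_sub, hU, h1]
    have h3 : Uᵀ * (U * Q) = Q := by rw [← Matrix.mul_assoc, hU, Matrix.one_mul]
    have h4 : (U * Q)ᵀ * U = Q := by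
      rw [Matrix.transpose_mul, Matrix.mul_assoc, hU, Matrix.mul_one, hQsymm]
    rw [h3, h4]
    abel
  rw [h1, h2, Matrix.trace_sub, Matrix.trace_one, trace_eq_rank_of_proj Q hQidem]
  simp; ring
end

section
/- Let S be a finite subset of Fin N, v ∈ S, and SNR > 0. Then MSE_bl(S\{v}) ≤ MSE_bl(S) if and only if SNR ≤ 1 or rank([Π]_{S\{v}}) = rank([Π]_S). In particular, if SNR ≤ 1 then removing any vertex from any sample set never increases the average MSE under k-bandlimited noise. -/
open Matrix
open scoped Classical

lemma rank_submatrix_le' {m n : Type*} [Fintype m] [Fintype n] [DecidableEq m]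
    (A : Matrix m m ℝ) (f g : n → m) : (A.submatrix f g).rank ≤ A.rank := by
  have h : A.submatrix f g =
      ((1 : Matrix m m ℝ).submatrix f id) * (A * ((1 : Matrix m m ℝ).submatrix id g)) := by
    ext i j
    simp [Matrix.mul_apply, Matrix.one_apply, Finset.sum_ite_eq, Finset.sum_ite_eq']
  rw [h]
  exact le_trans (Matrix.rank_mul_le_right _ _) (Matrix.rank_mul_le_left _ _)

lemma rank_principalSub_erase_le {N : ℕ} (A : Matrix (Fin N) (Fin N) ℝ)
    (S : Finset (Fin N)) (v : Fin N) :
    (principalSub A (S.erase v)).rank ≤ (principalSub A S).rank := by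
  have h : principalSub A (S.erase v) =
      (principalSub A S).submatrix
        (fun i : ↥(S.erase v) => (⟨(i : Fin N), Finset.mem_of_mem_erase i.2⟩ : ↥S))
        (fun i : ↥(S.erase v) => (⟨(i : Fin N), Finset.mem_of_mem_erase i.2⟩ : ↥S)) := rfl
  rw [h]
  exact rank_submatrix_le' _ _ _

/-- Paper's Corollary 5 (`LS_bandlimited_noise_big_variance`) for LS reconstruction under
`k`-bandlimited noise, where `MSE_bl(T) = (k − rank([Π]_T)) + (1/SNR)·rank([Π]_T)`:
`MSE_bl(S\{v}) ≤ MSE_bl(S)` iff `SNR ≤ 1` or the removal of `v` leaves the rank unchanged.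
In particular, if `SNR ≤ 1` then removing a vertex never increases the average MSE. -/
theorem stmt_7 (N k : ℕ) (hk : 0 < k) (hkN : k ≤ N)
    (U : Matrix (Fin N) (Fin k) ℝ) (hU : Uᵀ * U = 1)
    (Pbl : Matrix (Fin N) (Fin N) ℝ) (hP : Pbl = U * Uᵀ)
    (S : Finset (Fin N)) (v : Fin N) (hv : v ∈ S)
    (SNR : ℝ) (hSNR : 0 < SNR) :
    let MSEbl : Finset (Fin N) → ℝ := fun T =>
      ((k : ℝ) - ((principalSub Pbl T).rank : ℝ)) +
        (1 / SNR) * ((principalSub Pbl T).rank : ℝ)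
    (MSEbl (S.erase v) ≤ MSEbl S ↔
      (SNR ≤ 1 ∨ (principalSub Pbl (S.erase v)).rank = (principalSub Pbl S).rank)) ∧
    (SNR ≤ 1 → MSEbl (S.erase v) ≤ MSEbl S) := by
  intro MSEbl
  have hr : (principalSub Pbl (S.erase v)).rank ≤ (principalSub Pbl S).rank :=
    rank_principalSub_erase_le Pbl S v
  set a : ℝ := ((principalSub Pbl (S.erase v)).rank : ℝ) with ha
  set b : ℝ := ((principalSub Pbl S).rank : ℝ) with hb
  have hab : a ≤ b := Nat.cast_le.mpr hr
  have hmain : MSEbl (S.erase v) ≤ MSEbl S ↔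
      (SNR ≤ 1 ∨ (principalSub Pbl (S.erase v)).rank = (principalSub Pbl S).rank) := by
    constructor
    · intro h
      by_cases hsnr : SNR ≤ 1
      · exact Or.inl hsnr
      · right
        push_neg at hsnr
        have hc : 1 / SNR < 1 := by
          rw [div_lt_one hSNR]; linarith
        have : a = b := by
          by_contra hne
          have halt : a < b := lt_of_le_of_ne hab hne
          have h' : ((k : ℝ) - a) + (1 / SNR) * a ≤ ((k : ℝ) - b) + (1 / SNR) * b := h
          nlinarith
        exact Nat.cast_injective this
    · intro h
      rcases h with hsnr | heq
      · have hc : 1 ≤ 1 / SNR := by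
          rw [le_div_iff₀ hSNR]; linarith
        have h' : ((k : ℝ) - a) + (1 / SNR) * a ≤ ((k : ℝ) - b) + (1 / SNR) * b := by
          nlinarith
        exact h'
      · have : a = b := congrArg Nat.cast heq
        simp [MSEbl, ← ha, ← hb, this]
  exact ⟨hmain, fun hsnr => hmain.mpr (Or.inl hsnr)⟩
end

section
/- Let S be a nonempty finite subset of Fin N, let i ∈ {1, …, N}, and let M := P_S + μL (which is positive definite, hence invertible). Then uᵢᵀ · M⁻¹ · M⁻¹ · uᵢ ≥ (1/(1 + μλᵢ))². Moreover, equality holds if P_S · uᵢ = uᵢ (i.e., uᵢ vanishes at every vertex outside S), and the inequality is strict if ‖P_S · uᵢ‖² < 1 (i.e., uᵢ has a nonzero entry outside S). -/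
open Matrix

lemma dot_mulVec_symm' {n : Type*} [Fintype n] (A : Matrix n n ℝ) (hA : Aᵀ = A)
    (x y : n → ℝ) : x ⬝ᵥ A.mulVec y = A.mulVec x ⬝ᵥ y := by
  rw [Matrix.dotProduct_mulVec, ← Matrix.mulVec_transpose, hA]

lemma stmt9_posdef (N : ℕ) (G : SimpleGraph (Fin N)) [DecidableRel G.Adj] (hG : G.Connected)
    (μ : ℝ) (hμ : 0 < μ) (S : Finset (Fin N)) (hS : S.Nonempty) :
    (((Matrix.diagonal fun j => if j ∈ S then (1:ℝ) else 0) + μ • G.lapMatrix ℝ)).PosDef := by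
  have hLpsd : (G.lapMatrix ℝ).PosSemidef := SimpleGraph.posSemidef_lapMatrix ℝ G
  rw [Matrix.posDef_iff_dotProduct_mulVec]
  constructor
  · show _ = _
    rw [conjTranspose_eq_transpose_of_trivial, transpose_add, transpose_smul,
      (G.isSymm_lapMatrix ℝ), diagonal_transpose]
  · intro x hx
    rw [star_trivial, add_mulVec, dotProduct_add, smul_mulVec, dotProduct_smul]
    have hP : x ⬝ᵥ (Matrix.diagonal fun j => if j ∈ S then (1:ℝ) else 0).mulVec x
        = ∑ j, if j ∈ S then x j * x j else 0 := by
      simp [dotProduct, Matrix.mulVec_diagonal, mul_ite, ite_mul, mul_comm]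
    have hPnn : 0 ≤ x ⬝ᵥ (Matrix.diagonal fun j => if j ∈ S then (1:ℝ) else 0).mulVec x := by
      rw [hP]
      exact Finset.sum_nonneg fun j _ => by split <;> [exact mul_self_nonneg _; exact le_refl 0]
    have hLnn : 0 ≤ x ⬝ᵥ (G.lapMatrix ℝ).mulVec x := by
      have := hLpsd.dotProduct_mulVec_nonneg x; rwa [star_trivial] at this
    rcases lt_or_eq_of_le hLnn with hL | hL
    · have : 0 < μ • (x ⬝ᵥ (G.lapMatrix ℝ).mulVec x) := by
        simp only [smul_eq_mul]; positivity
      linarith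
    · -- x ⬝ L x = 0, so x constant; nonzero constant fails P part
      have hxc : ∀ j k : Fin N, x j = x k := by
        have h0 : Matrix.toLinearMap₂' ℝ (G.lapMatrix ℝ) x x = 0 := by
          rw [Matrix.toLinearMap₂'_apply']; exact hL.symm
        rw [SimpleGraph.lapMatrix_toLinearMap₂'_apply'_eq_zero_iff_forall_reachable] at h0
        exact fun j k => h0 j k (hG.preconnected j k)
      obtain ⟨s, hs⟩ := hS
      rcases eq_or_ne (x s) 0 with hxs | hxs
      · exact absurd (funext fun j => (hxc j s).trans hxs) hx
      · have hpos : 0 < x ⬝ᵥ (Matrix.diagonal fun j => if j ∈ S then (1:ℝ) else 0).mulVec x := by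
          rw [hP]
          refine Finset.sum_pos' (fun j _ => ?_) ⟨s, Finset.mem_univ s, ?_⟩
          · split <;> [exact mul_self_nonneg _; exact le_refl 0]
          · simpa [hs] using mul_self_pos.mpr hxs
        rw [← hL]
        simpa using hpos

/-- Key inequality from the paper's Appendix proof of Corollary 4 (`main_GLR_iff`):
with `M = P_S + μL` (positive definite, hence invertible),
`uᵢᵀ M⁻¹ M⁻¹ uᵢ ≥ ((1+μλᵢ)⁻¹)²`, with equality when `P_S uᵢ = uᵢ` and strict inequality
when `‖P_S uᵢ‖² < 1`. -/
theorem stmt_9 (N : ℕ) (hN : 2 ≤ N)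
    (G : SimpleGraph (Fin N)) [DecidableRel G.Adj] (hG : G.Connected)
    (lam : Fin N → ℝ) (hmono : StrictMono lam) (hlam0 : lam ⟨0, by omega⟩ = 0)
    (u : Fin N → Fin N → ℝ)
    (hortho : ∀ i j, u i ⬝ᵥ u j = if i = j then (1 : ℝ) else 0)
    (heig : ∀ i, (G.lapMatrix ℝ).mulVec (u i) = lam i • u i)
    (μ : ℝ) (hμ : 0 < μ)
    (S : Finset (Fin N)) (hS : S.Nonempty) (i : Fin N) :
    let L := G.lapMatrix ℝ
    let P : Matrix (Fin N) (Fin N) ℝ := Matrix.diagonal fun j => if j ∈ S then 1 else 0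
    let M := P + μ • L
    ((1 + μ * lam i)⁻¹) ^ 2 ≤ u i ⬝ᵥ (M⁻¹ * M⁻¹).mulVec (u i) ∧
    (P.mulVec (u i) = u i →
      u i ⬝ᵥ (M⁻¹ * M⁻¹).mulVec (u i) = ((1 + μ * lam i)⁻¹) ^ 2) ∧
    (P.mulVec (u i) ⬝ᵥ P.mulVec (u i) < 1 →
      ((1 + μ * lam i)⁻¹) ^ 2 < u i ⬝ᵥ (M⁻¹ * M⁻¹).mulVec (u i)) := by
  intro L P M
  set w : Fin N → ℝ := u i with hw_def
  have hww : w ⬝ᵥ w = 1 := by simpa using hortho i i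
  have hlnn : 0 ≤ lam i := by
    have h0 : (⟨0, by omega⟩ : Fin N) ≤ i := by simp [Fin.le_def]
    have := hmono.monotone h0
    rwa [hlam0] at this
  set c : ℝ := μ * lam i with hc_def
  have hcnn : 0 ≤ c := by positivity
  have hd : (0:ℝ) < 1 + c := by linarith
  -- positive definiteness and invertibility
  have hMpd : M.PosDef := stmt9_posdef N G hG μ hμ S hS
  have hdet : IsUnit M.det := hMpd.det_pos.ne'.isUnit
  have hMM : M * M⁻¹ = 1 := Matrix.mul_nonsing_inv _ hdet
  have hMM' : M⁻¹ * M = 1 := Matrix.nonsing_inv_mul _ hdet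
  -- symmetry
  have hMsymm : Mᵀ = M := by
    have := hMpd.isHermitian
    rwa [Matrix.IsHermitian, conjTranspose_eq_transpose_of_trivial] at this
  have hMinvsymm : (M⁻¹)ᵀ = M⁻¹ := by rw [Matrix.transpose_nonsing_inv, hMsymm]
  set v : Fin N → ℝ := M⁻¹.mulVec w with hv_def
  -- the target quantity equals v ⬝ᵥ v
  have hquant : w ⬝ᵥ (M⁻¹ * M⁻¹).mulVec w = v ⬝ᵥ v := by
    rw [← Matrix.mulVec_mulVec, dot_mulVec_symm' _ hMinvsymm]
  -- M w = P w + c • w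
  have hMw : M.mulVec w = P.mulVec w + c • w := by
    show (P + μ • L).mulVec w = _
    rw [Matrix.add_mulVec, Matrix.smul_mulVec, heig i, smul_smul]
  -- P w ⬝ᵥ w = P w ⬝ᵥ P w
  set t : ℝ := P.mulVec w ⬝ᵥ P.mulVec w with ht_def
  have hPww : P.mulVec w ⬝ᵥ w = t := by
    rw [ht_def]
    simp only [dotProduct, P, Matrix.mulVec_diagonal]
    refine Finset.sum_congr rfl fun j _ => ?_
    split <;> ring
  have ht1 : t ≤ 1 := by
    rw [← hPww] at *
    rw [← hww]
    simp only [dotProduct, P, Matrix.mulVec_diagonal]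
    refine Finset.sum_le_sum fun j _ => ?_
    split
    · simp
    · simpa using mul_self_nonneg (w j)
  -- ‖Mw‖²
  have hwPw : w ⬝ᵥ P.mulVec w = t := by
    rw [dot_mulVec_symm' P (Matrix.diagonal_transpose _), hPww]
  have hMwMw : M.mulVec w ⬝ᵥ M.mulVec w = t + 2 * c * t + c ^ 2 := by
    rw [hMw]
    simp only [dotProduct_add, add_dotProduct, dotProduct_smul, smul_dotProduct,
      smul_eq_mul, hPww, hwPw, hww]
    ring
  -- M w ⬝ᵥ v = 1
  have hMwv : M.mulVec w ⬝ᵥ v = 1 := by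
    rw [← dot_mulVec_symm' _ hMsymm, hv_def, Matrix.mulVec_mulVec, hMM, Matrix.one_mulVec, hww]
  -- Cauchy-Schwarz
  have hCS : 1 ≤ (M.mulVec w ⬝ᵥ M.mulVec w) * (v ⬝ᵥ v) := by
    have := Finset.sum_mul_sq_le_sq_mul_sq Finset.univ (M.mulVec w) v
    have e1 : ∑ j, M.mulVec w j * v j = 1 := hMwv
    have e2 : ∑ j, M.mulVec w j ^ 2 = M.mulVec w ⬝ᵥ M.mulVec w := by
      simp [dotProduct, sq]
    have e3 : ∑ j, v j ^ 2 = v ⬝ᵥ v := by simp [dotProduct, sq]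
    rw [e1, e2, e3] at this
    simpa using this
  have hMwle : M.mulVec w ⬝ᵥ M.mulVec w ≤ (1 + c) ^ 2 := by
    rw [hMwMw]; nlinarith
  have hvvpos : (0:ℝ) < ((1 + c) ^ 2)⁻¹ := by positivity
  have hmain : ((1 + c) ^ 2)⁻¹ ≤ v ⬝ᵥ v := by
    have hvnn : 0 ≤ v ⬝ᵥ v := by
      have := Finset.sum_nonneg (fun j (_ : j ∈ Finset.univ) => mul_self_nonneg (v j))
      simpa [dotProduct] using this
    have h1 : 1 ≤ (1 + c) ^ 2 * (v ⬝ᵥ v) := le_trans hCS (by nlinarith)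
    rw [inv_le_iff_one_le_mul₀ (by positivity)]
    linarith [h1]
  refine ⟨?_, ?_, ?_⟩
  · rw [hquant, inv_pow]
    exact hmain
  · intro hPw
    have hMw' : M.mulVec ((1 + c)⁻¹ • w) = w := by
      rw [Matrix.mulVec_smul, hMw, hPw]
      rw [smul_add, smul_smul]
      rw [← add_smul]
      field_simp
      rw [one_smul]
    have hv' : v = (1 + c)⁻¹ • w := by
      have := congrArg (M⁻¹.mulVec ·) hMw'
      simpa [Matrix.mulVec_mulVec, hMM', hv_def] using this.symm
    rw [hquant, hv', dotProduct_smul, smul_dotProduct, hww]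
    simp [smul_eq_mul, sq]
  · intro hts
    have hMwlt : M.mulVec w ⬝ᵥ M.mulVec w < (1 + c) ^ 2 := by
      rw [hMwMw]; nlinarith
    have hvvpos' : 0 < v ⬝ᵥ v := lt_of_lt_of_le hvvpos hmain
    have h1 : 1 < (1 + c) ^ 2 * (v ⬝ᵥ v) := by nlinarith
    rw [hquant, inv_pow, inv_lt_iff_one_lt_mul₀ (by positivity)]
    linarith [h1]
end

section
/- Assume k ≥ 2 and let S be a nonempty finite subset of Fin N. (i) If uᵢ(j) = 0 for every i with 2 ≤ i ≤ k and every vertex j ∉ S (every k-bandlimited signal is constant on the complement of S), then ξ₁(S) = ξ₁(Fin N). (ii) If instead there exist i with 2 ≤ i ≤ k and j ∉ S such that uᵢ(j) ≠ 0, then ξ₁(S) > ξ₁(Fin N). -/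
open Matrix

/-- Squared Frobenius norm `‖A‖_F² = trace(Aᵀ A)`. -/
noncomputable def frobSq {m n : Type*} [Fintype m] [Fintype n] (A : Matrix m n ℝ) : ℝ :=
  Matrix.trace (Aᵀ * A)

section GLRAux

lemma glr_dot_symm {n : Type*} [Fintype n] (M : Matrix n n ℝ) (h : M.IsHermitian)
    (x y : n → ℝ) : x ⬝ᵥ (M *ᵥ y) = (M *ᵥ x) ⬝ᵥ y := by
  rw [Matrix.dotProduct_mulVec, ← Matrix.mulVec_transpose,
    ← Matrix.conjTranspose_eq_transpose_of_trivial, h.eq]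

lemma glr_dot_self_pos {n : Type*} [Fintype n] {x : n → ℝ} (hx : x ≠ 0) :
    0 < x ⬝ᵥ x := by
  simpa using (dotProduct_star_self_pos_iff (v := x)).mpr hx

lemma glr_dot_self_nonneg {n : Type*} [Fintype n] (x : n → ℝ) : 0 ≤ x ⬝ᵥ x :=
  Finset.sum_nonneg fun i _ => mul_self_nonneg _

lemma glr_frobSq_eq_sum {m k : Type*} [Fintype m] [Fintype k] (A : Matrix m k ℝ) :
    frobSq A = ∑ j, (fun i => A i j) ⬝ᵥ (fun i => A i j) := by
  simp [frobSq, Matrix.trace, Matrix.diag, Matrix.mul_apply, dotProduct]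

lemma glr_key_identity {n : Type*} [Fintype n] [DecidableEq n]
    (A A' Q R : Matrix n n ℝ) (hAA : A * A' = 1) (hQQ : Q * Q = Q)
    (hBR : (1 - Q * A' * Q) * R = 1) (hRB : R * (1 - Q * A' * Q) = 1) :
    (A - Q) * (1 + A' * (Q * (R * Q))) = A := by
  have hQB : Q * (1 - Q * A' * Q) = (1 - Q * A' * Q) * Q := by
    rw [mul_sub, sub_mul, mul_one, one_mul, ← Matrix.mul_assoc, ← Matrix.mul_assoc, hQQ,
      Matrix.mul_assoc (Q * A'), hQQ]
  have hQR : Q * R = R * Q := by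
    have t1 : R * (Q * (1 - Q * A' * Q)) * R = R * ((1 - Q * A' * Q) * Q) * R := by rw [hQB]
    have t2 : R * (Q * (1 - Q * A' * Q)) * R = R * Q := by
      rw [← Matrix.mul_assoc R Q (1 - Q * A' * Q), Matrix.mul_assoc (R * Q) _ R, hBR, mul_one]
    have t3 : R * ((1 - Q * A' * Q) * Q) * R = Q * R := by
      rw [← Matrix.mul_assoc R _ Q, hRB, one_mul]
    rw [← t3, ← t1, t2]
  have e0 : Q * (R * Q) = R * Q := by
    rw [← Matrix.mul_assoc, hQR, Matrix.mul_assoc, hQQ]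
  have e1 : Q * (A' * (Q * (R * Q))) = R * Q - Q := by
    have h2 : (1 - Q * A' * Q) * (R * Q) = Q := by
      rw [← Matrix.mul_assoc, hBR, one_mul]
    rw [sub_mul, one_mul] at h2
    have h4 : R * Q = Q + Q * A' * Q * (R * Q) := sub_eq_iff_eq_add.mp h2
    have h3 : Q * A' * Q * (R * Q) = R * Q - Q := by
      conv_rhs => rw [h4]
      abel
    rw [← h3]
    simp only [Matrix.mul_assoc]
  have hAA2 : A * (A' * (Q * (R * Q))) = Q * (R * Q) := by
    rw [← Matrix.mul_assoc, hAA, one_mul]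
  rw [sub_mul, mul_add, mul_add, mul_one, mul_one, hAA2, e1, e0]
  abel

end GLRAux

/-- Dichotomy from the paper's Appendix I proof of Corollary 4 (`main_GLR_iff`), for the GLR
squared bias `ξ₁(S) = ‖U_K − (P_S + μL)⁻¹ P_S U_K‖_F²`:
(i) if every `uᵢ` (2 ≤ i ≤ k, 1-indexed) vanishes outside `S`, then `ξ₁(S) = ξ₁(Fin N)`;
(ii) otherwise `ξ₁(S) > ξ₁(Fin N)`. -/
theorem stmt_10 (N k : ℕ) (hN : 2 ≤ N) (hk2 : 2 ≤ k) (hkN : k ≤ N)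
    (G : SimpleGraph (Fin N)) [DecidableRel G.Adj] (hG : G.Connected)
    (lam : Fin N → ℝ) (hmono : StrictMono lam) (hlam0 : lam ⟨0, by omega⟩ = 0)
    (u : Fin N → Fin N → ℝ)
    (hortho : ∀ i j, u i ⬝ᵥ u j = if i = j then (1 : ℝ) else 0)
    (heig : ∀ i, (G.lapMatrix ℝ).mulVec (u i) = lam i • u i)
    (μ : ℝ) (hμ : 0 < μ)
    (S : Finset (Fin N)) (hS : S.Nonempty) :
    let L := G.lapMatrix ℝ
    let UK : Matrix (Fin N) (Fin k) ℝ := Matrix.of fun i j => u (Fin.castLE hkN j) i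
    let P : Finset (Fin N) → Matrix (Fin N) (Fin N) ℝ :=
      fun T => Matrix.diagonal fun j => if j ∈ T then 1 else 0
    let xi1 : Finset (Fin N) → ℝ := fun T => frobSq (UK - (P T + μ • L)⁻¹ * P T * UK)
    ((∀ i : Fin N, 1 ≤ (i : ℕ) → (i : ℕ) < k → ∀ j, j ∉ S → u i j = 0) →
      xi1 S = xi1 Finset.univ) ∧
    ((∃ i : Fin N, 1 ≤ (i : ℕ) ∧ (i : ℕ) < k ∧ ∃ j, j ∉ S ∧ u i j ≠ 0) →
      xi1 Finset.univ < xi1 S) := by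
  intro L UK P xi1
  have hPdef : P = fun T => Matrix.diagonal fun j => if j ∈ T then 1 else 0 := rfl
  have hUKdef : ∀ (r : Fin N) (j : Fin k), UK r j = u (Fin.castLE hkN j) r := fun _ _ => rfl
  have hxidef : ∀ T, xi1 T = frobSq (UK - (P T + μ • L)⁻¹ * P T * UK) := fun _ => rfl
  have heig' : ∀ i, L *ᵥ u i = lam i • u i := heig
  -- basic Laplacian facts
  have hLpsd : L.PosSemidef := SimpleGraph.posSemidef_lapMatrix ℝ G
  have hLnn : ∀ x : Fin N → ℝ, 0 ≤ x ⬝ᵥ (L *ᵥ x) := fun x => by simpa using hLpsd.dotProduct_mulVec_nonneg x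
  have hLzero : ∀ x : Fin N → ℝ, x ⬝ᵥ (L *ᵥ x) = 0 → L *ᵥ x = 0 := fun x h =>
    (hLpsd.dotProduct_mulVec_zero_iff x).mp (by simpa using h)
  have hconst : ∀ x : Fin N → ℝ, L *ᵥ x = 0 → ∀ i j, x i = x j := by
    intro x hx i j
    exact (G.lapMatrix_mulVec_eq_zero_iff_forall_reachable (x := x)).mp
      (by simpa using hx) i j (hG.preconnected i j)
  have hquad : ∀ (T : Finset (Fin N)) (x : Fin N → ℝ),
      x ⬝ᵥ ((P T + μ • L) *ᵥ x)
        = (∑ j, (if j ∈ T then (1:ℝ) else 0) * (x j * x j)) + μ * (x ⬝ᵥ (L *ᵥ x)) := by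
    intro T x
    rw [add_mulVec, dotProduct_add, smul_mulVec, dotProduct_smul, smul_eq_mul]
    congr 1
    simp only [hPdef, mulVec_diagonal, dotProduct]
    exact Finset.sum_congr rfl fun j _ => by ring
  have hApd : ∀ T : Finset (Fin N), T.Nonempty → (P T + μ • L).PosDef := by
    rintro T ⟨s, hs⟩
    have hsym : (P T + μ • L).IsHermitian := by
      refine Matrix.IsHermitian.add (by rw [hPdef]; exact isHermitian_diagonal _) ?_
      have : (μ • L)ᴴ = μ • L := by
        rw [conjTranspose_smul, star_trivial, hLpsd.1.eq]
      exact this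
    refine Matrix.PosDef.of_dotProduct_mulVec_pos hsym fun x hx => ?_
    rw [star_trivial, hquad T x]
    have hsum : ∀ j, (0:ℝ) ≤ (if j ∈ T then (1:ℝ) else 0) * (x j * x j) := fun j => by
      split <;> simp [mul_self_nonneg]
    rcases (hLnn x).lt_or_eq with hpos | heqz
    · have h1 : (0:ℝ) ≤ ∑ j, (if j ∈ T then (1:ℝ) else 0) * (x j * x j) :=
        Finset.sum_nonneg fun j _ => hsum j
      nlinarith
    · have hx0 : L *ᵥ x = 0 := hLzero x heqz.symm
      have hxs : x s ≠ 0 := fun h0 => hx (funext fun j => (hconst x hx0 j s).trans h0)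
      have h2 : (0:ℝ) < ∑ j, (if j ∈ T then (1:ℝ) else 0) * (x j * x j) := by
        refine Finset.sum_pos' (fun j _ => hsum j) ⟨s, Finset.mem_univ s, ?_⟩
        rw [if_pos hs, one_mul]
        exact mul_self_pos.mpr hxs
      nlinarith
  -- A and its inverse
  have hNe : Nonempty (Fin N) := ⟨⟨0, by omega⟩⟩
  set A : Matrix (Fin N) (Fin N) ℝ := 1 + μ • L with hAdef
  have hPuniv : P Finset.univ = (1 : Matrix (Fin N) (Fin N) ℝ) := by
    rw [hPdef]; simp [Matrix.diagonal_one]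
  have hApdA : A.PosDef := by
    rw [hAdef, ← hPuniv]; exact hApd Finset.univ Finset.univ_nonempty
  have hASpd : (P S + μ • L).PosDef := hApd S hS
  have hAdet : IsUnit A.det := hApdA.det_pos.ne'.isUnit
  have hASdet : IsUnit (P S + μ • L).det := hASpd.det_pos.ne'.isUnit
  have hAUdet : IsUnit (P Finset.univ + μ • L).det := by
    rw [hPuniv, ← hAdef]; exact hAdet
  have hAinvH : A⁻¹.IsHermitian := hApdA.isHermitian.inv
  -- Q
  set Q : Matrix (Fin N) (Fin N) ℝ :=
    Matrix.diagonal (fun j => if j ∈ S then (0:ℝ) else 1) with hQdef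
  have hQH : Q.IsHermitian := isHermitian_diagonal _
  have hQQ : Q * Q = Q := by
    rw [hQdef, diagonal_mul_diagonal]
    exact congrArg Matrix.diagonal (funext fun j => by split <;> simp)
  have hPSQ : P S = 1 - Q := by
    rw [hPdef, hQdef, ← Matrix.diagonal_one, Matrix.diagonal_sub]
    exact congrArg Matrix.diagonal (funext fun j => by split <;> simp)
  -- B and its posdef
  set B : Matrix (Fin N) (Fin N) ℝ := 1 - Q * A⁻¹ * Q with hBdef
  have hBH : B.IsHermitian := by
    refine Matrix.isHermitian_one.sub ?_
    have : (Q * A⁻¹ * Q)ᴴ = Q * A⁻¹ * Q := by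
      rw [conjTranspose_mul, conjTranspose_mul, hQH.eq, hAinvH.eq, Matrix.mul_assoc]
    exact this
  have hBpd : B.PosDef := by
    refine Matrix.PosDef.of_dotProduct_mulVec_pos hBH fun x hx => ?_
    rw [star_trivial]
    have hexp : x ⬝ᵥ (B *ᵥ x) = x ⬝ᵥ x - (Q *ᵥ x) ⬝ᵥ (A⁻¹ *ᵥ (Q *ᵥ x)) := by
      rw [hBdef, sub_mulVec, one_mulVec, dotProduct_sub]
      congr 1
      rw [← Matrix.mulVec_mulVec, ← Matrix.mulVec_mulVec, glr_dot_symm Q hQH]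
    set z := Q *ᵥ x with hzdef
    set y := A⁻¹ *ᵥ z with hydef
    have hAy : A *ᵥ y = z := by
      rw [hydef, Matrix.mulVec_mulVec, Matrix.mul_nonsing_inv A hAdet, Matrix.one_mulVec]
    have hAyy : A *ᵥ y = y + μ • (L *ᵥ y) := by
      rw [hAdef, add_mulVec, one_mulVec, smul_mulVec]
    have hzy : z ⬝ᵥ y = y ⬝ᵥ y + μ * (y ⬝ᵥ (L *ᵥ y)) := by
      rw [← hAy, hAyy, add_dotProduct, smul_dotProduct, smul_eq_mul,
        dotProduct_comm (L *ᵥ y) y]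
    have hzz : z ⬝ᵥ z = y ⬝ᵥ y + 2 * μ * (y ⬝ᵥ (L *ᵥ y)) + μ^2 * ((L *ᵥ y) ⬝ᵥ (L *ᵥ y)) := by
      conv_lhs => rw [← hAy, hAyy]
      rw [dotProduct_add, add_dotProduct, add_dotProduct, dotProduct_smul, smul_dotProduct,
        dotProduct_smul, smul_dotProduct, dotProduct_comm (L *ᵥ y) y]
      simp only [smul_eq_mul]
      ring
    have hzzxx : z ⬝ᵥ z ≤ x ⬝ᵥ x := by
      refine Finset.sum_le_sum fun j _ => ?_
      have hzj : z j = (if j ∈ S then (0:ℝ) else 1) * x j := by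
        rw [hzdef, hQdef, mulVec_diagonal]
      rw [hzj]
      split <;> nlinarith [mul_self_nonneg (x j)]
    rcases eq_or_ne (L *ᵥ y) 0 with h0 | h0
    · have hzy' : z = y := by rw [← hAy, hAyy, h0, smul_zero, add_zero]
      obtain ⟨s, hs⟩ := hS
      have hzs : z s = 0 := by
        rw [hzdef, hQdef, mulVec_diagonal, if_pos hs, zero_mul]
      have hys : y s = 0 := by rw [← hzy']; exact hzs
      have hz0 : z = 0 := by
        rw [hzy']; funext j; exact (hconst y h0 j s).trans hys
      rw [hexp, hz0]
      simpa using glr_dot_self_pos hx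
    · have h1 : 0 < (L *ᵥ y) ⬝ᵥ (L *ᵥ y) := glr_dot_self_pos h0
      have h2 : 0 ≤ y ⬝ᵥ (L *ᵥ y) := hLnn y
      rw [hexp]
      nlinarith [mul_pos (mul_pos hμ hμ) h1]
  -- R and the key identity
  set R : Matrix (Fin N) (Fin N) ℝ := B⁻¹ with hRdef
  have hBdet : IsUnit B.det := hBpd.det_pos.ne'.isUnit
  have hRpd : R.PosDef := hBpd.inv
  have hBR : B * R = 1 := Matrix.mul_nonsing_inv B hBdet
  have hRB : R * B = 1 := Matrix.nonsing_inv_mul B hBdet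
  set C : Matrix (Fin N) (Fin N) ℝ := A⁻¹ * (Q * (R * Q)) with hCdef
  have hAS : P S + μ • L = A - Q := by
    rw [hPSQ, hAdef]; abel
  have hkey : (P S + μ • L) * (1 + C) = A := by
    rw [hAS, hCdef]
    exact glr_key_identity A A⁻¹ Q R (Matrix.mul_nonsing_inv A hAdet) hQQ
      (hBdef ▸ hBR) (hBdef ▸ hRB)
  -- eigen computations
  have hlamnn : ∀ i, 0 ≤ lam i := by
    intro i
    have h := hLnn (u i)
    rw [heig' i, dotProduct_smul, smul_eq_mul, hortho i i, if_pos rfl, mul_one] at h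
    exact h
  have h1p : ∀ i, (0:ℝ) < 1 + μ * lam i := fun i => by nlinarith [hlamnn i]
  set cc : Fin N → ℝ := fun i => μ * lam i * (1 + μ * lam i)⁻¹ with hccdef
  have hAu : ∀ i, A *ᵥ u i = (1 + μ * lam i) • u i := by
    intro i
    rw [hAdef, add_mulVec, one_mulVec, smul_mulVec, heig' i, smul_smul, add_smul, one_smul]
  have hAinvu : ∀ i, A⁻¹ *ᵥ u i = (1 + μ * lam i)⁻¹ • u i := by
    intro i
    have : A⁻¹ *ᵥ (A *ᵥ u i) = u i := by
      rw [Matrix.mulVec_mulVec, Matrix.nonsing_inv_mul A hAdet, Matrix.one_mulVec]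
    rw [hAu i, mulVec_smul] at this
    calc A⁻¹ *ᵥ u i = (1 + μ * lam i)⁻¹ • ((1 + μ * lam i) • (A⁻¹ *ᵥ u i)) := by
          rw [smul_smul, inv_mul_cancel₀ (h1p i).ne', one_smul]
      _ = (1 + μ * lam i)⁻¹ • u i := by rw [this]
  -- column formula for general T
  have hcolT : ∀ (T : Finset (Fin N)), IsUnit (P T + μ • L).det → ∀ i,
      u i - ((P T + μ • L)⁻¹ * P T) *ᵥ u i = (P T + μ • L)⁻¹ *ᵥ ((μ * lam i) • u i) := by
    intro T hdet i
    have hmv : (μ * lam i) • u i = (P T + μ • L) *ᵥ u i - P T *ᵥ u i := by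
      rw [add_mulVec, smul_mulVec, heig' i, smul_smul]; abel
    rw [hmv, Matrix.mulVec_sub, Matrix.mulVec_mulVec, Matrix.mulVec_mulVec,
      Matrix.nonsing_inv_mul _ hdet, Matrix.one_mulVec]
  have hcolU : ∀ i, (P Finset.univ + μ • L)⁻¹ *ᵥ ((μ * lam i) • u i) = cc i • u i := by
    intro i
    rw [hPuniv, ← hAdef, mulVec_smul, hAinvu i, smul_smul]
  -- the S-side vectors
  set v : Fin N → Fin N → ℝ := fun i => cc i • u i with hvdef
  set p : Fin N → Fin N → ℝ := fun i => C *ᵥ v i with hpdef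
  set w : Fin N → Fin N → ℝ := fun i => v i + p i with hwdef
  have hASw : ∀ i, (P S + μ • L) *ᵥ w i = (μ * lam i) • u i := by
    intro i
    have h1 : w i = (1 + C) *ᵥ v i := by
      rw [hwdef, hpdef, add_mulVec, one_mulVec]
    have hcc : cc i * (1 + μ * lam i) = μ * lam i := by
      show μ * lam i * (1 + μ * lam i)⁻¹ * (1 + μ * lam i) = μ * lam i
      rw [mul_assoc, inv_mul_cancel₀ (h1p i).ne', mul_one]
    have h2 : A *ᵥ v i = (μ * lam i) • u i := by
      show A *ᵥ (cc i • u i) = (μ * lam i) • u i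
      rw [mulVec_smul, hAu i, smul_smul, hcc]
    rw [h1, Matrix.mulVec_mulVec, hkey, h2]
  have hcolS : ∀ i, (P S + μ • L)⁻¹ *ᵥ ((μ * lam i) • u i) = w i := by
    intro i
    rw [← hASw i, Matrix.mulVec_mulVec, Matrix.nonsing_inv_mul _ hASdet, Matrix.one_mulVec]
  have hvv : ∀ i, v i ⬝ᵥ v i = cc i ^ 2 := by
    intro i
    rw [hvdef, smul_dotProduct, dotProduct_smul, hortho i i, if_pos rfl, smul_eq_mul,
      smul_eq_mul]
    ring
  have hvp : ∀ i, v i ⬝ᵥ p i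
      = (1 + μ * lam i)⁻¹ * ((Q *ᵥ v i) ⬝ᵥ (R *ᵥ (Q *ᵥ v i))) := by
    intro i
    have hAv : A⁻¹ *ᵥ v i = (1 + μ * lam i)⁻¹ • v i := by
      show A⁻¹ *ᵥ (cc i • u i) = (1 + μ * lam i)⁻¹ • (cc i • u i)
      rw [mulVec_smul, hAinvu i, smul_comm]
    show v i ⬝ᵥ (C *ᵥ v i) = _
    rw [hCdef, ← Matrix.mulVec_mulVec, glr_dot_symm A⁻¹ hAinvH, hAv,
      smul_dotProduct, smul_eq_mul]
    congr 1
    rw [← Matrix.mulVec_mulVec, glr_dot_symm Q hQH, ← Matrix.mulVec_mulVec]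
  have hvpnn : ∀ i, 0 ≤ v i ⬝ᵥ p i := by
    intro i
    rw [hvp i]
    refine mul_nonneg (inv_nonneg.mpr (h1p i).le) ?_
    simpa using hRpd.posSemidef.dotProduct_mulVec_nonneg (Q *ᵥ v i)
  have hww : ∀ i, w i ⬝ᵥ w i = cc i ^ 2 + (2 * (v i ⬝ᵥ p i) + p i ⬝ᵥ p i) := by
    intro i
    rw [hwdef]
    simp only [dotProduct_add, add_dotProduct, dotProduct_comm (p i) (v i)]
    rw [hvv i]
    ring
  have hterm_ge : ∀ i, cc i ^ 2 ≤ w i ⬝ᵥ w i := by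
    intro i
    rw [hww i]
    nlinarith [hvpnn i, glr_dot_self_nonneg (p i)]
  have hweq : ∀ i, Q *ᵥ v i = 0 → w i = v i := by
    intro i h0
    have hp0 : p i = 0 := by
      show C *ᵥ v i = 0
      rw [hCdef, ← Matrix.mulVec_mulVec, ← Matrix.mulVec_mulVec,
        ← Matrix.mulVec_mulVec, h0, Matrix.mulVec_zero, Matrix.mulVec_zero,
        Matrix.mulVec_zero]
    show v i + p i = v i
    rw [hp0, add_zero]
  have hterm_gt : ∀ i, Q *ᵥ v i ≠ 0 → cc i ^ 2 < w i ⬝ᵥ w i := by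
    intro i h0
    have h1 : 0 < v i ⬝ᵥ p i := by
      rw [hvp i]
      refine mul_pos (inv_pos.mpr (h1p i)) ?_
      simpa using hRpd.dotProduct_mulVec_pos h0
    rw [hww i]
    nlinarith [glr_dot_self_nonneg (p i)]
  -- sum decomposition of xi1
  have hxisum : ∀ (T : Finset (Fin N)), IsUnit (P T + μ • L).det →
      xi1 T = ∑ j : Fin k,
        ((P T + μ • L)⁻¹ *ᵥ ((μ * lam (Fin.castLE hkN j)) • u (Fin.castLE hkN j))) ⬝ᵥ
        ((P T + μ • L)⁻¹ *ᵥ ((μ * lam (Fin.castLE hkN j)) • u (Fin.castLE hkN j))) := by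
    intro T hdet
    rw [hxidef T, glr_frobSq_eq_sum]
    refine Finset.sum_congr rfl fun j _ => ?_
    have hcolfun : (fun r => (UK - (P T + μ • L)⁻¹ * P T * UK) r j)
        = u (Fin.castLE hkN j) - ((P T + μ • L)⁻¹ * P T) *ᵥ u (Fin.castLE hkN j) := by
      funext r
      simp only [Matrix.sub_apply, Pi.sub_apply, Matrix.mul_apply, Matrix.mulVec, dotProduct,
        hUKdef]
    rw [hcolfun, hcolT T hdet]
  -- value at univ
  have hxiU : xi1 Finset.univ = ∑ j : Fin k, cc (Fin.castLE hkN j) ^ 2 := by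
    rw [hxisum Finset.univ hAUdet]
    refine Finset.sum_congr rfl fun j _ => ?_
    rw [hcolU]
    exact hvv _
  have hxiS : xi1 S = ∑ j : Fin k, w (Fin.castLE hkN j) ⬝ᵥ w (Fin.castLE hkN j) := by
    rw [hxisum S hASdet]
    refine Finset.sum_congr rfl fun j _ => ?_
    rw [hcolS]
  constructor
  · -- case (i)
    intro hvanish
    rw [hxiS, hxiU]
    refine Finset.sum_congr rfl fun j _ => ?_
    set i : Fin N := Fin.castLE hkN j with hidef
    have hQv : Q *ᵥ v i = 0 := by
      rcases Nat.eq_zero_or_pos (i : ℕ) with h0 | h0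
      · have hi0 : i = ⟨0, by omega⟩ := Fin.ext h0
        have hcc0 : cc i = 0 := by
          show μ * lam i * (1 + μ * lam i)⁻¹ = 0
          rw [hi0, hlam0]; ring
        show Q *ᵥ (cc i • u i) = 0
        rw [hcc0, zero_smul, Matrix.mulVec_zero]
      · have hQu : Q *ᵥ u i = 0 := by
          funext r
          rw [hQdef, mulVec_diagonal]
          by_cases hr : r ∈ S
          · rw [if_pos hr, zero_mul]; rfl
          · rw [if_neg hr, one_mul, hvanish i h0 (by simpa [hidef] using j.isLt) r hr]; rfl
        show Q *ᵥ (cc i • u i) = 0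
        rw [mulVec_smul, hQu, smul_zero]
    rw [hweq i hQv, hvv i]
  · -- case (ii)
    rintro ⟨i0, hi1, hi2, j0, hj0, hu0⟩
    rw [hxiS, hxiU]
    have hjK : (Fin.castLE hkN ⟨(i0 : ℕ), hi2⟩ : Fin N) = i0 := Fin.ext rfl
    refine Finset.sum_lt_sum (fun j _ => hterm_ge _) ⟨⟨(i0 : ℕ), hi2⟩, Finset.mem_univ _, ?_⟩
    rw [hjK]
    refine hterm_gt i0 ?_
    have hlampos : 0 < lam i0 := by
      have : (⟨0, by omega⟩ : Fin N) < i0 := by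
        rw [Fin.lt_def]; exact hi1
      have := hmono this
      rwa [hlam0] at this
    have hccpos : 0 < cc i0 := by
      rw [hccdef]
      have := h1p i0
      positivity
    intro hzero
    have h5 : (Q *ᵥ v i0) j0 = 0 := by rw [hzero]; rfl
    rw [hQdef, mulVec_diagonal, if_neg hj0, one_mul] at h5
    have h6 : cc i0 * u i0 j0 = 0 := h5
    rcases mul_eq_zero.mp h6 with h | h
    · exact hccpos.ne' h
    · exact hu0 h
end
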